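/- arXiv:1901.10756 — 9 statements merged into one kernel-verified Lean document; each statement's English description precedes it below -/
import Mathlib

section
/- If L is irreducible, then for every initial condition s(0), the solution of s' = -L s converges to α·1 for some real number α (consensus is reached unconditionally). -/
open Matrix Finset Filter

section Aux

open NormedSpace

attribute [local instance] Matrix.linftyOpNormedRing Matrix.linftyOpNormedAlgebra

set_option maxHeartbeats 1000000

variable {N : ℕ}

lemma aux_entry_hasSum (A : Matrix (Fin N) (Fin N) ℝ) (i j : Fin N) :
    HasSum (fun n : ℕ => (((n.factorial : ℝ))⁻¹ • A ^ n) i j) (exp A i j) := by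
  have hsum : HasSum (fun n : ℕ => ((n.factorial : ℝ)⁻¹ • A ^ n)) (exp A) := by
    rw [exp_eq_tsum ℝ]
    exact (expSeries_summable' (𝕂 := ℝ) A).hasSum
  exact (Matrix.entryLinearMap ℝ ℝ i j).toContinuousLinearMap.hasSum hsum

lemma aux_pow_entry_nonneg {A : Matrix (Fin N) (Fin N) ℝ} (hA : ∀ i j, 0 ≤ A i j) :
    ∀ (n : ℕ) (i j : Fin N), 0 ≤ (A ^ n) i j := by
  intro n
  induction n with
  | zero => intro i j; simp [Matrix.one_apply]; positivity
  | succ k ih =>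
    intro i j
    rw [pow_succ, Matrix.mul_apply]
    exact Finset.sum_nonneg fun l _ => mul_nonneg (ih i l) (hA l j)

lemma aux_exp_entry_nonneg {A : Matrix (Fin N) (Fin N) ℝ} (hA : ∀ i j, 0 ≤ A i j)
    (i j : Fin N) : 0 ≤ exp A i j := by
  have h := aux_entry_hasSum A i j
  have hnn : ∀ n : ℕ, 0 ≤ (((n.factorial : ℝ))⁻¹ • A ^ n) i j := by
    intro n
    rw [Matrix.smul_apply]
    exact smul_nonneg (by positivity) (aux_pow_entry_nonneg hA n i j)
  have := le_hasSum h 0 fun n _ => hnn n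
  exact le_trans (hnn 0) this

lemma aux_exp_entry_pos {A : Matrix (Fin N) (Fin N) ℝ} (hA : ∀ i j, 0 ≤ A i j)
    {i j : Fin N} (hpos : ∃ k : ℕ, 0 < (A ^ k) i j) : 0 < exp A i j := by
  obtain ⟨k, hk⟩ := hpos
  have h := aux_entry_hasSum A i j
  have hnn : ∀ n : ℕ, 0 ≤ (((n.factorial : ℝ))⁻¹ • A ^ n) i j := by
    intro n
    rw [Matrix.smul_apply]
    exact smul_nonneg (by positivity) (aux_pow_entry_nonneg hA n i j)
  have hle := le_hasSum h k fun n _ => hnn n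
  have hkpos : 0 < (((k.factorial : ℝ))⁻¹ • A ^ k) i j := by
    rw [Matrix.smul_apply]
    have : (0:ℝ) < ((k.factorial : ℝ))⁻¹ := by positivity
    exact smul_pos this hk
  exact lt_of_lt_of_le hkpos hle

lemma aux_exp_mulVec_fixed {A : Matrix (Fin N) (Fin N) ℝ} {v : Fin N → ℝ}
    (hv : A.mulVec v = 0) : (exp A).mulVec v = v := by
  funext i
  have hmul : ∀ n : ℕ, n ≠ 0 → ((((n.factorial : ℝ))⁻¹ • A ^ n).mulVec v) i = 0 := by
    intro n hn
    obtain ⟨k, rfl⟩ := Nat.exists_eq_succ_of_ne_zero hn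
    rw [Matrix.smul_mulVec]
    have : (A ^ (k + 1)).mulVec v = 0 := by
      rw [pow_succ, ← Matrix.mulVec_mulVec, hv, Matrix.mulVec_zero]
    rw [this]
    simp
  -- entrywise hasSum for mulVec
  have hrow : HasSum (fun n : ℕ => ((((n.factorial : ℝ))⁻¹ • A ^ n).mulVec v) i)
      (((exp A).mulVec v) i) := by
    have : ∀ (M : Matrix (Fin N) (Fin N) ℝ), (M.mulVec v) i = ∑ j, M i j * v j := by
      intro M; simp [Matrix.mulVec, dotProduct]
    simp_rw [this]
    exact hasSum_sum fun j _ => (aux_entry_hasSum A i j).mul_right (v j)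
  have hsingle : HasSum (fun n : ℕ => ((((n.factorial : ℝ))⁻¹ • A ^ n).mulVec v) i)
      ((((((0:ℕ).factorial : ℝ))⁻¹ • A ^ (0:ℕ)).mulVec v) i) :=
    hasSum_single 0 fun n hn => hmul n hn
  have := hrow.unique hsingle
  simpa [Matrix.one_mulVec] using this

lemma aux_exp_split (B : Matrix (Fin N) (Fin N) ℝ) (c t : ℝ) :
    exp (t • (B - c • (1 : Matrix (Fin N) (Fin N) ℝ)))
      = Real.exp (-(t * c)) • exp (t • B) := by
  have h1 : t • (B - c • (1 : Matrix (Fin N) (Fin N) ℝ))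
      = t • B + (-(t * c)) • (1 : Matrix (Fin N) (Fin N) ℝ) := by
    rw [smul_sub, smul_smul, sub_eq_add_neg, ← neg_smul]
  have hcomm : Commute (t • B) ((-(t * c)) • (1 : Matrix (Fin N) (Fin N) ℝ)) := by
    unfold Commute SemiconjBy
    simp only [mul_smul_comm, smul_mul_assoc, smul_smul, mul_one]
    ring_nf
    rw [one_mul]
  rw [h1, Matrix.exp_add_of_commute _ _ hcomm]
  have h2 : exp ((-(t * c)) • (1 : Matrix (Fin N) (Fin N) ℝ))
      = Real.exp (-(t * c)) • (1 : Matrix (Fin N) (Fin N) ℝ) := by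
    rw [← Algebra.algebraMap_eq_smul_one (R := ℝ)]
    erw [← algebraMap_exp_comm]
    rw [← Real.exp_eq_exp_ℝ, Algebra.algebraMap_eq_smul_one]
  rw [h2, mul_smul_comm, mul_one]

lemma aux_hasDerivAt_exp_mulVec (A : Matrix (Fin N) (Fin N) ℝ) (v : Fin N → ℝ) (u t : ℝ) :
    HasDerivAt (fun r : ℝ => (exp ((r - u) • A)).mulVec v)
      (A.mulVec ((exp ((t - u) • A)).mulVec v)) t := by
  have h1 : HasDerivAt (fun r : ℝ => exp ((r - u) • A)) (A * exp ((t - u) • A)) t := by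
    have h := hasDerivAt_exp_smul_const' (𝕂 := ℝ) A (t - u)
    have hsub : HasDerivAt (fun x : ℝ => x - u) 1 t := (hasDerivAt_id t).sub_const u
    have h2 := HasDerivAt.scomp t h hsub
    rw [one_smul] at h2
    exact h2
  let Lc : Matrix (Fin N) (Fin N) ℝ →ₗ[ℝ] (Fin N → ℝ) :=
    { toFun := fun M => M.mulVec v
      map_add' := fun M M' => Matrix.add_mulVec M M' v
      map_smul' := fun r M => Matrix.smul_mulVec r M v }
  have h3 := (Lc.toContinuousLinearMap.hasFDerivAt).comp_hasDerivAt t h1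
  have heq : ∀ M : Matrix (Fin N) (Fin N) ℝ, Lc.toContinuousLinearMap M = M.mulVec v :=
    fun M => rfl
  have h4 : HasDerivAt (fun r : ℝ => (exp ((r - u) • A)).mulVec v)
      ((A * exp ((t - u) • A)).mulVec v) t := h3
  rwa [← Matrix.mulVec_mulVec] at h4

lemma aux_ode_eq_exp (A : Matrix (Fin N) (Fin N) ℝ) (f : ℝ → Fin N → ℝ)
    (hf : ∀ t, HasDerivAt f (A.mulVec (f t)) t) {u t : ℝ} (hut : u ≤ t) :
    f t = (exp ((t - u) • A)).mulVec (f u) := by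
  set vA := (Matrix.mulVecLin A).toContinuousLinearMap with hvA
  set g : ℝ → Fin N → ℝ := fun r => (exp ((r - u) • A)).mulVec (f u) with hg
  have hgderiv : ∀ r : ℝ, HasDerivAt g (A.mulVec (g r)) r :=
    fun r => aux_hasDerivAt_exp_mulVec A (f u) u r
  have hlip : ∀ r : ℝ, LipschitzWith ‖vA‖₊ (fun x : Fin N → ℝ => A.mulVec x) := by
    intro r
    have := vA.lipschitz
    exact this
  have key := ODE_solution_unique (v := fun _ x => A.mulVec x) (K := ‖vA‖₊)
    (hlip) (f := f) (g := g) (a := u) (b := t)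
    (fun r _ => (hf r).continuousAt.continuousWithinAt)
    (fun r _ => (hf r).hasDerivWithinAt)
    (fun r _ => (hgderiv r).continuousAt.continuousWithinAt)
    (fun r _ => (hgderiv r).hasDerivWithinAt)
    (by simp [hg, Matrix.one_mulVec])
  exact key ⟨hut, le_refl t⟩

end Aux

section Main

open NormedSpace

variable {N : ℕ}

lemma aux_mulVec_apply (Q : Matrix (Fin N) (Fin N) ℝ) (x : Fin N → ℝ) (i : Fin N) :
    Q.mulVec x i = ∑ j, Q i j * x j := by
  simp [Matrix.mulVec, dotProduct]

lemma aux_pow_pos {B : Matrix (Fin N) (Fin N) ℝ} (hnn : ∀ i j, 0 ≤ B i j)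
    {i j : Fin N} (h : Relation.ReflTransGen (fun p q => 0 < B p q) i j) :
    ∃ k, 0 < (B ^ k) i j := by
  induction h with
  | refl => exact ⟨0, by simp [Matrix.one_apply]⟩
  | @tail b c hib hbc ih =>
    obtain ⟨k, hk⟩ := ih
    refine ⟨k + 1, ?_⟩
    rw [pow_succ, Matrix.mul_apply]
    exact Finset.sum_pos' (fun l _ => mul_nonneg (aux_pow_entry_nonneg hnn k i l) (hnn l c))
      ⟨b, Finset.mem_univ b, mul_pos hk hbc⟩

lemma aux_mulVec_bounds [Nonempty (Fin N)] (Q : Matrix (Fin N) (Fin N) ℝ)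
    (hnn : ∀ i j, 0 ≤ Q i j) (hrow : ∀ i, ∑ j, Q i j = 1) (x : Fin N → ℝ) (i : Fin N) :
    univ.inf' univ_nonempty x ≤ Q.mulVec x i ∧ Q.mulVec x i ≤ univ.sup' univ_nonempty x := by
  constructor
  · rw [aux_mulVec_apply]
    calc univ.inf' univ_nonempty x = ∑ j, Q i j * univ.inf' univ_nonempty x := by
          rw [← Finset.sum_mul, hrow i, one_mul]
      _ ≤ ∑ j, Q i j * x j := Finset.sum_le_sum fun j _ =>
          mul_le_mul_of_nonneg_left (Finset.inf'_le _ (mem_univ j)) (hnn i j)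
  · rw [aux_mulVec_apply]
    calc ∑ j, Q i j * x j ≤ ∑ j, Q i j * univ.sup' univ_nonempty x :=
          Finset.sum_le_sum fun j _ =>
            mul_le_mul_of_nonneg_left (Finset.le_sup' _ (mem_univ j)) (hnn i j)
      _ = univ.sup' univ_nonempty x := by rw [← Finset.sum_mul, hrow i, one_mul]

lemma aux_contraction [Nonempty (Fin N)] (Q : Matrix (Fin N) (Fin N) ℝ) (δ : ℝ) (hδ0 : 0 ≤ δ)
    (hδ : ∀ i j, δ ≤ Q i j) (hrow : ∀ i, ∑ j, Q i j = 1) (x : Fin N → ℝ) :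
    univ.sup' univ_nonempty (Q.mulVec x) - univ.inf' univ_nonempty (Q.mulVec x)
      ≤ (1 - 2 * δ) * (univ.sup' univ_nonempty x - univ.inf' univ_nonempty x) := by
  obtain ⟨k0, -, hk0⟩ := Finset.exists_mem_eq_inf' (univ_nonempty) x
  obtain ⟨k1, -, hk1⟩ := Finset.exists_mem_eq_sup' (univ_nonempty) x
  set m := univ.inf' univ_nonempty x with hm
  set M := univ.sup' univ_nonempty x with hM
  have hnn : ∀ i j, 0 ≤ Q i j := fun i j => le_trans hδ0 (hδ i j)
  have hmM : m ≤ M := by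
    rw [hk0]
    exact Finset.le_sup' _ (mem_univ k0)
  have herase : ∀ i k, ∑ j ∈ univ.erase k, Q i j = 1 - Q i k := by
    intro i k
    have := Finset.add_sum_erase univ (fun j => Q i j) (mem_univ k)
    rw [hrow i] at this
    linarith
  have hub : ∀ i, Q.mulVec x i ≤ M - δ * (M - m) := by
    intro i
    rw [aux_mulVec_apply]
    have hsplit' : ∑ j, Q i j * x j = Q i k0 * x k0 + ∑ j ∈ univ.erase k0, Q i j * x j :=
      (Finset.add_sum_erase univ (fun j => Q i j * x j) (mem_univ k0)).symm
    rw [hsplit']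
    have h1 : ∑ j ∈ univ.erase k0, Q i j * x j ≤ ∑ j ∈ univ.erase k0, Q i j * M :=
      Finset.sum_le_sum fun j _ =>
        mul_le_mul_of_nonneg_left (Finset.le_sup' _ (mem_univ j)) (hnn i j)
    have h2 : ∑ j ∈ univ.erase k0, Q i j * M = (1 - Q i k0) * M := by
      rw [← Finset.sum_mul, herase i k0]
    have h3 : Q i k0 * x k0 = Q i k0 * m := by rw [← hk0]
    have h4 := hδ i k0
    have h5 := hnn i k0
    nlinarith [hmM]
  have hlb : ∀ i, m + δ * (M - m) ≤ Q.mulVec x i := by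
    intro i
    rw [aux_mulVec_apply]
    have hsplit' : ∑ j, Q i j * x j = Q i k1 * x k1 + ∑ j ∈ univ.erase k1, Q i j * x j :=
      (Finset.add_sum_erase univ (fun j => Q i j * x j) (mem_univ k1)).symm
    rw [hsplit']
    have h1 : ∑ j ∈ univ.erase k1, Q i j * m ≤ ∑ j ∈ univ.erase k1, Q i j * x j :=
      Finset.sum_le_sum fun j _ =>
        mul_le_mul_of_nonneg_left (Finset.inf'_le _ (mem_univ j)) (hnn i j)
    have h2 : ∑ j ∈ univ.erase k1, Q i j * m = (1 - Q i k1) * m := by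
      rw [← Finset.sum_mul, herase i k1]
    have h3 : Q i k1 * x k1 = Q i k1 * M := by rw [← hk1]
    have h4 := hδ i k1
    have h5 := hnn i k1
    nlinarith [hmM]
  have hsup : univ.sup' univ_nonempty (Q.mulVec x) ≤ M - δ * (M - m) :=
    Finset.sup'_le _ _ fun i _ => hub i
  have hinf : m + δ * (M - m) ≤ univ.inf' univ_nonempty (Q.mulVec x) :=
    Finset.le_inf' _ _ fun i _ => hlb i
  linarith

end Main

set_option maxHeartbeats 1600000 in
/-- If `L` is irreducible then the consensus model `s' = -L s` converges to a consensus
unconditionally: every solution converges to a constant vector `α • 1`. -/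
theorem consensus_of_irreducible
    (N : ℕ) (hN : 0 < N) (a : Fin N → Fin N → ℝ) (ha : ∀ i j, 0 ≤ a i j)
    (hirr : ∀ i j : Fin N, Relation.ReflTransGen (fun p q => 0 < a p q) i j)
    (L : Matrix (Fin N) (Fin N) ℝ)
    (hL : ∀ i j, L i j = if i = j then ∑ k ∈ Finset.univ.erase i, a i k else -(a i j))
    (s : ℝ → Fin N → ℝ)
    (hs : ∀ (t : ℝ) (i : Fin N), HasDerivAt (fun u => s u i) (-(L.mulVec (s t)) i) t) :
    ∃ α : ℝ, Tendsto (fun t => s t) atTop (nhds fun _ => α) := by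
  haveI : Nonempty (Fin N) := Fin.pos_iff_nonempty.mp hN
  open NormedSpace in
  set A : Matrix (Fin N) (Fin N) ℝ := -L with hA
  have hs' : ∀ t, HasDerivAt s (A.mulVec (s t)) t := by
    intro t
    rw [hasDerivAt_pi]
    intro i
    have h := hs t i
    have : A.mulVec (s t) i = -(L.mulVec (s t)) i := by
      rw [hA, Matrix.neg_mulVec, Pi.neg_apply]
    rw [this]
    exact h
  have hsg : ∀ u t : ℝ, u ≤ t → s t = (NormedSpace.exp ((t - u) • A)).mulVec (s u) :=
    fun u t h => aux_ode_eq_exp A s hs' h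
  -- row sums
  have hLsum : ∀ i, ∑ j, L i j = 0 := by
    intro i
    rw [← Finset.add_sum_erase univ (fun j => L i j) (mem_univ i)]
    have h1 : L i i = ∑ k ∈ univ.erase i, a i k := by rw [hL i i, if_pos rfl]
    have h2 : ∑ j ∈ univ.erase i, L i j = -∑ k ∈ univ.erase i, a i k := by
      rw [← Finset.sum_neg_distrib]
      apply Finset.sum_congr rfl
      intro j hj
      rw [hL i j, if_neg (Finset.ne_of_mem_erase hj).symm]
    rw [h1, h2]
    ring
  have hA1 : A.mulVec (fun _ => (1:ℝ)) = 0 := by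
    funext i
    rw [aux_mulVec_apply]
    simp only [mul_one]
    have h : ∑ j, A i j = -∑ j, L i j := by
      rw [hA]
      simp [Matrix.neg_apply]
    rw [h, hLsum i, neg_zero, Pi.zero_apply]
  have hProw1 : ∀ t : ℝ,
      (NormedSpace.exp (t • A)).mulVec (fun _ => (1:ℝ)) = (fun _ => (1:ℝ)) := by
    intro t
    apply aux_exp_mulVec_fixed
    rw [Matrix.smul_mulVec, hA1, smul_zero]
  have hProwsum : ∀ (t : ℝ) (i : Fin N), ∑ j, NormedSpace.exp (t • A) i j = 1 := by
    intro t i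
    have h := congrFun (hProw1 t) i
    rw [aux_mulVec_apply] at h
    simpa [mul_one] using h
  set c : ℝ := 1 + ∑ i, ∑ k ∈ univ.erase i, a i k with hc
  have hLlt : ∀ i, L i i < c := by
    intro i
    rw [hL i i, if_pos rfl, hc]
    have h1 : ∑ k ∈ univ.erase i, a i k ≤ ∑ i', ∑ k ∈ univ.erase i', a i' k :=
      Finset.single_le_sum (f := fun i' => ∑ k ∈ univ.erase i', a i' k)
        (fun i' _ => Finset.sum_nonneg fun k _ => ha i' k) (mem_univ i)
    linarith
  set B : Matrix (Fin N) (Fin N) ℝ := A + c • (1 : Matrix (Fin N) (Fin N) ℝ) with hB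
  have hBA : A = B - c • (1 : Matrix (Fin N) (Fin N) ℝ) := by
    rw [hB, add_sub_cancel_right]
  have hBij : ∀ i j, B i j = if i = j then c - L i i else a i j := by
    intro i j
    rw [hB]
    by_cases hij : i = j
    · subst hij
      simp [Matrix.add_apply, Matrix.smul_apply, Matrix.one_apply, hA, Matrix.neg_apply]
      ring
    · simp [Matrix.add_apply, Matrix.smul_apply, Matrix.one_apply, hA, Matrix.neg_apply, hij]
      rw [hL i j, if_neg hij]
      ring
  have hBnn : ∀ i j, 0 ≤ B i j := by
    intro i j
    rw [hBij]
    by_cases hij : i = j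
    · rw [if_pos hij]; linarith [hLlt i]
    · rw [if_neg hij]; exact ha i j
  have hBrel : ∀ i j : Fin N, Relation.ReflTransGen (fun p q => 0 < B p q) i j := by
    intro i j
    refine Relation.ReflTransGen.mono ?_ i j (hirr i j)
    intro p q hpq
    by_cases hpq' : p = q
    · rw [hBij, if_pos hpq']; linarith [hLlt p]
    · rw [hBij, if_neg hpq']; exact hpq
  have hQBpos : ∀ i j, 0 < NormedSpace.exp B i j :=
    fun i j => aux_exp_entry_pos hBnn (aux_pow_pos hBnn (hBrel i j))
  have hPsplit : ∀ t : ℝ, NormedSpace.exp (t • A)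
      = Real.exp (-(t * c)) • NormedSpace.exp (t • B) := by
    intro t
    rw [hBA]
    exact aux_exp_split B c t
  have hPnn : ∀ t : ℝ, 0 ≤ t → ∀ i j, 0 ≤ NormedSpace.exp (t • A) i j := by
    intro t ht i j
    rw [hPsplit t, Matrix.smul_apply]
    have hnn : ∀ p q, 0 ≤ (t • B) p q := by
      intro p q
      rw [Matrix.smul_apply]
      exact smul_nonneg ht (hBnn p q)
    exact smul_nonneg (Real.exp_pos _).le (aux_exp_entry_nonneg hnn i j)
  set Q : Matrix (Fin N) (Fin N) ℝ := NormedSpace.exp ((1:ℝ) • A) with hQ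
  have hQpos : ∀ i j, 0 < Q i j := by
    intro i j
    rw [hQ, hPsplit, Matrix.smul_apply, one_smul, smul_eq_mul]
    exact mul_pos (Real.exp_pos _) (hQBpos i j)
  have hQrow : ∀ i, ∑ j, Q i j = 1 := by
    intro i
    rw [hQ]
    exact hProwsum 1 i
  set δ : ℝ := univ.inf' univ_nonempty (fun i => univ.inf' univ_nonempty (fun j => Q i j))
    with hδdef
  have hδpos : 0 < δ := by
    rw [hδdef, Finset.lt_inf'_iff]
    intro i _
    rw [Finset.lt_inf'_iff]
    intro j _
    exact hQpos i j
  have hδle : ∀ i j, δ ≤ Q i j := by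
    intro i j
    calc δ ≤ univ.inf' univ_nonempty (fun j => Q i j) := Finset.inf'_le _ (mem_univ i)
      _ ≤ Q i j := Finset.inf'_le _ (mem_univ j)
  set m : ℝ → ℝ := fun t => univ.inf' univ_nonempty (s t) with hmdef
  set M : ℝ → ℝ := fun t => univ.sup' univ_nonempty (s t) with hMdef
  have hbounds : ∀ u t : ℝ, u ≤ t → ∀ i, m u ≤ s t i ∧ s t i ≤ M u := by
    intro u t h i
    have hst := congrFun (hsg u t h) i
    have hnn := hPnn (t - u) (by linarith)
    have hrow := hProwsum (t - u)
    rw [hst]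
    exact aux_mulVec_bounds _ hnn hrow (s u) i
  have hmmono : Monotone m := by
    intro u t h
    apply Finset.le_inf'
    intro i _
    exact (hbounds u t h i).1
  have hManti : Antitone M := by
    intro u t h
    apply Finset.sup'_le
    intro i _
    exact (hbounds u t h i).2
  have hmM : ∀ t, m t ≤ M t := by
    intro t
    obtain ⟨i⟩ := (inferInstance : Nonempty (Fin N))
    exact le_trans (Finset.inf'_le _ (mem_univ i)) (Finset.le_sup' _ (mem_univ i))
  have hosc0 : ∀ t, 0 ≤ M t - m t := fun t => by linarith [hmM t]
  have hstep : ∀ u : ℝ, M (u + 1) - m (u + 1) ≤ (1 - 2 * δ) * (M u - m u) := by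
    intro u
    have hst : s (u + 1) = Q.mulVec (s u) := by
      have h := hsg u (u + 1) (by linarith)
      rw [show u + 1 - u = (1:ℝ) by ring] at h
      rw [h, ← hQ]
    have hcon := aux_contraction Q δ hδpos.le hδle hQrow (s u)
    simp only [hmdef, hMdef]
    rw [hst]
    exact hcon
  set q : ℝ := max (1 - 2 * δ) 0 with hqdef
  have hq0 : 0 ≤ q := le_max_right _ _
  have hq1 : q < 1 := max_lt (by linarith) one_pos
  have hstepq : ∀ u : ℝ, M (u + 1) - m (u + 1) ≤ q * (M u - m u) := fun u =>
    le_trans (hstep u) (mul_le_mul_of_nonneg_right (le_max_left _ _) (hosc0 u))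
  have hgeo : ∀ n : ℕ, M (n : ℝ) - m (n : ℝ) ≤ q ^ n * (M 0 - m 0) := by
    intro n
    induction n with
    | zero => simp
    | succ k ih =>
      have hcast : ((k + 1 : ℕ) : ℝ) = (k : ℝ) + 1 := by push_cast; ring
      rw [hcast]
      calc M ((k:ℝ) + 1) - m ((k:ℝ) + 1) ≤ q * (M (k:ℝ) - m (k:ℝ)) := hstepq (k:ℝ)
        _ ≤ q * (q ^ k * (M 0 - m 0)) := mul_le_mul_of_nonneg_left ih hq0
        _ = q ^ (k + 1) * (M 0 - m 0) := by ring
  have hoscmono : ∀ u t : ℝ, u ≤ t → M t - m t ≤ M u - m u := by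
    intro u t h
    have h1 := hmmono h
    have h2 := hManti h
    linarith
  have hosc_to : Tendsto (fun t => M t - m t) atTop (nhds 0) := by
    have hg : Tendsto (fun t : ℝ => q ^ ⌊t⌋₊ * (M 0 - m 0)) atTop (nhds 0) := by
      have h1 : Tendsto (fun t : ℝ => q ^ ⌊t⌋₊) atTop (nhds 0) :=
        (tendsto_pow_atTop_nhds_zero_of_lt_one hq0 hq1).comp tendsto_nat_floor_atTop
      simpa using h1.mul_const (M 0 - m 0)
    refine tendsto_of_tendsto_of_tendsto_of_le_of_le' tendsto_const_nhds hg ?_ ?_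
    · exact Eventually.of_forall fun t => hosc0 t
    · filter_upwards [eventually_ge_atTop (0:ℝ)] with t ht
      calc M t - m t ≤ M (⌊t⌋₊ : ℝ) - m (⌊t⌋₊ : ℝ) := hoscmono _ _ (Nat.floor_le ht)
        _ ≤ q ^ ⌊t⌋₊ * (M 0 - m 0) := hgeo ⌊t⌋₊
  have hbdd : BddAbove (Set.range m) := by
    refine ⟨M 0, ?_⟩
    rintro x ⟨t, rfl⟩
    rcases le_total t 0 with h | h
    · exact le_trans (hmmono h) (hmM 0)
    · exact le_trans (hmM t) (hManti h)
  have hmtend : Tendsto m atTop (nhds (⨆ t, m t)) := tendsto_atTop_ciSup hmmono hbdd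
  refine ⟨⨆ t, m t, ?_⟩
  have hMtend : Tendsto M atTop (nhds (⨆ t, m t)) := by
    have hMeq : M = fun t => m t + (M t - m t) := funext fun t => by ring
    rw [hMeq]
    simpa using hmtend.add hosc_to
  rw [tendsto_pi_nhds]
  intro i
  refine tendsto_of_tendsto_of_tendsto_of_le_of_le hmtend hMtend ?_ ?_
  · exact fun t => Finset.inf'_le _ (mem_univ i)
  · exact fun t => Finset.le_sup' _ (mem_univ i)
end

section
/- If L has m isolated blocks (isolated strongly connected components), then the geometric multiplicity of the eigenvalue 0 of L is at least m; i.e., there exist at least m linearly independent eigenvectors of L associated with eigenvalue 0. -/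
open Matrix Finset

/-- `j` influences `i` in the consensus dynamics: there is a chain of positive weights
`a i k₁, a k₁ k₂, …, a k_m j`. -/
def Influences {N : ℕ} (a : Fin N → Fin N → ℝ) (i j : Fin N) : Prop :=
  Relation.ReflTransGen (fun p q => 0 < a p q) i j

/-- An isolated strongly connected component: a nonempty set of vertices, mutually
influencing each other, receiving no influence from outside. -/
def IsolatedSCC {N : ℕ} (a : Fin N → Fin N → ℝ) (C : Finset (Fin N)) : Prop :=
  C.Nonempty ∧ (∀ i ∈ C, ∀ j ∈ C, Influences a i j) ∧ ∀ i ∈ C, ∀ j, j ∉ C → a i j = 0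

/-- If `L` has `m` isolated blocks then the geometric multiplicity of its zero eigenvalue
is at least `m`. -/
theorem zero_eigenspace_dim_ge_isolated_blocks
    (N : ℕ) (a : Fin N → Fin N → ℝ) (ha : ∀ i j, 0 ≤ a i j)
    (L : Matrix (Fin N) (Fin N) ℝ)
    (hL : ∀ i j, L i j = if i = j then ∑ k ∈ Finset.univ.erase i, a i k else -(a i j))
    (m : ℕ) (B : Fin m → Finset (Fin N))
    (hdisj : Pairwise (Function.onFun Disjoint B))
    (hblocks : ∀ k, IsolatedSCC a (B k)) :
    m ≤ Module.finrank ℝ (LinearMap.ker L.mulVecLin) := by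
  classical
  -- rows of each block sum to zero
  have hrow : ∀ (k : Fin m), ∀ i ∈ B k, ∑ j ∈ B k, L i j = 0 := by
    intro k i hi
    rw [← Finset.add_sum_erase _ _ hi, hL i i, if_pos rfl]
    have h4 : ∀ j ∈ (B k).erase i, L i j = -(a i j) := by
      intro j hj
      rw [hL, if_neg fun h => (Finset.mem_erase.mp hj).1 h.symm]
    rw [Finset.sum_congr rfl h4, Finset.sum_neg_distrib]
    have h5 : ∑ t ∈ Finset.univ.erase i, a i t = ∑ t ∈ (B k).erase i, a i t := by
      refine (Finset.sum_subset ?_ ?_).symm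
      · intro x hx
        simp [Finset.mem_erase.mp hx |>.1]
      · intro x hx hnx
        exact (hblocks k).2.2 i hi x fun hmem =>
          hnx (Finset.mem_erase.mpr ⟨(Finset.mem_erase.mp hx).1, hmem⟩)
    rw [h5]; ring
  -- for each block, a kernel vector of Lᵀ supported on it
  have hy : ∀ k : Fin m, ∃ v : Fin N → ℝ,
      (∀ i, i ∉ B k → v i = 0) ∧ (∃ i ∈ B k, v i ≠ 0) ∧ Lᵀ.mulVec v = 0 := by
    intro k
    set C := B k with hC
    set M : Matrix (↥C) (↥C) ℝ := fun p q => L ↑p ↑q with hM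
    have hone : M.mulVec (1 : ↥C → ℝ) = 0 := by
      funext p
      simp only [Matrix.mulVec, dotProduct, Pi.one_apply, mul_one, hM]
      rw [Finset.sum_coe_sort C (fun j => L ↑p j)]
      exact hrow k ↑p p.2
    haveI : Nonempty ↥C := by
      obtain ⟨x, hx⟩ := (hblocks k).1
      exact ⟨⟨x, hx⟩⟩
    have hdet : M.det = 0 :=
      Matrix.exists_mulVec_eq_zero_iff.mp ⟨1, one_ne_zero, hone⟩
    have hdetT : Mᵀ.det = 0 := by rw [Matrix.det_transpose]; exact hdet
    obtain ⟨y, hy0, hyv⟩ := Matrix.exists_mulVec_eq_zero_iff.mpr hdetT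
    refine ⟨fun i => if h : i ∈ C then y ⟨i, h⟩ else 0, ?_, ?_, ?_⟩
    · intro i hi; exact dif_neg hi
    · obtain ⟨p, hp⟩ := Function.ne_iff.mp hy0
      exact ⟨↑p, p.2, by simpa [dif_pos p.2] using hp⟩
    · funext j
      have hsum : ∀ j : Fin N,
          (Lᵀ.mulVec (fun i => if h : i ∈ C then y ⟨i, h⟩ else 0)) j
            = ∑ i : ↥C, L ↑i j * y i := by
        intro j
        simp only [Matrix.mulVec, dotProduct, Matrix.transpose_apply]
        rw [← Finset.sum_subset (Finset.subset_univ C)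
              (fun x _ hx => by simp [dif_neg hx]),
            ← Finset.sum_coe_sort C (fun i => L i j * (if h : i ∈ C then y ⟨i, h⟩ else 0))]
        exact Finset.sum_congr rfl fun p _ => by simp [dif_pos p.2]
      rw [hsum]
      by_cases hj : j ∈ C
      · have := congrFun hyv ⟨j, hj⟩
        exact this
      · refine Finset.sum_eq_zero fun p _ => ?_
        have hne : (↑p : Fin N) ≠ j := fun h => hj (h ▸ p.2)
        have : L ↑p j = 0 := by
          rw [hL, if_neg hne, (hblocks k).2.2 ↑p p.2 j hj, neg_zero]
        rw [this, zero_mul]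
  choose v hv0 hvne hvker using hy
  -- linear independence
  have hli : LinearIndependent ℝ v := by
    rw [Fintype.linearIndependent_iff]
    intro g hg k
    obtain ⟨i₀, hi₀, hvk⟩ := hvne k
    have heval := congrFun hg i₀
    simp only [Finset.sum_apply, Pi.smul_apply, smul_eq_mul, Pi.zero_apply] at heval
    rw [Finset.sum_eq_single k] at heval
    · exact (mul_eq_zero.mp heval).resolve_right hvk
    · intro k' _ hk'
      have : i₀ ∉ B k' := Finset.disjoint_left.mp (hdisj hk'.symm) hi₀
      rw [hv0 k' i₀ this, mul_zero]
    · intro h; exact absurd (Finset.mem_univ k) h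
  -- package into ker Lᵀ.mulVecLin
  have hliT : LinearIndependent ℝ
      (fun k => (⟨v k, by rw [LinearMap.mem_ker, Matrix.mulVecLin_apply]; exact hvker k⟩ :
        LinearMap.ker Lᵀ.mulVecLin)) := by
    apply LinearIndependent.of_comp (LinearMap.ker Lᵀ.mulVecLin).subtype
    exact hli
  have hbound : m ≤ Module.finrank ℝ (LinearMap.ker Lᵀ.mulVecLin) := by
    simpa using hliT.fintype_card_le_finrank
  -- transfer via rank-nullity
  have h1 := LinearMap.finrank_range_add_finrank_ker L.mulVecLin
  have h2 := LinearMap.finrank_range_add_finrank_ker Lᵀ.mulVecLin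
  have h3 : Lᵀ.rank = L.rank := Matrix.rank_transpose L
  simp only [Matrix.rank] at h3
  simp only [Module.finrank_fintype_fun_eq_card] at h1 h2
  omega
end

section
/- The consensus model s' = -L s converges to a consensus (a scalar multiple of 1) for every initial condition if and only if the associated directed graph has exactly one isolated strongly connected component. -/
open Matrix Finset Filter NormedSpace Nat


namespace ConsensusAux


variable {N : ℕ}

noncomputable def entryCLM (i j : Fin N) : Matrix (Fin N) (Fin N) ℝ →L[ℝ] ℝ :=
  LinearMap.toContinuousLinearMap
    { toFun := fun M => M i j
      map_add' := fun _ _ => rfl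
      map_smul' := fun _ _ => rfl }

@[simp] lemma entryCLM_apply (i j : Fin N) (M : Matrix (Fin N) (Fin N) ℝ) :
    entryCLM i j M = M i j := rfl

noncomputable def mulVecCLM (v : Fin N → ℝ) :
    Matrix (Fin N) (Fin N) ℝ →L[ℝ] (Fin N → ℝ) :=
  LinearMap.toContinuousLinearMap
    { toFun := fun M => M.mulVec v
      map_add' := fun A B => Matrix.add_mulVec A B v
      map_smul' := fun c A => Matrix.smul_mulVec c A v }

@[simp] lemma mulVecCLM_apply (v : Fin N → ℝ) (M : Matrix (Fin N) (Fin N) ℝ) :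
    mulVecCLM v M = M.mulVec v := rfl

lemma hasSum_exp (M : Matrix (Fin N) (Fin N) ℝ) :
    HasSum (fun n : ℕ => ((n ! : ℝ))⁻¹ • M ^ n) (exp M) := by
  letI : NormedRing (Matrix (Fin N) (Fin N) ℝ) := Matrix.linftyOpNormedRing
  letI : NormedAlgebra ℝ (Matrix (Fin N) (Fin N) ℝ) := Matrix.linftyOpNormedAlgebra
  exact exp_series_hasSum_exp' M

lemma hasSum_exp_entry (M : Matrix (Fin N) (Fin N) ℝ) (i j : Fin N) :
    HasSum (fun n : ℕ => ((n ! : ℝ))⁻¹ * (M ^ n) i j) ((exp M) i j) := by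
  have h := (hasSum_exp M).mapL (entryCLM i j)
  simpa using h

lemma hasSum_exp_mulVec (M : Matrix (Fin N) (Fin N) ℝ) (v : Fin N → ℝ) :
    HasSum (fun n : ℕ => ((n ! : ℝ))⁻¹ • (M ^ n).mulVec v) ((exp M).mulVec v) := by
  have h := (hasSum_exp M).mapL (mulVecCLM v)
  simpa using h


variable {N : ℕ}

lemma pow_entry_nonneg {M : Matrix (Fin N) (Fin N) ℝ} (hM : ∀ i j, 0 ≤ M i j)
    (n : ℕ) (i j : Fin N) : 0 ≤ (M ^ n) i j := by
  induction n generalizing i j with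
  | zero => simp [Matrix.one_apply]; positivity
  | succ n ih =>
    rw [pow_succ, Matrix.mul_apply]
    exact Finset.sum_nonneg fun k _ => mul_nonneg (ih i k) (hM k j)

/-- exp of an entrywise-nonnegative matrix is entrywise nonnegative. -/
lemma exp_entry_nonneg {M : Matrix (Fin N) (Fin N) ℝ} (hM : ∀ i j, 0 ≤ M i j)
    (i j : Fin N) : 0 ≤ (exp M) i j :=
  (hasSum_exp_entry M i j).nonneg
    (fun n => mul_nonneg (by positivity) (pow_entry_nonneg hM n i j))

/-- single term lower bound for the exp series. -/
lemma exp_entry_ge {M : Matrix (Fin N) (Fin N) ℝ} (hM : ∀ i j, 0 ≤ M i j)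
    (n : ℕ) (i j : Fin N) : ((n ! : ℝ))⁻¹ * (M ^ n) i j ≤ (exp M) i j :=
  le_hasSum (hasSum_exp_entry M i j) n
    (fun m _ => mul_nonneg (by positivity) (pow_entry_nonneg hM m i j))

/-- decomposition `exp (t • (-L)) = e^{-tc} • exp (t • (c • 1 + (-L)))`. -/
lemma exp_decomp (L : Matrix (Fin N) (Fin N) ℝ) (c t : ℝ) :
    exp (t • (-L)) =
      Real.exp (-(t * c)) • exp (t • (c • (1 : Matrix (Fin N) (Fin N) ℝ) + (-L))) := by
  have h1 : t • (c • (1 : Matrix (Fin N) (Fin N) ℝ) + (-L)) =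
      t • (-L) + (t * c) • (1 : Matrix (Fin N) (Fin N) ℝ) := by
    rw [smul_add, smul_smul, mul_comm, add_comm]
  have hcomm : Commute (t • (-L)) ((t * c) • (1 : Matrix (Fin N) (Fin N) ℝ)) :=
    ((Commute.one_right _).smul_right _).smul_left _
  have h2 : exp ((t * c) • (1 : Matrix (Fin N) (Fin N) ℝ)) =
      Real.exp (t * c) • (1 : Matrix (Fin N) (Fin N) ℝ) := by
    have hs : HasSum (fun n : ℕ => ((n ! : ℝ))⁻¹ • (t * c) ^ n) (exp (t * c)) :=
      exp_series_hasSum_exp' (t * c)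
    have := hs.mapL ((ContinuousLinearMap.id ℝ ℝ).smulRight (1 : Matrix (Fin N) (Fin N) ℝ))
    have h3 : HasSum (fun n : ℕ => ((n ! : ℝ))⁻¹ • ((t * c) • (1 : Matrix (Fin N) (Fin N) ℝ)) ^ n)
        (exp (t * c) • (1 : Matrix (Fin N) (Fin N) ℝ)) := by
      simpa [smul_pow, smul_smul] using this
    rw [Real.exp_eq_exp_ℝ]
    exact (hasSum_exp _).unique h3
  have h4 := Matrix.exp_add_of_commute (t • (-L)) ((t * c) • (1 : Matrix (Fin N) (Fin N) ℝ)) hcomm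
  rw [h1, h4, h2]
  rw [mul_smul_comm, mul_one, smul_smul, ← Real.exp_add]
  simp

section

variable {N : ℕ} {a : Fin N → Fin N → ℝ} {L : Matrix (Fin N) (Fin N) ℝ}

lemma L_rowsum (hL : ∀ i j, L i j = if i = j then ∑ k ∈ Finset.univ.erase i, a i k else -(a i j))
    (i : Fin N) : ∑ j, L i j = 0 := by
  rw [← Finset.sum_erase_add _ _ (Finset.mem_univ i)]
  have h1 : ∑ j ∈ Finset.univ.erase i, L i j = -∑ k ∈ Finset.univ.erase i, a i k := by
    rw [← Finset.sum_neg_distrib]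
    refine Finset.sum_congr rfl fun j hj => ?_
    rw [hL i j, if_neg (Finset.ne_of_mem_erase hj).symm]
  rw [h1, hL i i, if_pos rfl]
  ring

lemma negL_mulVec_one (hL : ∀ i j, L i j = if i = j then ∑ k ∈ Finset.univ.erase i, a i k else -(a i j))
    (t : ℝ) : (t • (-L)).mulVec (fun _ => (1 : ℝ)) = 0 := by
  funext i
  simp only [Matrix.mulVec, dotProduct, Matrix.smul_apply, Matrix.neg_apply, smul_eq_mul,
    mul_one, Pi.zero_apply]
  have h := L_rowsum hL i
  have : ∑ x : Fin N, t * -L i x = t * -(∑ x : Fin N, L i x) := by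
    rw [← Finset.sum_neg_distrib, Finset.mul_sum]
  rw [this, h]
  ring

lemma exp_mulVec_one (hL : ∀ i j, L i j = if i = j then ∑ k ∈ Finset.univ.erase i, a i k else -(a i j))
    (t : ℝ) :
    (NormedSpace.exp (t • (-L))).mulVec (fun _ => (1 : ℝ)) = fun _ => (1 : ℝ) := by
  have h0 : ∀ n : ℕ, n ≠ 0 →
      ((n ! : ℝ))⁻¹ • ((t • (-L)) ^ n).mulVec (fun _ => (1 : ℝ)) = 0 := by
    intro n hn
    obtain ⟨m, rfl⟩ := Nat.exists_eq_succ_of_ne_zero hn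
    rw [pow_succ, ← Matrix.mulVec_mulVec, negL_mulVec_one hL, Matrix.mulVec_zero, smul_zero]
  have hs := hasSum_exp_mulVec (t • (-L)) (fun _ => (1 : ℝ))
  have hs2 : HasSum (fun n : ℕ => ((n ! : ℝ))⁻¹ • ((t • (-L)) ^ n).mulVec (fun _ => (1 : ℝ)))
      (fun _ => (1 : ℝ) : Fin N → ℝ) := by
    have := hasSum_single (f := fun n : ℕ => ((n ! : ℝ))⁻¹ • ((t • (-L)) ^ n).mulVec (fun _ => (1 : ℝ))) 0 (fun b hb => h0 b hb)
    simpa [Matrix.one_mulVec] using this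
  exact hs.unique hs2

lemma exp_rowsum (hL : ∀ i j, L i j = if i = j then ∑ k ∈ Finset.univ.erase i, a i k else -(a i j))
    (t : ℝ) (i : Fin N) : ∑ j, (NormedSpace.exp (t • (-L))) i j = 1 := by
  have := congrFun (exp_mulVec_one hL t) i
  simpa [Matrix.mulVec, dotProduct] using this

end

section

variable {N : ℕ} {a : Fin N → Fin N → ℝ} {L : Matrix (Fin N) (Fin N) ℝ}

/-- closed sets block-triangularize the dynamics. -/
lemma exp_block_zero
    (hL : ∀ i j, L i j = if i = j then ∑ k ∈ Finset.univ.erase i, a i k else -(a i j))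
    (C : Finset (Fin N)) (hC : ∀ i ∈ C, ∀ j, j ∉ C → a i j = 0) (t : ℝ)
    {i j : Fin N} (hi : i ∈ C) (hj : j ∉ C) : (NormedSpace.exp (t • (-L))) i j = 0 := by
  have hpow : ∀ n : ℕ, ∀ p ∈ C, ∀ q, q ∉ C → ((t • (-L)) ^ n) p q = 0 := by
    intro n
    induction n with
    | zero =>
      intro p hp q hq
      have : p ≠ q := fun h => hq (h ▸ hp)
      simp [Matrix.one_apply_ne this]
    | succ n ih =>
      intro p hp q hq
      rw [pow_succ, Matrix.mul_apply]
      refine Finset.sum_eq_zero fun k _ => ?_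
      by_cases hk : k ∈ C
      · have : L k q = 0 := by
          have hkq : k ≠ q := fun h => hq (h ▸ hk)
          rw [hL k q, if_neg hkq, hC k hk q hq, neg_zero]
        simp [Matrix.smul_apply, Matrix.neg_apply, this]
      · rw [ih p hp k hk, zero_mul]
  have hs := hasSum_exp_entry (t • (-L)) i j
  have hz : ∀ n : ℕ, ((n ! : ℝ))⁻¹ * ((t • (-L)) ^ n) i j = 0 := fun n => by
    rw [hpow n i hi j hj, mul_zero]
  have hfun : (fun n : ℕ => ((n ! : ℝ))⁻¹ * ((t • (-L)) ^ n) i j) = fun _ => (0 : ℝ) :=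
    funext hz
  have : HasSum (fun n : ℕ => ((n ! : ℝ))⁻¹ * ((t • (-L)) ^ n) i j) 0 := by
    rw [hfun]; exact hasSum_zero
  exact hs.unique this

/-- the comparison matrix `c • 1 - L` is entrywise nonneg for large `c`. -/
lemma M0_nonneg (ha : ∀ i j, 0 ≤ a i j)
    (hL : ∀ i j, L i j = if i = j then ∑ k ∈ Finset.univ.erase i, a i k else -(a i j))
    (c : ℝ) (hc : ∀ i, ∑ k ∈ Finset.univ.erase i, a i k ≤ c) (i j : Fin N) :
    0 ≤ (c • (1 : Matrix (Fin N) (Fin N) ℝ) + (-L)) i j := by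
  simp only [Matrix.add_apply, Matrix.smul_apply, Matrix.neg_apply, Matrix.one_apply,
    smul_eq_mul]
  by_cases h : i = j
  · subst h; rw [if_pos rfl, hL i i, if_pos rfl, mul_one]
    linarith [hc i]
  · rw [if_neg h, hL i j, if_neg h, mul_zero, zero_add, neg_neg]
    exact ha i j

lemma M0_diag_pos (ha : ∀ i j, 0 ≤ a i j)
    (hL : ∀ i j, L i j = if i = j then ∑ k ∈ Finset.univ.erase i, a i k else -(a i j))
    (c : ℝ) (hc : ∀ i, ∑ k ∈ Finset.univ.erase i, a i k < c) (i : Fin N) :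
    0 < (c • (1 : Matrix (Fin N) (Fin N) ℝ) + (-L)) i i := by
  have h := hL i i
  rw [if_pos rfl] at h
  simp only [Matrix.add_apply, Matrix.smul_apply, Matrix.neg_apply, Matrix.one_apply_eq,
    smul_eq_mul, mul_one, h]
  linarith [hc i]

lemma M0_offdiag (hL : ∀ i j, L i j = if i = j then ∑ k ∈ Finset.univ.erase i, a i k else -(a i j))
    (c : ℝ) {i j : Fin N} (h : i ≠ j) :
    (c • (1 : Matrix (Fin N) (Fin N) ℝ) + (-L)) i j = a i j := by
  simp [Matrix.add_apply, Matrix.smul_apply, Matrix.neg_apply, Matrix.one_apply_ne h,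
    hL i j, if_neg h]

end

section

variable {N : ℕ} {a : Fin N → Fin N → ℝ} {L : Matrix (Fin N) (Fin N) ℝ}

/-- entries of `exp (t • (-L))` are nonnegative for `t ≥ 0`. -/
lemma exp_negL_nonneg (ha : ∀ i j, 0 ≤ a i j)
    (hL : ∀ i j, L i j = if i = j then ∑ k ∈ Finset.univ.erase i, a i k else -(a i j))
    {t : ℝ} (ht : 0 ≤ t) (i j : Fin N) : 0 ≤ (NormedSpace.exp (t • (-L))) i j := by
  set c : ℝ := 1 + ∑ p, ∑ q ∈ Finset.univ.erase p, a p q with hc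
  have hcb : ∀ p : Fin N, ∑ k ∈ Finset.univ.erase p, a p k ≤ c := by
    intro p
    have h1 : ∑ k ∈ Finset.univ.erase p, a p k ≤ ∑ q, ∑ k ∈ Finset.univ.erase q, a q k :=
      Finset.single_le_sum (f := fun q => ∑ k ∈ Finset.univ.erase q, a q k)
        (fun q _ => Finset.sum_nonneg fun k _ => ha q k) (Finset.mem_univ p)
    linarith
  rw [exp_decomp L c t, Matrix.smul_apply, smul_eq_mul]
  refine mul_nonneg (Real.exp_nonneg _) ?_
  refine exp_entry_nonneg (fun p q => ?_) i j
  rw [smul_add] at *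
  have h := M0_nonneg ha hL c hcb p q
  have : (t • (c • (1 : Matrix (Fin N) (Fin N) ℝ)) + t • (-L)) p q
      = t * ((c • (1 : Matrix (Fin N) (Fin N) ℝ) + (-L)) p q) := by
    simp [Matrix.add_apply, Matrix.smul_apply, mul_add]
  rw [this]
  exact mul_nonneg ht h

/-- strict positivity along influence chains for `t > 0`. -/
lemma exp_negL_pos (ha : ∀ i j, 0 ≤ a i j)
    (hL : ∀ i j, L i j = if i = j then ∑ k ∈ Finset.univ.erase i, a i k else -(a i j))
    {t : ℝ} (ht : 0 < t) {i j : Fin N} (hij : Influences a i j) :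
    0 < (NormedSpace.exp (t • (-L))) i j := by
  set c : ℝ := 1 + ∑ p, ∑ q ∈ Finset.univ.erase p, a p q with hc
  have hcb : ∀ p : Fin N, ∑ k ∈ Finset.univ.erase p, a p k < c := by
    intro p
    have h1 : ∑ k ∈ Finset.univ.erase p, a p k ≤ ∑ q, ∑ k ∈ Finset.univ.erase q, a q k :=
      Finset.single_le_sum (f := fun q => ∑ k ∈ Finset.univ.erase q, a q k)
        (fun q _ => Finset.sum_nonneg fun k _ => ha q k) (Finset.mem_univ p)
    linarith
  set M0 : Matrix (Fin N) (Fin N) ℝ := c • (1 : Matrix (Fin N) (Fin N) ℝ) + (-L) with hM0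
  have hM0nn : ∀ p q, 0 ≤ M0 p q := M0_nonneg ha hL c fun p => (hcb p).le
  -- a power of M0 has positive (i,j) entry
  have hpos : ∃ n : ℕ, 0 < (M0 ^ n) i j := by
    induction hij with
    | refl => exact ⟨0, by simp [Matrix.one_apply_eq]⟩
    | @tail b q hb hstep ih =>
      obtain ⟨n, hn⟩ := ih
      refine ⟨n + 1, ?_⟩
      rw [pow_succ, Matrix.mul_apply]
      have hbq : 0 < M0 b q := by
        by_cases h : b = q
        · subst h; rw [hM0]; exact M0_diag_pos ha hL c hcb b
        · rw [hM0, M0_offdiag hL c h]; exact hstep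
      have hterm : 0 < (M0 ^ n) i b * M0 b q := mul_pos hn hbq
      have hle : (M0 ^ n) i b * M0 b q ≤ ∑ k, (M0 ^ n) i k * M0 k q :=
        Finset.single_le_sum (f := fun k => (M0 ^ n) i k * M0 k q)
          (fun k _ => mul_nonneg (pow_entry_nonneg hM0nn n i k) (hM0nn k q))
          (Finset.mem_univ b)
      linarith
  obtain ⟨n, hn⟩ := hpos
  -- now transfer positivity through the decomposition
  have hdec := exp_decomp L c t
  rw [hdec, Matrix.smul_apply, smul_eq_mul]
  refine mul_pos (Real.exp_pos _) ?_
  have htM0 : ∀ p q, 0 ≤ (t • M0) p q := fun p q => by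
    rw [Matrix.smul_apply, smul_eq_mul]; exact mul_nonneg ht.le (hM0nn p q)
  have hge := exp_entry_ge htM0 n i j
  have : ((t • M0) ^ n) i j = t ^ n * (M0 ^ n) i j := by
    rw [smul_pow, Matrix.smul_apply, smul_eq_mul]
  have hpos2 : 0 < ((n ! : ℝ))⁻¹ * ((t • M0) ^ n) i j := by
    rw [this]
    positivity
  calc (0:ℝ) < ((n ! : ℝ))⁻¹ * ((t • M0) ^ n) i j := hpos2
  _ ≤ _ := hge

end

section

variable {N : ℕ} [Nonempty (Fin N)]

lemma mulVec_le_sup' (P : Matrix (Fin N) (Fin N) ℝ) (hP : ∀ i j, 0 ≤ P i j)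
    (hrow : ∀ i, ∑ j, P i j = 1) (v : Fin N → ℝ) (i : Fin N) :
    P.mulVec v i ≤ Finset.univ.sup' Finset.univ_nonempty v := by
  have h1 : P.mulVec v i = ∑ j, P i j * v j := by
    simp [Matrix.mulVec, dotProduct]
  rw [h1]
  calc ∑ j, P i j * v j ≤ ∑ j, P i j * Finset.univ.sup' Finset.univ_nonempty v :=
        Finset.sum_le_sum fun j _ => mul_le_mul_of_nonneg_left
          (Finset.le_sup' v (Finset.mem_univ j)) (hP i j)
    _ = 1 * Finset.univ.sup' Finset.univ_nonempty v := by rw [← Finset.sum_mul, hrow i]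
    _ = _ := one_mul _

lemma inf'_le_mulVec (P : Matrix (Fin N) (Fin N) ℝ) (hP : ∀ i j, 0 ≤ P i j)
    (hrow : ∀ i, ∑ j, P i j = 1) (v : Fin N → ℝ) (i : Fin N) :
    Finset.univ.inf' Finset.univ_nonempty v ≤ P.mulVec v i := by
  have h1 : P.mulVec v i = ∑ j, P i j * v j := by
    simp [Matrix.mulVec, dotProduct]
  rw [h1]
  calc Finset.univ.inf' Finset.univ_nonempty v
      = 1 * Finset.univ.inf' Finset.univ_nonempty v := (one_mul _).symm
    _ = ∑ j, P i j * Finset.univ.inf' Finset.univ_nonempty v := by rw [← Finset.sum_mul, hrow i]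
    _ ≤ ∑ j, P i j * v j :=
        Finset.sum_le_sum fun j _ => mul_le_mul_of_nonneg_left
          (Finset.inf'_le v (Finset.mem_univ j)) (hP i j)

/-- Dobrushin-type oscillation contraction. -/
lemma dobrushin (P : Matrix (Fin N) (Fin N) ℝ) (hP : ∀ i j, 0 ≤ P i j)
    (hrow : ∀ i, ∑ j, P i j = 1) (j₀ : Fin N) (δ : ℝ) (hδ : ∀ i, δ ≤ P i j₀)
    (v : Fin N → ℝ) :
    Finset.univ.sup' Finset.univ_nonempty (P.mulVec v)
      - Finset.univ.inf' Finset.univ_nonempty (P.mulVec v)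
      ≤ (1 - δ) * (Finset.univ.sup' Finset.univ_nonempty v
          - Finset.univ.inf' Finset.univ_nonempty v) := by
  set S := Finset.univ.sup' Finset.univ_nonempty v with hS
  set I := Finset.univ.inf' Finset.univ_nonempty v with hI
  have hup : ∀ i, P.mulVec v i ≤ δ * v j₀ + (1 - δ) * S := by
    intro i
    have h1 : P.mulVec v i = ∑ j, P i j * v j := by
      simp [Matrix.mulVec, dotProduct]
    have hsplit : ∑ j, P i j * v j
        = δ * v j₀ + ∑ j, (P i j - if j = j₀ then δ else 0) * v j := by
      rw [Finset.sum_congr rfl (fun j _ => by ring_nf :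
        ∀ j ∈ Finset.univ, P i j * v j = (P i j - if j = j₀ then δ else 0) * v j
          + (if j = j₀ then δ else 0) * v j)]
      rw [Finset.sum_add_distrib]
      have : ∑ j, (if j = j₀ then δ else 0) * v j = δ * v j₀ := by
        rw [Finset.sum_eq_single j₀]
        · simp
        · intro b _ hb; simp [hb]
        · intro h; exact absurd (Finset.mem_univ j₀) h
      rw [this]; ring
    have hq : ∀ j, 0 ≤ P i j - if j = j₀ then δ else 0 := by
      intro j
      by_cases h : j = j₀
      · subst h; simp; linarith [hδ i]
      · simp [h]; exact hP i j
    have hqsum : ∑ j, (P i j - if j = j₀ then δ else 0) = 1 - δ := by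
      rw [Finset.sum_sub_distrib, hrow i]
      have : ∑ j, (if j = j₀ then δ else 0 : ℝ) = δ := by
        rw [Finset.sum_eq_single j₀]
        · simp
        · intro b _ hb; simp [hb]
        · intro h; exact absurd (Finset.mem_univ j₀) h
      rw [this]
    have hle : ∑ j, (P i j - if j = j₀ then δ else 0) * v j ≤ (1 - δ) * S := by
      calc ∑ j, (P i j - if j = j₀ then δ else 0) * v j
          ≤ ∑ j, (P i j - if j = j₀ then δ else 0) * S :=
            Finset.sum_le_sum fun j _ => mul_le_mul_of_nonneg_left
              (Finset.le_sup' v (Finset.mem_univ j)) (hq j)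
        _ = (1 - δ) * S := by rw [← Finset.sum_mul, hqsum]
    rw [h1, hsplit]; linarith
  have hdown : ∀ i, δ * v j₀ + (1 - δ) * I ≤ P.mulVec v i := by
    intro i
    have h1 : P.mulVec v i = ∑ j, P i j * v j := by
      simp [Matrix.mulVec, dotProduct]
    have hsplit : ∑ j, P i j * v j
        = δ * v j₀ + ∑ j, (P i j - if j = j₀ then δ else 0) * v j := by
      rw [Finset.sum_congr rfl (fun j _ => by ring_nf :
        ∀ j ∈ Finset.univ, P i j * v j = (P i j - if j = j₀ then δ else 0) * v j
          + (if j = j₀ then δ else 0) * v j)]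
      rw [Finset.sum_add_distrib]
      have : ∑ j, (if j = j₀ then δ else 0) * v j = δ * v j₀ := by
        rw [Finset.sum_eq_single j₀]
        · simp
        · intro b _ hb; simp [hb]
        · intro h; exact absurd (Finset.mem_univ j₀) h
      rw [this]; ring
    have hq : ∀ j, 0 ≤ P i j - if j = j₀ then δ else 0 := by
      intro j
      by_cases h : j = j₀
      · subst h; simp; linarith [hδ i]
      · simp [h]; exact hP i j
    have hqsum : ∑ j, (P i j - if j = j₀ then δ else 0) = 1 - δ := by
      rw [Finset.sum_sub_distrib, hrow i]
      have : ∑ j, (if j = j₀ then δ else 0 : ℝ) = δ := by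
        rw [Finset.sum_eq_single j₀]
        · simp
        · intro b _ hb; simp [hb]
        · intro h; exact absurd (Finset.mem_univ j₀) h
      rw [this]
    have hle : (1 - δ) * I ≤ ∑ j, (P i j - if j = j₀ then δ else 0) * v j := by
      calc (1 - δ) * I = ∑ j, (P i j - if j = j₀ then δ else 0) * I := by
            rw [← Finset.sum_mul, hqsum]
        _ ≤ ∑ j, (P i j - if j = j₀ then δ else 0) * v j :=
            Finset.sum_le_sum fun j _ => mul_le_mul_of_nonneg_left
              (Finset.inf'_le v (Finset.mem_univ j)) (hq j)
    rw [h1, hsplit]; linarith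
  rw [sub_le_iff_le_add]
  refine Finset.sup'_le _ _ fun i _ => ?_
  rw [add_comm, ← sub_le_iff_le_add]
  refine Finset.le_inf' _ _ fun k _ => ?_
  have := hup i
  have := hdown k
  linarith
end

section Graph

open Classical in
/-- the set of vertices influenced-from `i` (i.e. that `i` can reach). -/
noncomputable def reachSet {N : ℕ} (a : Fin N → Fin N → ℝ) (i : Fin N) : Finset (Fin N) :=
  Finset.univ.filter (Influences a i)

lemma mem_reachSet {N : ℕ} {a : Fin N → Fin N → ℝ} {i j : Fin N} :
    j ∈ reachSet a i ↔ Influences a i j := by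
  simp [reachSet]

lemma reachSet_subset {N : ℕ} {a : Fin N → Fin N → ℝ} {i j : Fin N}
    (h : Influences a i j) : reachSet a j ⊆ reachSet a i := by
  intro k hk
  rw [mem_reachSet] at *
  exact h.trans hk

/-- an isolated SCC is closed under influence. -/
lemma IsolatedSCC.closed_reach {N : ℕ} {a : Fin N → Fin N → ℝ} {C : Finset (Fin N)}
    (hC : IsolatedSCC a C) (ha : ∀ i j, 0 ≤ a i j) {i j : Fin N} (hi : i ∈ C)
    (h : Influences a i j) : j ∈ C := by
  induction h with
  | refl => exact hi
  | @tail b q hb hstep ih =>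
    by_contra hq
    have := hC.2.2 b ih q hq
    rw [this] at hstep
    exact lt_irrefl 0 hstep

/-- every vertex can reach some isolated SCC. -/
lemma exists_isolated_subset {N : ℕ} (a : Fin N → Fin N → ℝ) (ha : ∀ i j, 0 ≤ a i j)
    (i : Fin N) : ∃ C : Finset (Fin N), IsolatedSCC a C ∧ ∀ j ∈ C, Influences a i j := by
  have hne : (reachSet a i).Nonempty := ⟨i, mem_reachSet.2 Relation.ReflTransGen.refl⟩
  obtain ⟨j, hji, hjmin⟩ := Finset.exists_min_image (reachSet a i)
    (fun k => (reachSet a k).card) hne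
  rw [mem_reachSet] at hji
  refine ⟨reachSet a j, ⟨⟨j, mem_reachSet.2 Relation.ReflTransGen.refl⟩, ?_, ?_⟩,
    fun k hk => hji.trans (mem_reachSet.1 hk)⟩
  · -- mutual influence
    intro p hp q hq
    rw [mem_reachSet] at hp hq
    have hsub : reachSet a p ⊆ reachSet a j := reachSet_subset hp
    have hpmem : p ∈ reachSet a i := mem_reachSet.2 (hji.trans hp)
    have hcard := hjmin p hpmem
    have heq : reachSet a p = reachSet a j := Finset.eq_of_subset_of_card_le hsub hcard
    have : q ∈ reachSet a p := by rw [heq]; exact mem_reachSet.2 hq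
    exact mem_reachSet.1 this
  · -- isolation
    intro p hp q hq
    by_contra hne0
    have hpos : 0 < a p q := lt_of_le_of_ne (ha p q) (Ne.symm hne0)
    have : q ∈ reachSet a j :=
      mem_reachSet.2 ((mem_reachSet.1 hp).tail hpos)
    exact hq this

/-- with a unique isolated SCC, every vertex reaches every vertex of that SCC. -/
lemma reach_of_unique {N : ℕ} {a : Fin N → Fin N → ℝ} (ha : ∀ i j, 0 ≤ a i j)
    {C : Finset (Fin N)} (hC : IsolatedSCC a C)
    (huniq : ∀ C', IsolatedSCC a C' → C' = C) (i : Fin N) {j : Fin N} (hj : j ∈ C) :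
    Influences a i j := by
  obtain ⟨C', hC', hreach⟩ := exists_isolated_subset a ha i
  rw [huniq C' hC'] at hreach
  exact hreach j hj

end Graph

section Main

variable {N : ℕ} {a : Fin N → Fin N → ℝ} {L : Matrix (Fin N) (Fin N) ℝ}

lemma P_semigroup (L : Matrix (Fin N) (Fin N) ℝ) (s t : ℝ) :
    NormedSpace.exp ((s + t) • (-L)) =
      NormedSpace.exp (s • (-L)) * NormedSpace.exp (t • (-L)) := by
  rw [add_smul]
  exact Matrix.exp_add_of_commute _ _ (((Commute.refl (-L)).smul_left s).smul_right t)

lemma tendsto_consensus (hN : 0 < N) (ha : ∀ i j, 0 ≤ a i j)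
    (hL : ∀ i j, L i j = if i = j then ∑ k ∈ Finset.univ.erase i, a i k else -(a i j))
    (j₀ : Fin N) (hreach : ∀ i, Influences a i j₀) (s0 : Fin N → ℝ) :
    ∃ α : ℝ, Filter.Tendsto (fun t : ℝ => (NormedSpace.exp (t • (-L))).mulVec s0)
      Filter.atTop (nhds fun _ => α) := by
  haveI : Nonempty (Fin N) := ⟨⟨0, hN⟩⟩
  set x : ℝ → Fin N → ℝ := fun t => (NormedSpace.exp (t • (-L))).mulVec s0 with hxdef
  set m : ℝ → ℝ := fun t => Finset.univ.inf' Finset.univ_nonempty (x t) with hmdef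
  set M : ℝ → ℝ := fun t => Finset.univ.sup' Finset.univ_nonempty (x t) with hMdef
  have hPnn : ∀ t : ℝ, 0 ≤ t → ∀ i j, 0 ≤ (NormedSpace.exp (t • (-L))) i j :=
    fun t ht => exp_negL_nonneg ha hL ht
  have hProw : ∀ t : ℝ, ∀ i, ∑ j, (NormedSpace.exp (t • (-L))) i j = 1 :=
    fun t => exp_rowsum hL t
  have hsg : ∀ s t : ℝ, x (s + t) = (NormedSpace.exp (s • (-L))).mulVec (x t) := by
    intro s t
    rw [hxdef]
    simp only
    rw [P_semigroup L s t, ← Matrix.mulVec_mulVec]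
  -- coordinatewise bounds after nonnegative time steps
  have hub : ∀ s t : ℝ, 0 ≤ s → ∀ i, x (s + t) i ≤ M t := by
    intro s t hs i
    rw [hsg s t]
    exact mulVec_le_sup' _ (hPnn s hs) (hProw s) (x t) i
  have hlb : ∀ s t : ℝ, 0 ≤ s → ∀ i, m t ≤ x (s + t) i := by
    intro s t hs i
    rw [hsg s t]
    exact inf'_le_mulVec _ (hPnn s hs) (hProw s) (x t) i
  have hMmono : ∀ s t : ℝ, 0 ≤ s → M (s + t) ≤ M t :=
    fun s t hs => Finset.sup'_le _ _ fun i _ => hub s t hs i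
  have hmmono : ∀ s t : ℝ, 0 ≤ s → m t ≤ m (s + t) :=
    fun s t hs => Finset.le_inf' _ _ fun i _ => hlb s t hs i
  have hmM : ∀ t : ℝ, m t ≤ M t := fun t =>
    le_trans (Finset.inf'_le _ (Finset.mem_univ (Classical.arbitrary _)))
      (Finset.le_sup' _ (Finset.mem_univ (Classical.arbitrary _)))
  -- Dobrushin coefficient
  set δ : ℝ := Finset.univ.inf' Finset.univ_nonempty
    (fun i => (NormedSpace.exp ((1:ℝ) • (-L))) i j₀) with hδdef
  have hδpos : 0 < δ := by
    rw [hδdef, Finset.lt_inf'_iff]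
    exact fun i _ => exp_negL_pos ha hL one_pos (hreach i)
  have hδle : ∀ i, δ ≤ (NormedSpace.exp ((1:ℝ) • (-L))) i j₀ :=
    fun i => Finset.inf'_le _ (Finset.mem_univ i)
  have hδ1 : δ ≤ 1 := by
    have h1 := hδle (Classical.arbitrary _)
    have h2 : (NormedSpace.exp ((1:ℝ) • (-L))) (Classical.arbitrary _) j₀
        ≤ ∑ j, (NormedSpace.exp ((1:ℝ) • (-L))) (Classical.arbitrary _) j :=
      Finset.single_le_sum (fun j _ => hPnn 1 zero_le_one _ j) (Finset.mem_univ j₀)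
    rw [hProw 1] at h2
    linarith
  -- oscillation contraction
  have hosc : ∀ t : ℝ, M (1 + t) - m (1 + t) ≤ (1 - δ) * (M t - m t) := by
    intro t
    have h := dobrushin (NormedSpace.exp ((1:ℝ) • (-L))) (hPnn 1 zero_le_one)
      (hProw 1) j₀ δ hδle (x t)
    rw [hMdef, hmdef]
    simp only
    rw [hsg 1 t]
    exact h
  have hoscn : ∀ n : ℕ, M n - m n ≤ (1 - δ) ^ n * (M 0 - m 0) := by
    intro n
    induction n with
    | zero => simp
    | succ n ih =>
      have h1 : ((n + 1 : ℕ) : ℝ) = 1 + (n : ℝ) := by push_cast; ring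
      rw [h1]
      calc M (1 + (n:ℝ)) - m (1 + (n:ℝ)) ≤ (1 - δ) * (M n - m n) := hosc n
        _ ≤ (1 - δ) * ((1 - δ) ^ n * (M 0 - m 0)) :=
            mul_le_mul_of_nonneg_left ih (by linarith)
        _ = (1 - δ) ^ (n + 1) * (M 0 - m 0) := by ring
  -- monotone bounded sequences
  have hmn_mono : ∀ p q : ℕ, p ≤ q → m p ≤ m q := by
    intro p q hpq
    have : ((q:ℝ)) = ((q:ℝ) - (p:ℝ)) + (p:ℝ) := by ring
    rw [this]
    exact hmmono _ _ (by have := (Nat.cast_le (α := ℝ)).2 hpq; linarith)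
  have hMn_mono : ∀ p q : ℕ, p ≤ q → M q ≤ M p := by
    intro p q hpq
    have : ((q:ℝ)) = ((q:ℝ) - (p:ℝ)) + (p:ℝ) := by ring
    rw [this]
    exact hMmono _ _ (by have := (Nat.cast_le (α := ℝ)).2 hpq; linarith)
  have hcross : ∀ p q : ℕ, m p ≤ M q := by
    intro p q
    rcases le_total p q with h | h
    · exact (hmn_mono p q h).trans (hmM q)
    · exact (hmM p).trans (hMn_mono q p h)
  have hbdd : BddAbove (Set.range fun n : ℕ => m n) := by
    refine ⟨M 0, ?_⟩
    rintro y ⟨n, rfl⟩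
    simpa using hcross n 0
  set α : ℝ := ⨆ n : ℕ, m n with hαdef
  have hαub : ∀ n : ℕ, m n ≤ α := fun n => le_ciSup hbdd n
  have hαlb : ∀ n : ℕ, α ≤ M n := fun n => ciSup_le fun k => hcross k n
  refine ⟨α, ?_⟩
  rw [tendsto_pi_nhds]
  intro i
  rw [Metric.tendsto_atTop]
  intro ε hε
  -- choose n with (1-δ)^n * (M 0 - m 0) < ε
  have hgeo : Filter.Tendsto (fun n : ℕ => (1 - δ) ^ n * (M 0 - m 0)) Filter.atTop (nhds 0) := by
    have h0 : Filter.Tendsto (fun n : ℕ => (1 - δ) ^ n) Filter.atTop (nhds 0) :=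
      tendsto_pow_atTop_nhds_zero_of_lt_one (by linarith) (by linarith)
    simpa using h0.mul_const (M 0 - m 0)
  obtain ⟨n, hn⟩ := (Filter.eventually_atTop.1 (hgeo.eventually (gt_mem_nhds hε))).imp
    (fun n h => h n le_rfl)
  refine ⟨(n : ℝ), fun t ht => ?_⟩
  have hxm : m n ≤ x t i := by
    have : t = (t - (n:ℝ)) + (n:ℝ) := by ring
    rw [this]
    exact hlb _ _ (by linarith) i
  have hxM : x t i ≤ M n := by
    have : t = (t - (n:ℝ)) + (n:ℝ) := by ring
    rw [this]
    exact hub _ _ (by linarith) i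
  have hosc' : M n - m n < ε := lt_of_le_of_lt (hoscn n) hn
  rw [Real.dist_eq, abs_sub_lt_iff]
  constructor
  · have := hαub n; linarith
  · have := hαlb n; linarith

end Main

end ConsensusAux

/-- The consensus model converges to a consensus for every initial condition if and only
if the associated graph has exactly one isolated strongly connected component. -/
theorem unconditional_consensus_iff_unique_isolated_block
    (N : ℕ) (hN : 0 < N) (a : Fin N → Fin N → ℝ) (ha : ∀ i j, 0 ≤ a i j)
    (L : Matrix (Fin N) (Fin N) ℝ)
    (hL : ∀ i j, L i j = if i = j then ∑ k ∈ Finset.univ.erase i, a i k else -(a i j)) :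
    (∀ s0 : Fin N → ℝ, ∃ α : ℝ,
        Tendsto (fun t : ℝ => (NormedSpace.exp (t • (-L))).mulVec s0) atTop
          (nhds fun _ => α))
      ↔ ∃! C : Finset (Fin N), IsolatedSCC a C := by
  haveI : Nonempty (Fin N) := ⟨⟨0, hN⟩⟩
  constructor
  · intro hconv
    obtain ⟨C, hC, -⟩ := ConsensusAux.exists_isolated_subset a ha (Classical.arbitrary _)
    refine ⟨C, hC, fun C' hC' => ?_⟩
    by_contra hne
    have hdisj : ∀ v, v ∈ C' → v ∉ C := by
      intro v hv' hv
      apply hne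
      apply Finset.Subset.antisymm
      · intro k hk
        exact ConsensusAux.IsolatedSCC.closed_reach hC ha hv (hC'.2.1 v hv' k hk)
      · intro k hk
        exact ConsensusAux.IsolatedSCC.closed_reach hC' ha hv' (hC.2.1 v hv k hk)
    obtain ⟨i₁, hi₁⟩ := hC'.1
    obtain ⟨i₂, hi₂⟩ := hC.1
    set s0 : Fin N → ℝ := fun j => if j ∈ C' then 1 else 0 with hs0
    obtain ⟨α, hα⟩ := hconv s0
    have hx1 : ∀ t : ℝ, (NormedSpace.exp (t • (-L))).mulVec s0 i₁ = 1 := by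
      intro t
      have h1 : (NormedSpace.exp (t • (-L))).mulVec s0 i₁
          = ∑ j, (NormedSpace.exp (t • (-L))) i₁ j * s0 j := by
        simp [Matrix.mulVec, dotProduct]
      have h2 : ∀ j, (NormedSpace.exp (t • (-L))) i₁ j * s0 j
          = (NormedSpace.exp (t • (-L))) i₁ j := by
        intro j
        by_cases hj : j ∈ C'
        · simp [hs0, hj]
        · rw [ConsensusAux.exp_block_zero hL C' hC'.2.2 t hi₁ hj, zero_mul]
      rw [h1, Finset.sum_congr rfl fun j _ => h2 j, ConsensusAux.exp_rowsum hL]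
    have hx2 : ∀ t : ℝ, (NormedSpace.exp (t • (-L))).mulVec s0 i₂ = 0 := by
      intro t
      have h1 : (NormedSpace.exp (t • (-L))).mulVec s0 i₂
          = ∑ j, (NormedSpace.exp (t • (-L))) i₂ j * s0 j := by
        simp [Matrix.mulVec, dotProduct]
      rw [h1]
      refine Finset.sum_eq_zero fun j _ => ?_
      by_cases hj : j ∈ C
      · have : j ∉ C' := fun h => hdisj j h hj
        simp [hs0, this]
      · rw [ConsensusAux.exp_block_zero hL C hC.2.2 t hi₂ hj, zero_mul]
    have ht1 := tendsto_pi_nhds.1 hα i₁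
    have ht2 := tendsto_pi_nhds.1 hα i₂
    have hα1 : α = 1 := tendsto_nhds_unique ht1
      (Filter.Tendsto.congr (fun t => (hx1 t).symm) tendsto_const_nhds)
    have hα0 : α = 0 := tendsto_nhds_unique ht2
      (Filter.Tendsto.congr (fun t => (hx2 t).symm) tendsto_const_nhds)
    rw [hα1] at hα0
    exact one_ne_zero hα0
  · intro huniq
    obtain ⟨C, hC, huC⟩ := huniq
    obtain ⟨j₀, hj₀⟩ := hC.1
    exact fun s0 => ConsensusAux.tendsto_consensus hN ha hL j₀
      (fun i => ConsensusAux.reach_of_unique ha hC huC i hj₀) s0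
end

section
/- The algebraic multiplicity of the eigenvalue 0 of L equals the number of isolated strongly connected components of the associated directed graph, and the geometric multiplicity equals the algebraic multiplicity. -/
open Matrix Finset

section Aux

variable {N : ℕ}

/-- A vertex is recurrent if it is influenced back by everything it influences. -/
def IsRec (a : Fin N → Fin N → ℝ) (j : Fin N) : Prop :=
  ∀ l, Influences a j l → Influences a l j

open Classical in
/-- The reach set of a vertex. -/
noncomputable def RS (a : Fin N → Fin N → ℝ) (j : Fin N) : Finset (Fin N) :=
  Finset.univ.filter (fun i => Influences a j i)

lemma mem_RS {a : Fin N → Fin N → ℝ} {j i : Fin N} : i ∈ RS a j ↔ Influences a j i := by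
  classical simp [RS]

lemma propagate {a : Fin N → Fin N → ℝ} (P : Fin N → Prop)
    (hstep : ∀ p q, P p → 0 < a p q → P q) :
    ∀ {i j}, Influences a i j → P i → P j := by
  intro i j h
  induction h with
  | refl => exact id
  | tail _ hbc ih => exact fun hi => hstep _ _ (ih hi) hbc

lemma exists_rec (a : Fin N → Fin N → ℝ) (i : Fin N) :
    ∃ j, Influences a i j ∧ IsRec a j := by
  classical
  set S := Finset.univ.filter (fun j => Influences a i j) with hS
  have hiS : i ∈ S := Finset.mem_filter.mpr ⟨Finset.mem_univ _, Relation.ReflTransGen.refl⟩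
  obtain ⟨j, hjS, hjmin⟩ := S.exists_min_image (fun j => (RS a j).card) ⟨i, hiS⟩
  have hij : Influences a i j := (Finset.mem_filter.mp hjS).2
  refine ⟨j, hij, ?_⟩
  intro l hjl
  have hlS : l ∈ S := Finset.mem_filter.mpr ⟨Finset.mem_univ _, hij.trans hjl⟩
  have hsub : RS a l ⊆ RS a j := fun m hm => mem_RS.mpr (hjl.trans (mem_RS.mp hm))
  have heq : RS a l = RS a j := Finset.eq_of_subset_of_card_le hsub (hjmin l hlS)
  have : j ∈ RS a l := heq ▸ mem_RS.mpr Relation.ReflTransGen.refl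
  exact mem_RS.mp this

variable {a : Fin N → Fin N → ℝ} {L : Matrix (Fin N) (Fin N) ℝ}

lemma mulVec_row
    (hL : ∀ i j, L i j = if i = j then ∑ k ∈ Finset.univ.erase i, a i k else -(a i j))
    (v : Fin N → ℝ) (i : Fin N) :
    L.mulVec v i = ∑ k ∈ Finset.univ.erase i, a i k * (v i - v k) := by
  have h0 : L.mulVec v i = ∑ j, L i j * v j := by
    simp [Matrix.mulVec, dotProduct]
  rw [h0, ← Finset.add_sum_erase _ (fun j => L i j * v j) (Finset.mem_univ i), hL i i,
    if_pos rfl, Finset.sum_mul, ← Finset.sum_add_distrib]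
  refine Finset.sum_congr rfl fun k hk => ?_
  have hki : k ≠ i := (Finset.mem_erase.mp hk).1
  rw [hL i k, if_neg (fun h => hki h.symm)]
  ring

lemma step_eq (ha : ∀ i j, 0 ≤ a i j)
    (hL : ∀ i j, L i j = if i = j then ∑ k ∈ Finset.univ.erase i, a i k else -(a i j))
    {v : Fin N → ℝ} {i : Fin N}
    (h0 : L.mulVec v i = 0) (hm : ∀ k, 0 < a i k → v k ≤ v i) :
    ∀ k, 0 < a i k → v k = v i := by
  have hrow := mulVec_row hL v i
  rw [h0] at hrow
  have hnn : ∀ k ∈ Finset.univ.erase i, 0 ≤ a i k * (v i - v k) := by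
    intro k _
    rcases lt_or_eq_of_le (ha i k) with hpos | hz
    · exact mul_nonneg hpos.le (sub_nonneg.mpr (hm k hpos))
    · rw [← hz, zero_mul]
  have hall := (Finset.sum_eq_zero_iff_of_nonneg hnn).mp hrow.symm
  intro k hk
  by_cases hki : k = i
  · rw [hki]
  · have h1 := hall k (Finset.mem_erase.mpr ⟨hki, Finset.mem_univ k⟩)
    have h2 : v i - v k = 0 := by
      rcases mul_eq_zero.mp h1 with h | h
      · exact absurd h (ne_of_gt hk)
      · exact h
    linarith

/-- Kernel elements vanishing at all recurrent vertices are ≤ 0. -/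
lemma ker_nonpos (ha : ∀ i j, 0 ≤ a i j)
    (hL : ∀ i j, L i j = if i = j then ∑ k ∈ Finset.univ.erase i, a i k else -(a i j))
    {w : Fin N → ℝ} (hker : ∀ p, L.mulVec w p = 0)
    (hrec : ∀ j, IsRec a j → w j = 0) (i : Fin N) : w i ≤ 0 := by
  obtain ⟨i₀, _, hmax⟩ := Finset.exists_max_image Finset.univ w ⟨i, Finset.mem_univ i⟩
  have hmax' : ∀ k, w k ≤ w i₀ := fun k => hmax k (Finset.mem_univ k)
  have hprop : ∀ {p q}, Influences a p q → w p = w i₀ → w q = w i₀ := by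
    intro p q h
    refine propagate (P := fun p => w p = w i₀) ?_ h
    intro p q hp hpq
    have hm : ∀ k, 0 < a p k → w k ≤ w p := fun k _ => (hmax' k).trans_eq hp.symm
    rw [step_eq ha hL (hker p) hm q hpq, hp]
  obtain ⟨j, hij, hrecj⟩ := exists_rec a i₀
  have hji : w j = w i₀ := hprop hij rfl
  have h0 : w i₀ = 0 := by rw [← hji, hrec j hrecj]
  calc w i ≤ w i₀ := hmax' i
    _ = 0 := h0

lemma ker_zero_rec (ha : ∀ i j, 0 ≤ a i j)
    (hL : ∀ i j, L i j = if i = j then ∑ k ∈ Finset.univ.erase i, a i k else -(a i j))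
    {w : Fin N → ℝ} (hker : ∀ p, L.mulVec w p = 0)
    (hrec : ∀ j, IsRec a j → w j = 0) : w = 0 := by
  funext i
  have h1 := ker_nonpos ha hL hker hrec i
  have h2 := ker_nonpos ha hL (w := -w)
    (fun p => by simp [Matrix.mulVec_neg, hker p])
    (fun j hj => by simp [hrec j hj]) i
  simp only [Pi.neg_apply, neg_nonpos] at h2
  exact le_antisymm h1 h2

/-- Kernel elements are constant on the reach set of a recurrent vertex. -/
lemma const_on_sink (ha : ∀ i j, 0 ≤ a i j)
    (hL : ∀ i j, L i j = if i = j then ∑ k ∈ Finset.univ.erase i, a i k else -(a i j))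
    {w : Fin N → ℝ} {j : Fin N}
    (hrecj : IsRec a j) (hker : ∀ p, L.mulVec w p = 0) :
    ∀ i, Influences a j i → w i = w j := by
  have hne : j ∈ RS a j := mem_RS.mpr Relation.ReflTransGen.refl
  obtain ⟨i₀, hi₀C, hmax⟩ := (RS a j).exists_max_image w ⟨j, hne⟩
  have hclosed : ∀ p q, p ∈ RS a j → 0 < a p q → q ∈ RS a j := by
    intro p q hp hpq
    exact mem_RS.mpr ((mem_RS.mp hp).tail hpq)
  have hprop : ∀ {p q}, Influences a p q →
      (p ∈ RS a j ∧ w p = w i₀) → (q ∈ RS a j ∧ w q = w i₀) := by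
    intro p q h
    refine propagate (P := fun p => p ∈ RS a j ∧ w p = w i₀) ?_ h
    rintro p q ⟨hpC, hpw⟩ hpq
    refine ⟨hclosed p q hpC hpq, ?_⟩
    have hm : ∀ k, 0 < a p k → w k ≤ w p := by
      intro k hk
      rw [hpw]
      exact hmax k (hclosed p k hpC hk)
    rw [step_eq ha hL (hker p) hm q hpq, hpw]
  have hkey : ∀ i ∈ RS a j, w i = w i₀ := by
    intro i hiC
    have h1 : Influences a i₀ j := hrecj i₀ (mem_RS.mp hi₀C)
    have h2 : Influences a i₀ i := h1.trans (mem_RS.mp hiC)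
    exact (hprop h2 ⟨hi₀C, rfl⟩).2
  intro i hji
  rw [hkey i (mem_RS.mpr hji), ← hkey j hne]

/-- An element of the kernel which is also in the range vanishes at recurrent vertices. -/
lemma sink_zero (ha : ∀ i j, 0 ≤ a i j)
    (hL : ∀ i j, L i j = if i = j then ∑ k ∈ Finset.univ.erase i, a i k else -(a i j))
    {u : Fin N → ℝ} {j : Fin N} (hrecj : IsRec a j)
    (hker : ∀ p, L.mulVec (L.mulVec u) p = 0) : L.mulVec u j = 0 := by
  set w := L.mulVec u with hw
  have hconst := const_on_sink ha hL hrecj hker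
  have hne : j ∈ RS a j := mem_RS.mpr Relation.ReflTransGen.refl
  have hclosed : ∀ p q, p ∈ RS a j → 0 < a p q → q ∈ RS a j := by
    intro p q hp hpq
    exact mem_RS.mpr ((mem_RS.mp hp).tail hpq)
  obtain ⟨p, hpC, hpmax⟩ := (RS a j).exists_max_image u ⟨j, hne⟩
  obtain ⟨q, hqC, hqmin⟩ := (RS a j).exists_min_image u ⟨j, hne⟩
  have hwp : 0 ≤ w p := by
    rw [hw, mulVec_row hL]
    apply Finset.sum_nonneg
    intro k _
    rcases lt_or_eq_of_le (ha p k) with hpos | hz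
    · exact mul_nonneg hpos.le (sub_nonneg.mpr (hpmax k (hclosed p k hpC hpos)))
    · rw [← hz, zero_mul]
  have hwq : w q ≤ 0 := by
    rw [hw, mulVec_row hL]
    apply Finset.sum_nonpos
    intro k _
    rcases lt_or_eq_of_le (ha q k) with hpos | hz
    · have hk : u q - u k ≤ 0 := sub_nonpos.mpr (hqmin k (hclosed q k hqC hpos))
      exact mul_nonpos_iff.mpr (Or.inl ⟨hpos.le, hk⟩)
    · rw [← hz, zero_mul]
  have h1 : w p = w j := hconst p (mem_RS.mp hpC)
  have h2 : w q = w j := hconst q (mem_RS.mp hqC)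
  linarith

lemma ker_sq (ha : ∀ i j, 0 ≤ a i j)
    (hL : ∀ i j, L i j = if i = j then ∑ k ∈ Finset.univ.erase i, a i k else -(a i j))
    {u : Fin N → ℝ} (h2 : L.mulVec (L.mulVec u) = 0) : L.mulVec u = 0 := by
  have hker : ∀ p, L.mulVec (L.mulVec u) p = 0 := fun p => by rw [h2]; rfl
  exact ker_zero_rec ha hL hker (fun j hj => sink_zero ha hL hj hker)

open Classical in
/-- The auxiliary operator used to construct harmonic extensions. -/
noncomputable def psi (a : Fin N → Fin N → ℝ) (L : Matrix (Fin N) (Fin N) ℝ) :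
    (Fin N → ℝ) →ₗ[ℝ] (Fin N → ℝ) where
  toFun v i := if IsRec a i then v i else L.mulVec v i
  map_add' u v := by
    funext i
    by_cases h : IsRec a i <;> simp [h, Matrix.mulVec_add]
  map_smul' c v := by
    funext i
    by_cases h : IsRec a i <;> simp [h, Matrix.mulVec_smul]

open Classical in
lemma psi_apply (v : Fin N → ℝ) (i : Fin N) :
    psi a L v i = if IsRec a i then v i else L.mulVec v i := rfl

lemma psi_inj (ha : ∀ i j, 0 ≤ a i j)
    (hL : ∀ i j, L i j = if i = j then ∑ k ∈ Finset.univ.erase i, a i k else -(a i j)) :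
    Function.Injective (psi a L) := by
  rw [← LinearMap.ker_eq_bot, LinearMap.ker_eq_bot']
  intro v hv
  have h1 : ∀ i, IsRec a i → v i = 0 := by
    intro i h
    have h' := congrFun hv i
    rwa [psi_apply, if_pos h] at h'
  have h2 : ∀ i, ¬IsRec a i → L.mulVec v i = 0 := by
    intro i h
    have h' := congrFun hv i
    rwa [psi_apply, if_neg h] at h'
  have key : ∀ (u : Fin N → ℝ), (∀ i, IsRec a i → u i = 0) →
      (∀ i, ¬IsRec a i → L.mulVec u i = 0) → ∀ i, u i ≤ 0 := by
    intro u hu1 hu2 i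
    by_contra hpos
    push_neg at hpos
    obtain ⟨i₀, _, hmax⟩ := Finset.exists_max_image Finset.univ u ⟨i, Finset.mem_univ i⟩
    have hmax' : ∀ k, u k ≤ u i₀ := fun k => hmax k (Finset.mem_univ k)
    have hi₀pos : 0 < u i₀ := lt_of_lt_of_le hpos (hmax' i)
    have hprop : ∀ {p q}, Influences a p q → u p = u i₀ → u q = u i₀ := by
      intro p q h
      refine propagate (P := fun p => u p = u i₀) ?_ h
      intro p q hp hpq
      have hnr : ¬IsRec a p := by
        intro hr
        rw [hu1 p hr] at hp
        exact absurd hp.symm (ne_of_gt hi₀pos)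
      have hm : ∀ k, 0 < a p k → u k ≤ u p := fun k _ => (hmax' k).trans_eq hp.symm
      rw [step_eq ha hL (hu2 p hnr) hm q hpq, hp]
    obtain ⟨j, hij, hrecj⟩ := exists_rec a i₀
    have hji : u j = u i₀ := hprop hij rfl
    rw [hu1 j hrecj] at hji
    exact absurd hji.symm (ne_of_gt hi₀pos)
  have hle := key v h1 h2
  have hge := key (-v) (fun i h => by simp [h1 i h])
    (fun i h => by simp [Matrix.mulVec_neg, h2 i h])
  funext i
  have h3 := hge i
  simp only [Pi.neg_apply, neg_nonpos] at h3
  exact le_antisymm (hle i) h3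

lemma isolated_RS (ha : ∀ i j, 0 ≤ a i j) {j : Fin N} (hj : IsRec a j) :
    IsolatedSCC a (RS a j) := by
  refine ⟨⟨j, mem_RS.mpr Relation.ReflTransGen.refl⟩, ?_, ?_⟩
  · intro p hp q hq
    exact (hj p (mem_RS.mp hp)).trans (mem_RS.mp hq)
  · intro p hp q hq
    by_contra hne
    have hpos : 0 < a p q := lt_of_le_of_ne (ha p q) (Ne.symm hne)
    exact hq (mem_RS.mpr ((mem_RS.mp hp).tail hpos))

lemma isolated_eq_RS (ha : ∀ i j, 0 ≤ a i j) {C : Finset (Fin N)}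
    (hC : IsolatedSCC a C) {j : Fin N} (hj : j ∈ C) :
    IsRec a j ∧ C = RS a j := by
  obtain ⟨_, hmut, hclosed⟩ := hC
  have hsub : ∀ {p q}, Influences a p q → p ∈ C → q ∈ C := by
    intro p q h
    refine propagate (P := (· ∈ C)) ?_ h
    intro p q hp hpq
    by_contra hq
    exact absurd (hclosed p hp q hq) (ne_of_gt hpq)
  constructor
  · intro l hl
    exact hmut _ (hsub hl hj) j hj
  · ext i
    rw [mem_RS]
    exact ⟨fun hi => hmut j hj i hi, fun hi => hsub hi hj⟩

lemma rec_of_mem (ha : ∀ i j, 0 ≤ a i j) {j k : Fin N}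
    (hj : IsRec a j) (hk : k ∈ RS a j) : IsRec a k ∧ RS a k = RS a j := by
  have h := isolated_eq_RS ha (isolated_RS ha hj) hk
  exact ⟨h.1, h.2.symm⟩

end Aux

/-- The algebraic multiplicity of the zero eigenvalue of `L` equals the number of isolated
strongly connected components, and equals its geometric multiplicity. -/
theorem zero_multiplicity_eq_number_of_isolated_blocks
    (N : ℕ) (a : Fin N → Fin N → ℝ) (ha : ∀ i j, 0 ≤ a i j)
    (L : Matrix (Fin N) (Fin N) ℝ)
    (hL : ∀ i j, L i j = if i = j then ∑ k ∈ Finset.univ.erase i, a i k else -(a i j)) :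
    Polynomial.rootMultiplicity 0 L.charpoly
        = {C : Finset (Fin N) | IsolatedSCC a C}.ncard ∧
      Module.finrank ℝ (LinearMap.ker L.mulVecLin)
        = Polynomial.rootMultiplicity 0 L.charpoly := by
  classical
  set f := L.mulVecLin with hf
  -- kernel stabilization
  have hker2 : ∀ u : Fin N → ℝ, f (f u) = 0 → f u = 0 := by
    intro u h
    have h' : L.mulVec (L.mulVec u) = 0 := by
      rw [← Matrix.mulVecLin_apply, ← Matrix.mulVecLin_apply]
      exact h
    rw [hf, Matrix.mulVecLin_apply]
    exact ker_sq ha hL h'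
  have hpow : ∀ (k : ℕ) (m : Fin N → ℝ), (f ^ k) m = 0 → f m = 0 := by
    intro k
    induction k with
    | zero =>
      intro m hm
      rw [pow_zero, Module.End.one_apply] at hm
      rw [hm, map_zero]
    | succ n ih =>
      intro m hm
      rw [pow_succ, Module.End.mul_apply] at hm
      exact hker2 m (ih (f m) hm)
  have hmax : Module.End.maxGenEigenspace f 0 = LinearMap.ker f := by
    ext m
    rw [Module.End.mem_maxGenEigenspace, LinearMap.mem_ker]
    simp only [zero_smul, sub_zero]
    exact ⟨fun ⟨k, hk⟩ => hpow k m hk, fun h => ⟨1, by rwa [pow_one]⟩⟩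
  -- characteristic polynomial side
  have hcp : L.charpoly = LinearMap.charpoly f := by
    have h1 : LinearMap.toMatrix (Pi.basisFun ℝ (Fin N)) (Pi.basisFun ℝ (Fin N)) f = L := by
      rw [LinearMap.toMatrix_eq_toMatrix', hf, ← Matrix.toLin'_apply' L,
        LinearMap.toMatrix'_toLin']
    rw [← h1, LinearMap.charpoly_toMatrix]
  have halg : Polynomial.rootMultiplicity 0 L.charpoly
      = Module.finrank ℝ (LinearMap.ker f) := by
    rw [Polynomial.rootMultiplicity_eq_natTrailingDegree', hcp,
      ← LinearMap.finrank_maxGenEigenspace_zero_eq, hmax]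
  -- counting the kernel dimension
  have hSfin : {C : Finset (Fin N) | IsolatedSCC a C}.Finite := Set.toFinite _
  set T : Finset (Finset (Fin N)) := hSfin.toFinset with hT
  have hmemT : ∀ {C}, C ∈ T ↔ IsolatedSCC a C := fun {C} => by
    rw [hT, Set.Finite.mem_toFinset]
    exact Iff.rfl
  have hrepC : ∀ C : T, (C : Finset (Fin N)).Nonempty := fun C => (hmemT.mp C.2).1
  set rep : T → Fin N := fun C => (C : Finset (Fin N)).min' (hrepC C) with hrep
  have hrepmem : ∀ C : T, rep C ∈ (C : Finset (Fin N)) := fun C => Finset.min'_mem _ _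
  set Φ : (LinearMap.ker f) →ₗ[ℝ] (T → ℝ) :=
    { toFun := fun w C => (w : Fin N → ℝ) (rep C)
      map_add' := fun u v => by funext C; simp
      map_smul' := fun c v => by funext C; simp } with hΦ
  have hΦapply : ∀ (w : LinearMap.ker f) (C : T), Φ w C = (w : Fin N → ℝ) (rep C) :=
    fun w C => rfl
  have hrowker : ∀ w : LinearMap.ker f, ∀ p, L.mulVec (w : Fin N → ℝ) p = 0 := by
    intro w p
    have h0 : f (w : Fin N → ℝ) = 0 := w.2
    have h1 : L.mulVec (w : Fin N → ℝ) = 0 := by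
      rw [← Matrix.mulVecLin_apply]; exact h0
    exact congrFun h1 p
  have hΦinj : Function.Injective Φ := by
    rw [← LinearMap.ker_eq_bot, LinearMap.ker_eq_bot']
    intro w hw
    have hrec0 : ∀ j, IsRec a j → (w : Fin N → ℝ) j = 0 := by
      intro j hj
      have hCT : RS a j ∈ T := hmemT.mpr (isolated_RS ha hj)
      have h0 : (w : Fin N → ℝ) (rep ⟨RS a j, hCT⟩) = 0 := by
        rw [← hΦapply w ⟨RS a j, hCT⟩, hw]
        rfl
      have hm : rep ⟨RS a j, hCT⟩ ∈ RS a j := hrepmem ⟨RS a j, hCT⟩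
      have hc := const_on_sink ha hL hj (hrowker w) (rep ⟨RS a j, hCT⟩) (mem_RS.mp hm)
      rw [← hc, h0]
    have hz : (w : Fin N → ℝ) = 0 := ker_zero_rec ha hL (hrowker w) hrec0
    exact Subtype.ext hz
  have hpsi_surj : Function.Surjective (psi a L) :=
    LinearMap.injective_iff_surjective.mp (psi_inj ha hL)
  have hΦsurj : Function.Surjective Φ := by
    intro c
    set t : Fin N → ℝ :=
      fun i => if h : IsRec a i then c ⟨RS a i, hmemT.mpr (isolated_RS ha h)⟩ else 0 with ht
    obtain ⟨v, hv⟩ := hpsi_surj t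
    have hv1 : ∀ i (h : IsRec a i), v i = c ⟨RS a i, hmemT.mpr (isolated_RS ha h)⟩ := by
      intro i h
      have h' := congrFun hv i
      rw [psi_apply, if_pos h] at h'
      rw [h']
      simp only [ht]
      rw [dif_pos h]
    have hv2 : ∀ i, ¬IsRec a i → L.mulVec v i = 0 := by
      intro i h
      have h' := congrFun hv i
      rw [psi_apply, if_neg h] at h'
      rw [h']
      simp only [ht]
      rw [dif_neg h]
    have hconstC : ∀ {j k}, IsRec a j → 0 < a j k → v k = v j := by
      intro j k hj hk
      have hkC : k ∈ RS a j := mem_RS.mpr (Relation.ReflTransGen.single hk)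
      obtain ⟨hreck, hRSk⟩ := rec_of_mem ha hj hkC
      rw [hv1 k hreck, hv1 j hj]
      congr 1
      exact Subtype.ext (by simpa using hRSk)
    have hvker : f v = 0 := by
      funext p
      rw [hf, Matrix.mulVecLin_apply]
      show L.mulVec v p = (0 : Fin N → ℝ) p
      by_cases h : IsRec a p
      · rw [mulVec_row hL]
        show _ = (0 : ℝ)
        apply Finset.sum_eq_zero
        intro k _
        rcases lt_or_eq_of_le (ha p k) with hpos | hz
        · rw [hconstC h hpos]; ring
        · rw [← hz]; ring
      · rw [hv2 p h]; rfl
    refine ⟨⟨v, LinearMap.mem_ker.mpr hvker⟩, ?_⟩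
    funext C
    rw [hΦapply]
    obtain ⟨hrecj, hCeq⟩ := isolated_eq_RS ha (hmemT.mp C.2) (hrepmem C)
    show v (rep C) = c C
    rw [hv1 (rep C) hrecj]
    congr 1
    refine Subtype.ext ?_
    show RS a (rep C) = (C : Finset (Fin N))
    rw [← hCeq]
  have hdim : Module.finrank ℝ (LinearMap.ker f) = T.card := by
    rw [(LinearEquiv.ofBijective Φ ⟨hΦinj, hΦsurj⟩).finrank_eq]
    rw [Module.finrank_pi]
    exact Fintype.card_coe T
  have hncard : {C : Finset (Fin N) | IsolatedSCC a C}.ncard = T.card := by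
    rw [Set.ncard_eq_toFinset_card _ hSfin]
  constructor
  · rw [halg, hdim, hncard]
  · exact halg.symm
end

section
/- Given real numbers s₁(0), ..., s_N(0) and any s* in the convex hull of {s₁(0), ..., s_N(0)}, there exists a matrix L of consensus type such that the solution of s' = -L s with this initial condition satisfies s(t) → s*·1 as t → ∞. -/
open Matrix Finset Filter

lemma exp_mulVec_eigen {N : ℕ} (A : Matrix (Fin N) (Fin N) ℝ) (v : Fin N → ℝ) (c : ℝ)
    (h : A.mulVec v = c • v) :
    (NormedSpace.exp A).mulVec v = Real.exp c • v := by
  letI : SeminormedRing (Matrix (Fin N) (Fin N) ℝ) := Matrix.linftyOpSemiNormedRing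
  letI : NormedRing (Matrix (Fin N) (Fin N) ℝ) := Matrix.linftyOpNormedRing
  letI : NormedAlgebra ℝ (Matrix (Fin N) (Fin N) ℝ) := Matrix.linftyOpNormedAlgebra
  have hpow : ∀ n : ℕ, (A ^ n).mulVec v = c ^ n • v := by
    intro n
    induction n with
    | zero => simp
    | succ n ih =>
        rw [pow_succ, ← Matrix.mulVec_mulVec, h, Matrix.mulVec_smul, ih]
        rw [smul_smul, pow_succ, mul_comm]
  have hs : HasSum (fun n : ℕ => ((n.factorial : ℝ)⁻¹ • A ^ n)) (NormedSpace.exp A) :=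
    NormedSpace.exp_series_hasSum_exp' A
  let f : Matrix (Fin N) (Fin N) ℝ →ₗ[ℝ] (Fin N → ℝ) :=
    { toFun := fun M => M.mulVec v
      map_add' := fun M M' => Matrix.add_mulVec M M' v
      map_smul' := fun r M => (Matrix.smul_mulVec r M v) }
  have hf : Continuous f := LinearMap.continuous_of_finiteDimensional f
  have hs2 : HasSum (fun n : ℕ => f ((n.factorial : ℝ)⁻¹ • A ^ n)) (f (NormedSpace.exp A)) :=
    hs.map f hf
  have heq : ∀ n : ℕ, f ((n.factorial : ℝ)⁻¹ • A ^ n) = ((n.factorial : ℝ)⁻¹ • c ^ n) • v := by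
    intro n
    simp only [f, LinearMap.coe_mk, AddHom.coe_mk, Matrix.smul_mulVec, hpow, smul_smul,
      smul_eq_mul]
  rw [funext heq] at hs2
  have hs3 : HasSum (fun n : ℕ => ((n.factorial : ℝ)⁻¹ • c ^ n) • v) (Real.exp c • v) := by
    have := (NormedSpace.exp_series_hasSum_exp' (𝕂 := ℝ) c).smul_const v
    rwa [← Real.exp_eq_exp_ℝ] at this
  exact hs2.unique hs3

/-- Consensus as a control problem: for any initial opinions and any target `s*` in the
convex hull of the initial opinions, there is a consensus-type matrix `L` whose dynamics
drive every opinion to `s*`. -/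
theorem control_to_any_target_in_convex_hull
    (N : ℕ) (hN : 0 < N) (s0 : Fin N → ℝ) (sstar : ℝ)
    (hstar : sstar ∈ convexHull ℝ (Set.range s0)) :
    ∃ (a : Fin N → Fin N → ℝ) (L : Matrix (Fin N) (Fin N) ℝ),
      (∀ i j, 0 ≤ a i j) ∧
      (∀ i j, L i j = if i = j then ∑ k ∈ Finset.univ.erase i, a i k else -(a i j)) ∧
      Tendsto (fun t : ℝ => (NormedSpace.exp (t • (-L))).mulVec s0) atTop
        (nhds fun _ => sstar) := by
  -- extract weights
  rw [convexHull_range_eq_exists_affineCombination] at hstar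
  obtain ⟨s, w0, hw0, hsum0, hcomb0⟩ := hstar
  set w : Fin N → ℝ := fun i => if i ∈ s then w0 i else 0 with hw_def
  have hw : ∀ i, 0 ≤ w i := by
    intro i; by_cases hi : i ∈ s <;> simp [hw_def, hi, hw0 i]
  have hsum : ∑ i, w i = 1 := by
    rw [hw_def, Finset.sum_ite_mem, Finset.univ_inter, hsum0]
  have hcomb : ∑ i, w i * s0 i = sstar := by
    rw [s.affineCombination_eq_linear_combination s0 w0 hsum0] at hcomb0
    rw [← hcomb0, hw_def]
    rw [← Finset.sum_subset (Finset.subset_univ s)]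
    · exact Finset.sum_congr rfl fun i hi => by simp [hi]
    · intro i _ hi; simp [hi]
  -- define a and L
  refine ⟨fun _ j => w j, Matrix.of fun i j =>
      if i = j then ∑ k ∈ Finset.univ.erase i, w k else -(w j), fun i j => hw j,
      fun i j => rfl, ?_⟩
  set L : Matrix (Fin N) (Fin N) ℝ := Matrix.of fun i j =>
      if i = j then ∑ k ∈ Finset.univ.erase i, w k else -(w j) with hL
  -- key computations
  have hrow : ∀ i, ∑ k ∈ Finset.univ.erase i, w k = 1 - w i := by
    intro i
    rw [← Finset.sum_erase_add _ _ (Finset.mem_univ i)] at hsum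
    linarith
  have hmul : ∀ u : Fin N → ℝ, L.mulVec u = fun i => u i - ∑ j, w j * u j := by
    intro u
    funext i
    simp only [Matrix.mulVec, dotProduct, hL, Matrix.of_apply]
    rw [← Finset.sum_erase_add _ _ (Finset.mem_univ i)]
    rw [← Finset.sum_erase_add _ (fun j => w j * u j) (Finset.mem_univ i)]
    have h1 : ∑ j ∈ Finset.univ.erase i, (if i = j then ∑ k ∈ Finset.univ.erase i, w k
        else -(w j)) * u j = ∑ j ∈ Finset.univ.erase i, -(w j * u j) := by
      refine Finset.sum_congr rfl fun j hj => ?_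
      have : i ≠ j := fun h => (Finset.mem_erase.mp hj).1 h.symm
      simp [this]
    rw [h1, if_pos rfl, hrow i, Finset.sum_neg_distrib]
    ring
  -- eigen-decompose s0
  set u : Fin N → ℝ := fun i => s0 i - sstar with hu
  have hwu : ∑ j, w j * u j = 0 := by
    simp only [hu, mul_sub]
    rw [Finset.sum_sub_distrib, hcomb, ← Finset.sum_mul, hsum]
    ring
  have hone : ∀ t : ℝ, (t • (-L)).mulVec (fun _ => sstar) = (0:ℝ) • (fun _ => sstar) := by
    intro t
    rw [Matrix.smul_mulVec, Matrix.neg_mulVec, hmul]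
    funext i
    simp only [Pi.smul_apply, Pi.neg_apply, smul_eq_mul, zero_mul]
    have : ∑ j, w j * sstar = sstar := by rw [← Finset.sum_mul, hsum, one_mul]
    rw [this]; ring
  have heig : ∀ t : ℝ, (t • (-L)).mulVec u = (-t) • u := by
    intro t
    rw [Matrix.smul_mulVec, Matrix.neg_mulVec, hmul]
    funext i
    simp only [Pi.smul_apply, Pi.neg_apply, smul_eq_mul, hwu]
    ring
  have hs0 : s0 = u + (fun _ => sstar) := by funext i; simp [hu]
  have key : ∀ t : ℝ, (NormedSpace.exp (t • (-L))).mulVec s0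
      = fun i => Real.exp (-t) * u i + sstar := by
    intro t
    rw [hs0, Matrix.mulVec_add, exp_mulVec_eigen _ _ _ (heig t),
      exp_mulVec_eigen _ _ _ (hone t)]
    funext i
    simp [Real.exp_zero]
  rw [funext key]
  rw [tendsto_pi_nhds]
  intro i
  have : Tendsto (fun t : ℝ => Real.exp (-t) * u i + sstar) atTop (nhds (0 * u i + sstar)) := by
    exact ((Real.tendsto_exp_neg_atTop_nhds_zero.mul_const (u i)).add_const sstar)
  simpa using this
end

section
/- For the embedded Markov chain of the stochastic consensus model on a directed graph with exactly one isolated strongly connected component, from any initial opinion vector the chain reaches a consensus state (all coordinates equal) in finitely many steps with probability 1; i.e., the chain is absorbed at a consensus state almost surely. -/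
open Matrix Finset Filter

/-- Transition operator of the embedded Markov chain of the stochastic consensus model:
`(markovStep a f) S = E[f(S¹) | S⁰ = S]`, where with probability `a i j / σ`
(`σ = Σ_{i≠j} a i j`) the opinion `S i` jumps to `S j`. -/
noncomputable def markovStep {N : ℕ} (a : Fin N → Fin N → ℝ)
    (f : (Fin N → ℝ) → ℝ) (S : Fin N → ℝ) : ℝ :=
  ∑ i, ∑ j ∈ Finset.univ.erase i,
    (a i j / ∑ p, ∑ q ∈ Finset.univ.erase p, a p q) * f (Function.update S i (S j))

namespace SCAux

variable {N : ℕ} {a : Fin N → Fin N → ℝ}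

/-! ### Graph-theoretic part -/

lemma exists_root (ha : ∀ i j, 0 ≤ a i j) (hunique : ∃! C : Finset (Fin N), IsolatedSCC a C) :
    ∃ i0 : Fin N, ∀ i, Influences a i i0 := by
  classical
  obtain ⟨C, hC, huniq⟩ := hunique
  obtain ⟨⟨i0, hi0⟩, hcc, hiso⟩ := hC
  refine ⟨i0, fun i => ?_⟩
  set R : Fin N → Finset (Fin N) := fun k => Finset.univ.filter (fun l => Influences a k l)
    with hR
  have hmemR : ∀ k l, l ∈ R k ↔ Influences a k l := by intro k l; simp [hR]
  obtain ⟨j, hj, hjmin⟩ := Finset.exists_min_image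
    (Finset.univ.filter (fun k => Influences a i k)) (fun k => (R k).card)
    ⟨i, by exact Finset.mem_filter.2 ⟨Finset.mem_univ _, Relation.ReflTransGen.refl⟩⟩
  rw [Finset.mem_filter] at hj
  have hij : Influences a i j := hj.2
  have hscc : IsolatedSCC a (R j) := by
    refine ⟨⟨j, (hmemR j j).2 Relation.ReflTransGen.refl⟩, ?_, ?_⟩
    · intro k hk l hl
      rw [hmemR] at hk hl
      have hsub : R k ⊆ R j := fun x hx => (hmemR j x).2 (hk.trans ((hmemR k x).1 hx))
      have hik : Influences a i k := hij.trans hk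
      have hcard : (R j).card ≤ (R k).card :=
        hjmin k (Finset.mem_filter.2 ⟨Finset.mem_univ k, hik⟩)
      have heq : R k = R j := Finset.eq_of_subset_of_card_le hsub hcard
      have hl' : l ∈ R k := heq ▸ ((hmemR j l).2 hl)
      exact (hmemR k l).1 hl'
    · intro k hk q hq
      by_contra h
      have hpos : 0 < a k q := lt_of_le_of_ne (ha k q) (Ne.symm h)
      exact hq ((hmemR j q).2 (((hmemR j k).1 hk).trans (Relation.ReflTransGen.single hpos)))
  have hCR : R j = C := huniq _ hscc
  have hi0R : i0 ∈ R j := hCR ▸ hi0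
  exact hij.trans ((hmemR j i0).1 hi0R)

lemma crossing {T : Finset (Fin N)} {i0 : Fin N} (hi0 : i0 ∈ T) :
    ∀ x, Influences a x i0 → x ∉ T → ∃ w, w ∉ T ∧ ∃ u ∈ T, 0 < a w u := by
  intro x hx
  induction hx using Relation.ReflTransGen.head_induction_on with
  | refl => exact fun h => absurd hi0 h
  | @head x y h' h ih =>
    intro hxT
    by_cases hy : y ∈ T
    · exact ⟨x, hxT, y, hy, h'⟩
    · exact ih hy

/-- A list of valid moves setting exactly the coordinates in `T` to `S i0`. -/
def MoveList (a : Fin N → Fin N → ℝ) (i0 : Fin N) (T : Finset (Fin N))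
    (L : List (Fin N × Fin N)) : Prop :=
  (∀ p ∈ L, p.1 ≠ p.2 ∧ 0 < a p.1 p.2) ∧
  ∀ S : Fin N → ℝ,
    (∀ v ∈ T, L.foldl (fun s p => Function.update s p.1 (s p.2)) S v = S i0) ∧
    (∀ v, v ∉ T → L.foldl (fun s p => Function.update s p.1 (s p.2)) S v = S v)

lemma moveList_insert {i0 : Fin N} {T : Finset (Fin N)} {L : List (Fin N × Fin N)}
    (hML : MoveList a i0 T L) {w u : Fin N} (hw : w ∉ T) (hu : u ∈ T) (hwu : 0 < a w u) :
    MoveList a i0 (insert w T) (L ++ [(w, u)]) := by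
  obtain ⟨hval, hinv⟩ := hML
  constructor
  · intro p hp
    rcases List.mem_append.1 hp with h | h
    · exact hval p h
    · have : p = (w, u) := by simpa using h
      subst this
      refine ⟨fun h => hw ?_, hwu⟩
      have : w = u := h
      exact this ▸ hu
  · intro S
    obtain ⟨h1, h2⟩ := hinv S
    have hfold : ∀ v, (L ++ [(w, u)]).foldl (fun s p => Function.update s p.1 (s p.2)) S v
        = Function.update (L.foldl (fun s p => Function.update s p.1 (s p.2)) S) w
            ((L.foldl (fun s p => Function.update s p.1 (s p.2)) S) u) v := by
      intro v; rw [List.foldl_append]; rfl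
    constructor
    · intro v hv
      rcases Finset.mem_insert.1 hv with rfl | hv
      · rw [hfold, Function.update_self]; exact h1 u hu
      · rw [hfold, Function.update_of_ne (fun h : v = w => hw (by rw [← h]; exact hv))]
        exact h1 v hv
    · intro v hv
      rw [Finset.mem_insert] at hv
      push_neg at hv
      rw [hfold, Function.update_of_ne hv.1]
      exact h2 v hv.2

lemma moveList_complete {i0 : Fin N} (hroot : ∀ i, Influences a i i0) :
    ∀ k (T : Finset (Fin N)) (L : List (Fin N × Fin N)), i0 ∈ T → MoveList a i0 T L →
      (Finset.univ \ T).card ≤ k → ∃ L', MoveList a i0 Finset.univ L' := by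
  intro k
  induction k with
  | zero =>
    intro T L hi0 hML hcard
    have : Finset.univ \ T = ∅ := Finset.card_eq_zero.1 (Nat.le_zero.1 hcard)
    have hT : T = Finset.univ :=
      Finset.eq_univ_of_forall fun x => by
        by_contra hx
        exact absurd (Finset.mem_sdiff.2 ⟨Finset.mem_univ x, hx⟩) (by simp [this])
    exact ⟨L, hT ▸ hML⟩
  | succ k ih =>
    intro T L hi0 hML hcard
    by_cases hT : T = Finset.univ
    · exact ⟨L, hT ▸ hML⟩
    · have hx : ∃ x, x ∉ T := by
        by_contra h
        push_neg at h
        exact hT (Finset.eq_univ_of_forall h)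
      obtain ⟨x, hxT⟩ := hx
      obtain ⟨w, hw, u, hu, hwu⟩ := crossing hi0 x (hroot x) hxT
      have hML' := moveList_insert hML hw hu hwu
      have heq : Finset.univ \ insert w T = (Finset.univ \ T).erase w := by
        ext y; simp only [Finset.mem_sdiff, Finset.mem_erase, Finset.mem_insert,
          Finset.mem_univ, true_and]
        tauto
      have hcard' : (Finset.univ \ insert w T).card ≤ k := by
        rw [heq, Finset.card_erase_of_mem (Finset.mem_sdiff.2 ⟨Finset.mem_univ w, hw⟩)]
        omega
      exact ih (insert w T) (L ++ [(w, u)]) (Finset.mem_insert_of_mem hi0) hML' hcard'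

lemma exists_moveList {i0 : Fin N} (hroot : ∀ i, Influences a i i0) :
    ∃ L : List (Fin N × Fin N), (∀ p ∈ L, p.1 ≠ p.2 ∧ 0 < a p.1 p.2) ∧
      ∀ S : Fin N → ℝ, ∀ i j,
        L.foldl (fun s p => Function.update s p.1 (s p.2)) S i =
        L.foldl (fun s p => Function.update s p.1 (s p.2)) S j := by
  have hbase : MoveList a i0 {i0} [] := by
    refine ⟨by simp, fun S => ⟨?_, fun v _ => rfl⟩⟩
    intro v hv
    rw [Finset.mem_singleton] at hv
    subst hv; rfl
  obtain ⟨L, hval, hinv⟩ :=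
    moveList_complete hroot (Finset.univ \ {i0}).card {i0} [] (Finset.mem_singleton_self i0)
      hbase le_rfl
  refine ⟨L, hval, fun S i j => ?_⟩
  rw [(hinv S).1 i (Finset.mem_univ i), (hinv S).1 j (Finset.mem_univ j)]

/-! ### Analytic part -/

lemma sum_w (hσ : 0 < ∑ p, ∑ q ∈ Finset.univ.erase p, a p q) :
    ∑ i, ∑ j ∈ Finset.univ.erase i,
      (a i j / ∑ p, ∑ q ∈ Finset.univ.erase p, a p q) = 1 := by
  simp only [← Finset.sum_div]
  exact div_self hσ.ne'

lemma w_nonneg (ha : ∀ i j, 0 ≤ a i j)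
    (hσ : 0 < ∑ p, ∑ q ∈ Finset.univ.erase p, a p q) (i j : Fin N) :
    0 ≤ a i j / ∑ p, ∑ q ∈ Finset.univ.erase p, a p q :=
  div_nonneg (ha i j) hσ.le

lemma step_nonneg (ha : ∀ i j, 0 ≤ a i j)
    (hσ : 0 < ∑ p, ∑ q ∈ Finset.univ.erase p, a p q)
    {g : (Fin N → ℝ) → ℝ} (hg : ∀ S, 0 ≤ g S) (S : Fin N → ℝ) :
    0 ≤ markovStep a g S :=
  Finset.sum_nonneg fun i _ => Finset.sum_nonneg fun j _ =>
    mul_nonneg (w_nonneg ha hσ i j) (hg _)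

lemma step_mono (ha : ∀ i j, 0 ≤ a i j)
    (hσ : 0 < ∑ p, ∑ q ∈ Finset.univ.erase p, a p q)
    {g h : (Fin N → ℝ) → ℝ} (hgh : ∀ S, g S ≤ h S) (S : Fin N → ℝ) :
    markovStep a g S ≤ markovStep a h S :=
  Finset.sum_le_sum fun i _ => Finset.sum_le_sum fun j _ =>
    mul_le_mul_of_nonneg_left (hgh _) (w_nonneg ha hσ i j)

lemma iter_mono (ha : ∀ i j, 0 ≤ a i j)
    (hσ : 0 < ∑ p, ∑ q ∈ Finset.univ.erase p, a p q)
    {g h : (Fin N → ℝ) → ℝ} (hgh : ∀ S, g S ≤ h S) (n : ℕ) (S : Fin N → ℝ) :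
    (markovStep a)^[n] g S ≤ (markovStep a)^[n] h S := by
  induction n generalizing g h with
  | zero => exact hgh S
  | succ n ih =>
    rw [Function.iterate_succ_apply, Function.iterate_succ_apply]
    exact ih (fun T => step_mono ha hσ hgh T)

lemma iter_nonneg (ha : ∀ i j, 0 ≤ a i j)
    (hσ : 0 < ∑ p, ∑ q ∈ Finset.univ.erase p, a p q)
    {g : (Fin N → ℝ) → ℝ} (hg : ∀ S, 0 ≤ g S) (n : ℕ) (S : Fin N → ℝ) :
    0 ≤ (markovStep a)^[n] g S := by
  induction n generalizing g with
  | zero => exact hg S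
  | succ n ih =>
    rw [Function.iterate_succ_apply]
    exact ih (fun T => step_nonneg ha hσ hg T)

lemma step_le_one (ha : ∀ i j, 0 ≤ a i j)
    (hσ : 0 < ∑ p, ∑ q ∈ Finset.univ.erase p, a p q)
    {g : (Fin N → ℝ) → ℝ} (hg : ∀ S, g S ≤ 1) (S : Fin N → ℝ) :
    markovStep a g S ≤ 1 := by
  have h := step_mono ha hσ (h := fun _ => 1) hg S
  have h2 : markovStep a (fun _ : Fin N → ℝ => (1 : ℝ)) S = 1 := by
    unfold markovStep
    simp only [mul_one]
    exact sum_w hσ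
  linarith

lemma iter_le_one (ha : ∀ i j, 0 ≤ a i j)
    (hσ : 0 < ∑ p, ∑ q ∈ Finset.univ.erase p, a p q)
    {g : (Fin N → ℝ) → ℝ} (hg : ∀ S, g S ≤ 1) (n : ℕ) (S : Fin N → ℝ) :
    (markovStep a)^[n] g S ≤ 1 := by
  induction n generalizing g with
  | zero => exact hg S
  | succ n ih =>
    rw [Function.iterate_succ_apply]
    exact ih (fun T => step_le_one ha hσ hg T)

lemma step_fix (hσ : 0 < ∑ p, ∑ q ∈ Finset.univ.erase p, a p q)
    {g : (Fin N → ℝ) → ℝ} {S : Fin N → ℝ} (hS : ∀ i j, S i = S j) :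
    markovStep a g S = g S := by
  unfold markovStep
  have h1 : ∀ i j : Fin N, Function.update S i (S j) = S := by
    intro i j
    rw [hS j i, Function.update_eq_self]
  simp only [h1, ← Finset.sum_mul]
  rw [sum_w hσ, one_mul]

lemma iter_fix (hσ : 0 < ∑ p, ∑ q ∈ Finset.univ.erase p, a p q)
    {g : (Fin N → ℝ) → ℝ} {S : Fin N → ℝ} (hS : ∀ i j, S i = S j) (n : ℕ) :
    (markovStep a)^[n] g S = g S := by
  induction n with
  | zero => rfl
  | succ n ih => rw [Function.iterate_succ_apply', step_fix hσ hS, ih]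

lemma step_affine (hσ : 0 < ∑ p, ∑ q ∈ Finset.univ.erase p, a p q)
    (c b : ℝ) (g : (Fin N → ℝ) → ℝ) (S : Fin N → ℝ) :
    markovStep a (fun T => c + b * g T) S = c + b * markovStep a g S := by
  unfold markovStep
  simp only [mul_add, Finset.sum_add_distrib]
  congr 1
  · simp only [← Finset.sum_mul]
    rw [sum_w hσ, one_mul]
  · rw [Finset.mul_sum]
    refine Finset.sum_congr rfl fun i _ => ?_
    rw [Finset.mul_sum]
    exact Finset.sum_congr rfl fun j _ => by ring

lemma iter_affine (hσ : 0 < ∑ p, ∑ q ∈ Finset.univ.erase p, a p q)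
    (c b : ℝ) (g : (Fin N → ℝ) → ℝ) (n : ℕ) :
    (markovStep a)^[n] (fun T => c + b * g T) =
      fun S => c + b * (markovStep a)^[n] g S := by
  induction n with
  | zero => rfl
  | succ n ih =>
    rw [Function.iterate_succ_apply', ih, Function.iterate_succ_apply']
    funext S
    exact step_affine hσ c b _ S

lemma path_le (ha : ∀ i j, 0 ≤ a i j)
    (hσ : 0 < ∑ p, ∑ q ∈ Finset.univ.erase p, a p q) :
    ∀ (L : List (Fin N × Fin N)), (∀ p ∈ L, p.1 ≠ p.2 ∧ 0 < a p.1 p.2) →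
    ∀ (g : (Fin N → ℝ) → ℝ), (∀ S, 0 ≤ g S) → ∀ S : Fin N → ℝ,
      (L.map (fun p => a p.1 p.2 / ∑ p, ∑ q ∈ Finset.univ.erase p, a p q)).prod
          * g (L.foldl (fun s p => Function.update s p.1 (s p.2)) S)
        ≤ (markovStep a)^[L.length] g S := by
  intro L
  induction L with
  | nil => intro _ g hg S; simp
  | cons p L ih =>
    intro hL g hg S
    have hp := hL p List.mem_cons_self
    have hgn : ∀ T, 0 ≤ (markovStep a)^[L.length] g T := iter_nonneg ha hσ hg L.length
    have h2 := ih (fun q hq => hL q (List.mem_cons_of_mem _ hq)) g hg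
      (Function.update S p.1 (S p.2))
    rw [List.length_cons, Function.iterate_succ_apply']
    have key : (a p.1 p.2 / ∑ p, ∑ q ∈ Finset.univ.erase p, a p q)
          * ((markovStep a)^[L.length] g) (Function.update S p.1 (S p.2))
        ≤ markovStep a ((markovStep a)^[L.length] g) S := by
      unfold markovStep
      calc (a p.1 p.2 / ∑ p, ∑ q ∈ Finset.univ.erase p, a p q)
            * ((markovStep a)^[L.length] g) (Function.update S p.1 (S p.2))
          ≤ ∑ j ∈ Finset.univ.erase p.1,
              (a p.1 j / ∑ p, ∑ q ∈ Finset.univ.erase p, a p q)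
                * ((markovStep a)^[L.length] g) (Function.update S p.1 (S j)) := by
            refine Finset.single_le_sum (f := fun j =>
              (a p.1 j / ∑ p, ∑ q ∈ Finset.univ.erase p, a p q)
                * ((markovStep a)^[L.length] g) (Function.update S p.1 (S j)))
              (fun j _ => mul_nonneg (w_nonneg ha hσ _ _) (hgn _)) ?_
            exact Finset.mem_erase.2 ⟨hp.1.symm, Finset.mem_univ _⟩
        _ ≤ _ := by
            refine Finset.single_le_sum (f := fun i => ∑ j ∈ Finset.univ.erase i,
              (a i j / ∑ p, ∑ q ∈ Finset.univ.erase p, a p q)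
                * ((markovStep a)^[L.length] g) (Function.update S i (S j)))
              (fun i _ => Finset.sum_nonneg fun j _ =>
                mul_nonneg (w_nonneg ha hσ _ _) (hgn _)) (Finset.mem_univ p.1)
    simp only [List.map_cons, List.prod_cons, List.foldl_cons]
    calc (a p.1 p.2 / ∑ p, ∑ q ∈ Finset.univ.erase p, a p q) *
          (L.map (fun p => a p.1 p.2 / ∑ p, ∑ q ∈ Finset.univ.erase p, a p q)).prod
          * g (L.foldl (fun s p => Function.update s p.1 (s p.2))
              (Function.update S p.1 (S p.2)))
        = (a p.1 p.2 / ∑ p, ∑ q ∈ Finset.univ.erase p, a p q) *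
          ((L.map (fun p => a p.1 p.2 / ∑ p, ∑ q ∈ Finset.univ.erase p, a p q)).prod
            * g (L.foldl (fun s p => Function.update s p.1 (s p.2))
                (Function.update S p.1 (S p.2)))) := by ring
      _ ≤ (a p.1 p.2 / ∑ p, ∑ q ∈ Finset.univ.erase p, a p q) *
            ((markovStep a)^[L.length] g) (Function.update S p.1 (S p.2)) :=
          mul_le_mul_of_nonneg_left h2 (w_nonneg ha hσ _ _)
      _ ≤ _ := key

end SCAux

/-- If the graph has exactly one isolated strongly connected component, then from any
initial opinion vector the embedded Markov chain of the stochastic consensus model is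
absorbed at a consensus state with probability `1`: the probability of being at a
consensus state after `n` steps tends to `1`. -/
theorem stochastic_consensus_absorbed
    (N : ℕ) (hN : 0 < N) (a : Fin N → Fin N → ℝ) (ha : ∀ i j, 0 ≤ a i j)
    (hσ : 0 < ∑ p, ∑ q ∈ Finset.univ.erase p, a p q)
    (hunique : ∃! C : Finset (Fin N), IsolatedSCC a C) :
    ∀ S0 : Fin N → ℝ,
      Tendsto
        (fun n => (markovStep a)^[n]
          (Set.indicator {S : Fin N → ℝ | ∀ i j, S i = S j} fun _ => (1 : ℝ)) S0)
        atTop (nhds 1) := by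
  classical
  intro S0
  set F : (Fin N → ℝ) → ℝ :=
    Set.indicator {S : Fin N → ℝ | ∀ i j, S i = S j} (fun _ => (1 : ℝ)) with hFdef
  have hF0 : ∀ S, 0 ≤ F S := fun S => Set.indicator_nonneg (fun _ _ => zero_le_one) S
  have hFcons : ∀ S : Fin N → ℝ, (∀ i j, S i = S j) → F S = 1 := fun S h =>
    Set.indicator_of_mem (show S ∈ {S : Fin N → ℝ | ∀ i j, S i = S j} from h) _
  have hF1 : ∀ S, F S ≤ 1 := by
    intro S
    by_cases h : S ∈ {S : Fin N → ℝ | ∀ i j, S i = S j}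
    · rw [hFdef, Set.indicator_of_mem h]
    · rw [hFdef, Set.indicator_of_notMem h]; exact zero_le_one
  obtain ⟨i0, hroot⟩ := SCAux.exists_root ha hunique
  obtain ⟨L, hLval, hLcons⟩ := SCAux.exists_moveList hroot
  set m := L.length with hm
  set ε := (L.map (fun p => a p.1 p.2 / ∑ p, ∑ q ∈ Finset.univ.erase p, a p q)).prod
    with hεdef
  have hε0 : 0 < ε := by
    refine List.prod_pos fun x hx => ?_
    rw [List.mem_map] at hx
    obtain ⟨p, hp, rfl⟩ := hx
    exact div_pos (hLval p hp).2 hσ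
  have hεm : ∀ S : Fin N → ℝ, ε ≤ (markovStep a)^[m] F S := by
    intro S
    have h := SCAux.path_le ha hσ L hLval F hF0 S
    rwa [hFcons _ (hLcons S), mul_one] at h
  have hε1 : ε ≤ 1 :=
    le_trans (hεm (fun _ => 0)) (SCAux.iter_le_one ha hσ hF1 m _)
  have key : ∀ k (S : Fin N → ℝ), 1 - (1 - ε) ^ k ≤ (markovStep a)^[k * m] F S := by
    intro k
    induction k with
    | zero => intro S; simpa using hF0 S
    | succ k ih =>
      intro S
      have hB : (0 : ℝ) ≤ (1 - ε) ^ k := pow_nonneg (by linarith) k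
      have h1 : ∀ T, (1 - (1 - ε) ^ k) + (1 - ε) ^ k * F T
          ≤ (markovStep a)^[k * m] F T := by
        intro T
        by_cases hT : ∀ i j : Fin N, T i = T j
        · rw [SCAux.iter_fix hσ hT, hFcons T hT]
          linarith
        · have hFT : F T = 0 :=
            Set.indicator_of_notMem
              (show T ∉ {S : Fin N → ℝ | ∀ i j, S i = S j} from hT) _
          rw [hFT, mul_zero, add_zero]
          exact ih T
      have h2 : (markovStep a)^[m] (fun T => (1 - (1 - ε) ^ k) + (1 - ε) ^ k * F T) S
          ≤ (markovStep a)^[m] ((markovStep a)^[k * m] F) S :=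
        SCAux.iter_mono ha hσ h1 m S
      rw [SCAux.iter_affine hσ, ← Function.iterate_add_apply] at h2
      have hmm : m + k * m = (k + 1) * m := by ring
      rw [hmm] at h2
      have h3 : ε ≤ (markovStep a)^[m] F S := hεm S
      calc 1 - (1 - ε) ^ (k + 1) = (1 - (1 - ε) ^ k) + (1 - ε) ^ k * ε := by ring
        _ ≤ (1 - (1 - ε) ^ k) + (1 - ε) ^ k * (markovStep a)^[m] F S :=
            add_le_add_right (mul_le_mul_of_nonneg_left h3 hB) _
        _ ≤ _ := h2
  have hstep0 : ∀ S, F S ≤ markovStep a F S := by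
    intro S
    by_cases hS : ∀ i j : Fin N, S i = S j
    · rw [SCAux.step_fix hσ hS]
    · have hFS : F S = 0 :=
        Set.indicator_of_notMem
          (show S ∉ {S : Fin N → ℝ | ∀ i j, S i = S j} from hS) _
      rw [hFS]
      exact SCAux.step_nonneg ha hσ hF0 S
  have hmono : Monotone fun n => (markovStep a)^[n] F S0 := by
    refine monotone_nat_of_le_succ fun n => ?_
    rw [Function.iterate_succ_apply]
    exact SCAux.iter_mono ha hσ hstep0 n S0
  rw [Metric.tendsto_atTop]
  intro δ hδ
  obtain ⟨k, hk⟩ := exists_pow_lt_of_lt_one hδ (by linarith : 1 - ε < 1)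
  refine ⟨k * m, fun n hn => ?_⟩
  have e1 := key k S0
  have e2 : (markovStep a)^[k * m] F S0 ≤ (markovStep a)^[n] F S0 := hmono hn
  have e3 : (markovStep a)^[n] F S0 ≤ 1 := SCAux.iter_le_one ha hσ hF1 n S0
  rw [Real.dist_eq, abs_of_nonpos (by linarith)]
  linarith
end

section
/- If the weight matrix is symmetric (a_{ij} = a_{ji}), then the expected empirical variance of the stochastic consensus model satisfies d/dt E[V(S(t))] = -(1/N²) E[Σ_{i,j} a_{ij} |S_j - S_i|²], where V(S) = (1/(2N²)) Σ_{i,j} |S_i - S_j|². -/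
open Matrix Finset

lemma sum_update_eq {N : ℕ} (S : Fin N → ℝ) (i : Fin N) (v : ℝ) (g : ℝ → ℝ) :
    ∑ k, g (Function.update S i v k) = (∑ k, g (S k)) - g (S i) + g v := by
  rw [← Finset.add_sum_erase _ (fun k => g (Function.update S i v k)) (Finset.mem_univ i),
      ← Finset.add_sum_erase _ (fun k => g (S k)) (Finset.mem_univ i),
      Function.update_self,
      Finset.sum_congr rfl
        (fun k hk => by rw [Function.update_of_ne (Finset.ne_of_mem_erase hk)])]
  ring

lemma double_update {N : ℕ} (S : Fin N → ℝ) (i j : Fin N) :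
    ∑ k, ∑ l, (Function.update S i (S j) k - Function.update S i (S j) l) ^ 2
      = (∑ k, ∑ l, (S k - S l) ^ 2)
        + 2 * (∑ l, (S j - S l) ^ 2) - 2 * (∑ l, (S i - S l) ^ 2)
        - 2 * (S j - S i) ^ 2 := by
  have h1 : ∀ x : ℝ,
      ∑ l, (x - Function.update S i (S j) l) ^ 2
        = (∑ l, (x - S l) ^ 2) - (x - S i) ^ 2 + (x - S j) ^ 2 :=
    fun x => sum_update_eq S i (S j) (fun y => (x - y) ^ 2)
  have h2 :
      ∑ k, ∑ l, (Function.update S i (S j) k - Function.update S i (S j) l) ^ 2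
        = ∑ k, ((∑ l, (Function.update S i (S j) k - S l) ^ 2)
            - (Function.update S i (S j) k - S i) ^ 2
            + (Function.update S i (S j) k - S j) ^ 2) :=
    Finset.sum_congr rfl (fun k _ => h1 _)
  rw [h2, sum_update_eq S i (S j)
        (fun x => (∑ l, (x - S l) ^ 2) - (x - S i) ^ 2 + (x - S j) ^ 2)]
  have hsplit : ∑ k, ((∑ l, (S k - S l) ^ 2) - (S k - S i) ^ 2 + (S k - S j) ^ 2)
      = (∑ k, ∑ l, (S k - S l) ^ 2) - (∑ k, (S k - S i) ^ 2) + ∑ k, (S k - S j) ^ 2 := by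
    rw [Finset.sum_add_distrib, Finset.sum_sub_distrib]
  rw [hsplit]
  have e1 : ∑ k, (S k - S i) ^ 2 = ∑ k, (S i - S k) ^ 2 :=
    Finset.sum_congr rfl (fun k _ => by ring)
  have e2 : ∑ k, (S k - S j) ^ 2 = ∑ k, (S j - S k) ^ 2 :=
    Finset.sum_congr rfl (fun k _ => by ring)
  rw [e1, e2]
  ring

lemma sum_sq_expand {N : ℕ} (S : Fin N → ℝ) (x : ℝ) :
    ∑ l, (x - S l) ^ 2
      = (N : ℝ) * x ^ 2 - 2 * x * (∑ l, S l) + ∑ l, (S l) ^ 2 := by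
  have : ∀ l : Fin N, (x - S l) ^ 2 = x ^ 2 - 2 * x * S l + (S l) ^ 2 :=
    fun l => by ring
  rw [Finset.sum_congr rfl (fun l _ => this l), Finset.sum_add_distrib,
      Finset.sum_sub_distrib, Finset.sum_const, ← Finset.mul_sum]
  simp [Finset.card_univ, nsmul_eq_mul]

lemma antisym_sum {N : ℕ} (a : Fin N → Fin N → ℝ) (hs : ∀ i j, a i j = a j i)
    (g : Fin N → Fin N → ℝ) (hg : ∀ i j, g i j = - g j i) :
    ∑ i, ∑ j, a i j * g i j = 0 := by
  have h : ∑ i, ∑ j, a i j * g i j = - ∑ i, ∑ j, a i j * g i j :=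
    calc ∑ i, ∑ j, a i j * g i j = ∑ x, ∑ y, a y x * g y x := Finset.sum_comm
      _ = ∑ x, ∑ y, -(a x y * g x y) :=
          Finset.sum_congr rfl (fun x _ => Finset.sum_congr rfl (fun y _ => by
            rw [hs y x, hg y x]; ring))
      _ = - ∑ i, ∑ j, a i j * g i j := by
          simp [Finset.sum_neg_distrib]
  linarith

/-- For the stochastic consensus model with symmetric rates, the expected empirical
variance satisfies `d/dt E[V(S(t))] = -(1/N²) E[Σ_{i,j} a_{ij} |S_j - S_i|²]`.  Here
`E t φ` denotes the expectation `E[φ(S(t))]`, assumed linear in `φ` and satisfying the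
generator identity of the jump process. -/
theorem variance_decay_identity
    (N : ℕ) (hN : 0 < N) (a : Fin N → Fin N → ℝ) (ha : ∀ i j, 0 ≤ a i j)
    (hsymm : ∀ i j, a i j = a j i)
    (E : ℝ → ((Fin N → ℝ) → ℝ) → ℝ)
    (hlin : ∀ t, IsLinearMap ℝ (E t))
    (hgen : ∀ (φ : (Fin N → ℝ) → ℝ) (t : ℝ),
      HasDerivAt (fun u => E u φ)
        (∑ i, ∑ j ∈ Finset.univ.erase i,
          a i j * E t fun S => φ (Function.update S i (S j)) - φ S) t)
    (V : (Fin N → ℝ) → ℝ)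
    (hV : V = fun S => (1 / (2 * (N : ℝ) ^ 2)) * ∑ i, ∑ j, (S i - S j) ^ 2) :
    ∀ t : ℝ, HasDerivAt (fun u => E u V)
      (-(1 / (N : ℝ) ^ 2) * E t fun S => ∑ i, ∑ j, a i j * (S j - S i) ^ 2) t := by
  intro t
  set L : ((Fin N → ℝ) → ℝ) →ₗ[ℝ] ℝ := IsLinearMap.mk' (E t) (hlin t) with hL
  have hEL : ∀ f : (Fin N → ℝ) → ℝ, E t f = L f := fun f => rfl
  -- the difference function
  set φ : Fin N → Fin N → (Fin N → ℝ) → ℝ :=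
    fun i j => fun S => V (Function.update S i (S j)) - V S with hφ
  -- pointwise computation of the generator applied to V
  have hVdiff : ∀ (S : Fin N → ℝ) (i j : Fin N),
      V (Function.update S i (S j)) - V S
        = (1 / (2 * (N : ℝ) ^ 2)) *
            (2 * ((N : ℝ) * (S j) ^ 2 - 2 * (S j) * (∑ l, S l) + ∑ l, (S l) ^ 2)
             - 2 * ((N : ℝ) * (S i) ^ 2 - 2 * (S i) * (∑ l, S l) + ∑ l, (S l) ^ 2)
             - 2 * (S j - S i) ^ 2) := by
    intro S i j
    rw [hV]
    simp only
    rw [double_update S i j, sum_sq_expand S (S j), sum_sq_expand S (S i)]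
    ring
  have hval :
      (∑ i, ∑ j ∈ Finset.univ.erase i,
          a i j * E t fun S => V (Function.update S i (S j)) - V S)
        = -(1 / (N : ℝ) ^ 2) * E t fun S => ∑ i, ∑ j, a i j * (S j - S i) ^ 2 := by
    -- extend erased sums to full sums
    have hzero : ∀ i : Fin N, φ i i = 0 := by
      intro i
      funext S
      simp [hφ, Function.update_eq_self]
    have hfull :
        (∑ i, ∑ j ∈ Finset.univ.erase i, a i j * E t (φ i j))
          = ∑ i, ∑ j, a i j * E t (φ i j) := by
      refine Finset.sum_congr rfl (fun i _ => ?_)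
      rw [Finset.sum_erase_eq_sub (Finset.mem_univ i)]
      rw [hzero i, hEL, map_zero]
      ring
    rw [show (∑ i, ∑ j ∈ Finset.univ.erase i,
          a i j * E t fun S => V (Function.update S i (S j)) - V S)
        = ∑ i, ∑ j ∈ Finset.univ.erase i, a i j * E t (φ i j) from rfl, hfull]
    -- move the sums inside E by linearity
    have hlin2 : ∑ i, ∑ j, a i j * E t (φ i j)
        = E t (fun S => ∑ i, ∑ j, a i j * (φ i j S)) := by
      have : ∀ i j, a i j * E t (φ i j) = L (a i j • φ i j) := by
        intro i j
        rw [_root_.map_smul, smul_eq_mul, hEL]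
      simp_rw [this]
      simp_rw [← map_sum]
      rw [hEL]
      congr 1
      funext S
      simp [Finset.sum_apply]
    rw [hlin2]
    -- pointwise identity
    have hpt : (fun S : Fin N → ℝ => ∑ i, ∑ j, a i j * (φ i j S))
        = fun S => (-(1 / (N : ℝ) ^ 2)) * ∑ i, ∑ j, a i j * (S j - S i) ^ 2 := by
      funext S
      have hterm : ∀ i j : Fin N, a i j * (φ i j S)
          = ((N : ℝ) / (N : ℝ) ^ 2) * (a i j * ((S j) ^ 2 - (S i) ^ 2))
            + (-2 / (N : ℝ) ^ 2) * (a i j * ((∑ l, S l) * (S j - S i)))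
            + (-(1 / (N : ℝ) ^ 2)) * (a i j * (S j - S i) ^ 2) := by
        intro i j
        have := hVdiff S i j
        simp only [hφ]
        rw [this]
        ring
      simp_rw [hterm]
      rw [Finset.sum_congr rfl (fun i _ => Finset.sum_add_distrib),
          Finset.sum_add_distrib,
          Finset.sum_congr rfl (fun i _ => Finset.sum_add_distrib),
          Finset.sum_add_distrib]
      have A1 : ∑ i, ∑ j, a i j * ((S j) ^ 2 - (S i) ^ 2) = 0 :=
        antisym_sum a hsymm _ (fun i j => by ring)
      have A2 : ∑ i, ∑ j, a i j * ((∑ l, S l) * (S j - S i)) = 0 :=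
        antisym_sum a hsymm _ (fun i j => by ring)
      simp_rw [← Finset.mul_sum]
      rw [A1, A2]
      ring
    rw [hpt]
    -- pull out the scalar
    have : (fun S : Fin N → ℝ =>
          (-(1 / (N : ℝ) ^ 2)) * ∑ i, ∑ j, a i j * (S j - S i) ^ 2)
        = (-(1 / (N : ℝ) ^ 2)) •
            (fun S : Fin N → ℝ => ∑ i, ∑ j, a i j * (S j - S i) ^ 2) := by
      funext S
      simp
    rw [this, hEL, _root_.map_smul, smul_eq_mul, hEL]
  rw [← hval]
  exact hgen V t
end

section
/- If the graph is symmetric and connected with algebraic connectivity λ₂, then the expected empirical variance of the stochastic consensus model decays exponentially: E[V(S(t))] ≤ e^{-λ₂ t / N} E[V(S(0))]. -/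
open Matrix Finset

/-- For the stochastic consensus model on a symmetric connected graph with algebraic
connectivity `λ₂`, the expected empirical variance decays exponentially:
`E[V(S(t))] ≤ e^{-λ₂ t / N} E[V(S(0))]`.  Here `E t φ` denotes `E[φ(S(t))]`, assumed
linear and positive in `φ` and satisfying the generator identity of the jump process. -/
theorem expected_variance_exponential_decay
    (N : ℕ) (hN : 0 < N) (a : Fin N → Fin N → ℝ) (ha : ∀ i j, 0 ≤ a i j)
    (hsymm : ∀ i j, a i j = a j i)
    (hconn : ∀ i j : Fin N, Relation.ReflTransGen (fun p q => 0 < a p q) i j)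
    (L : Matrix (Fin N) (Fin N) ℝ)
    (hL : ∀ i j, L i j = if i = j then ∑ k ∈ Finset.univ.erase i, a i k else -(a i j))
    (lam2 : ℝ)
    (hlam2_eig : ∃ v : Fin N → ℝ, v ≠ 0 ∧ (∑ i, v i = 0) ∧ L.mulVec v = lam2 • v)
    (hlam2_min : ∀ (μ : ℝ) (v : Fin N → ℝ), v ≠ 0 → (∑ i, v i = 0) →
      L.mulVec v = μ • v → lam2 ≤ μ)
    (E : ℝ → ((Fin N → ℝ) → ℝ) → ℝ)
    (hlin : ∀ t, IsLinearMap ℝ (E t))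
    (hpos : ∀ (t : ℝ) (φ : (Fin N → ℝ) → ℝ), (∀ S, 0 ≤ φ S) → 0 ≤ E t φ)
    (hgen : ∀ (φ : (Fin N → ℝ) → ℝ) (t : ℝ),
      HasDerivAt (fun u => E u φ)
        (∑ i, ∑ j ∈ Finset.univ.erase i,
          a i j * E t fun S => φ (Function.update S i (S j)) - φ S) t)
    (V : (Fin N → ℝ) → ℝ)
    (hV : V = fun S => (1 / (2 * (N : ℝ) ^ 2)) * ∑ i, ∑ j, (S i - S j) ^ 2) :
    ∀ t : ℝ, 0 ≤ t → E t V ≤ Real.exp (-(lam2 * t) / N) * E 0 V := by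
  have hN' : (0:ℝ) < N := by exact_mod_cast hN
  -- mulVec formula
  have hmul : ∀ (v : Fin N → ℝ) (i : Fin N),
      L.mulVec v i = ∑ j, a i j * (v i - v j) := by
    intro v i
    simp only [Matrix.mulVec, dotProduct, hL]
    rw [← Finset.add_sum_erase Finset.univ _ (Finset.mem_univ i)]
    rw [← Finset.sum_erase (Finset.univ) (f := fun j => a i j * (v i - v j)) (by ring)]
    simp only [if_pos rfl, if_true]
    rw [Finset.sum_mul, ← Finset.sum_add_distrib]
    apply Finset.sum_congr rfl
    intro j hj
    rw [if_neg (Ne.symm (Finset.ne_of_mem_erase hj))]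
    ring
  -- swap lemma
  have hswap : ∀ (F : Fin N → Fin N → ℝ),
      (∑ i, ∑ j, a i j * F i j) = ∑ i, ∑ j, a i j * F j i := by
    intro F
    rw [Finset.sum_comm]
    exact Finset.sum_congr rfl fun i _ => Finset.sum_congr rfl fun j _ => by rw [hsymm]
  -- antisymmetric sums vanish
  have hanti : ∀ (F : Fin N → ℝ), (∑ i, ∑ j, a i j * (F j - F i)) = 0 := by
    intro F
    have h1 := hswap (fun i j => F j - F i)
    have h2 : (∑ i, ∑ j, a i j * (F i - F j)) = -∑ i, ∑ j, a i j * (F j - F i) := by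
      rw [← Finset.sum_neg_distrib]
      exact Finset.sum_congr rfl fun i _ => by
        rw [← Finset.sum_neg_distrib]
        exact Finset.sum_congr rfl fun j _ => by ring
    simp only [h2] at h1
    linarith
  -- quadratic form
  have hquad : ∀ v : Fin N → ℝ,
      2 * (∑ i, v i * L.mulVec v i) = ∑ i, ∑ j, a i j * (v i - v j)^2 := by
    intro v
    have hdot : (∑ i, v i * L.mulVec v i) = ∑ i, ∑ j, a i j * (v i * (v i - v j)) := by
      refine Finset.sum_congr rfl fun i _ => ?_
      rw [hmul, Finset.mul_sum]
      exact Finset.sum_congr rfl fun j _ => by ring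
    have h2 := hswap (fun i j => v i * (v i - v j))
    calc 2 * (∑ i, v i * L.mulVec v i)
        = (∑ i, ∑ j, a i j * (v i * (v i - v j)))
          + ∑ i, ∑ j, a i j * (v j * (v j - v i)) := by rw [hdot, ← h2]; ring
      _ = ∑ i, ∑ j, a i j * (v i - v j)^2 := by
          rw [← Finset.sum_add_distrib]
          refine Finset.sum_congr rfl fun i _ => ?_
          rw [← Finset.sum_add_distrib]
          exact Finset.sum_congr rfl fun j _ => by ring
  have hQnonneg : ∀ v : Fin N → ℝ, 0 ≤ ∑ i, ∑ j, a i j * (v i - v j)^2 :=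
    fun v => Finset.sum_nonneg fun i _ => Finset.sum_nonneg fun j _ =>
      mul_nonneg (ha i j) (sq_nonneg _)
  -- kernel vectors are constant
  have hker : ∀ v : Fin N → ℝ, L.mulVec v = 0 → ∀ i j, v i = v j := by
    intro v hv
    have hz : (∑ i, ∑ j, a i j * (v i - v j)^2) = 0 := by
      rw [← hquad]
      simp [hv]
    have hterm : ∀ i j : Fin N, a i j * (v i - v j)^2 = 0 := by
      intro i j
      have h1 : ∀ i ∈ (Finset.univ : Finset (Fin N)), (0:ℝ) ≤ ∑ j, a i j * (v i - v j)^2 :=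
        fun i _ => Finset.sum_nonneg fun j _ => mul_nonneg (ha i j) (sq_nonneg _)
      have h2 := (Finset.sum_eq_zero_iff_of_nonneg h1).mp hz i (Finset.mem_univ i)
      have h3 : ∀ j ∈ (Finset.univ : Finset (Fin N)), (0:ℝ) ≤ a i j * (v i - v j)^2 :=
        fun j _ => mul_nonneg (ha i j) (sq_nonneg _)
      exact (Finset.sum_eq_zero_iff_of_nonneg h3).mp h2 j (Finset.mem_univ j)
    intro i j
    induction hconn i j with
    | refl => rfl
    | tail _ hpq ih =>
        rename_i p q _
        have h := hterm p q
        have hsq : (v p - v q)^2 = 0 := by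
          rcases mul_eq_zero.mp h with h' | h'
          · exact absurd h' (ne_of_gt hpq)
          · exact h'
        have : v p = v q := by nlinarith [sq_nonneg (v p - v q)]
        exact ih.trans this
  -- symmetry of L and column sums
  have hLsym : ∀ i j, L i j = L j i := by
    intro i j
    by_cases h : i = j
    · subst h; rfl
    · rw [hL, hL, if_neg h, if_neg (Ne.symm h), hsymm]
  have hrowsum : ∀ i, (∑ j, L i j) = 0 := by
    intro i
    rw [← Finset.add_sum_erase Finset.univ _ (Finset.mem_univ i), hL, if_pos rfl]
    have h : (∑ j ∈ Finset.univ.erase i, L i j) = ∑ j ∈ Finset.univ.erase i, -(a i j) :=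
      Finset.sum_congr rfl fun j hj => by
        rw [hL, if_neg (Ne.symm (Finset.ne_of_mem_erase hj))]
    rw [h, Finset.sum_neg_distrib]
    ring
  have hcolsum : ∀ j, (∑ i, L i j) = 0 := by
    intro j
    rw [← hrowsum j]
    exact Finset.sum_congr rfl fun i _ => hLsym i j
  -- lam2 nonneg
  have hlam2_nonneg : 0 ≤ lam2 := by
    obtain ⟨v, hv0, hvs, hveig⟩ := hlam2_eig
    have hvpos : 0 < ∑ i, (v i)^2 := by
      rcases Function.ne_iff.mp hv0 with ⟨i, hi⟩
      exact Finset.sum_pos' (fun j _ => sq_nonneg _)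
        ⟨i, Finset.mem_univ i, sq_pos_of_ne_zero hi⟩
    have hdot : (∑ i, v i * L.mulVec v i) = lam2 * ∑ i, (v i)^2 := by
      rw [hveig, Finset.mul_sum]
      exact Finset.sum_congr rfl fun i _ => by simp [Pi.smul_apply, smul_eq_mul]; ring
    have h2 := hquad v
    have h3 := hQnonneg v
    nlinarith
  -- Rayleigh bound
  have hherm : L.IsHermitian := by
    ext i j
    simp [Matrix.conjTranspose_apply, hLsym j i]
  have hrayleigh : ∀ v : Fin N → ℝ, (∑ i, v i = 0) →
      lam2 * (∑ i, (v i)^2) ≤ ∑ i, v i * L.mulVec v i := by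
    intro v hvs
    set b := hherm.eigenvectorBasis with hb
    set μ := hherm.eigenvalues with hμ
    set vE : EuclideanSpace ℝ (Fin N) := WithLp.toLp 2 v with hvE
    have hinner : ∀ x y : EuclideanSpace ℝ (Fin N),
        (inner ℝ x y : ℝ) = ∑ i, x i * y i := by
      intro x y
      simp [PiLp.inner_apply, RCLike.inner_apply]
      exact Finset.sum_congr rfl fun i _ => mul_comm _ _
    -- eigen relation
    have heig : ∀ k, L.mulVec (⇑(b k)) = μ k • ⇑(b k) := fun k =>
      hherm.mulVec_eigenvectorBasis k
    -- key inequality per coordinate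
    have hkey : ∀ k, lam2 * (b.repr vE k)^2 ≤ μ k * (b.repr vE k)^2 := by
      intro k
      by_cases hs : (∑ i, (b k : EuclideanSpace ℝ (Fin N)) i) = 0
      · have hne : (⇑(b k) : Fin N → ℝ) ≠ 0 := by
          intro h
          exact b.orthonormal.ne_zero k (by ext i; exact congrFun h i)
        have := hlam2_min (μ k) (⇑(b k)) hne hs (heig k)
        exact mul_le_mul_of_nonneg_right this (sq_nonneg _)
      · -- eigenvalue is 0, eigenvector is constant, coefficient vanishes
        have hsum0 : μ k * (∑ i, (b k : EuclideanSpace ℝ (Fin N)) i) = 0 := by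
          have h1 := congrArg (fun w : Fin N → ℝ => ∑ i, w i) (heig k)
          simp only [Pi.smul_apply, smul_eq_mul] at h1
          have h2 : (∑ i, L.mulVec (⇑(b k)) i) = 0 := by
            simp only [Matrix.mulVec, dotProduct]
            rw [Finset.sum_comm]
            rw [Finset.sum_eq_zero]
            intro j _
            rw [← Finset.sum_mul, hcolsum j, zero_mul]
          rw [h2] at h1
          rw [← Finset.mul_sum] at h1
          exact h1.symm
        have hμ0 : μ k = 0 := by
          rcases mul_eq_zero.mp hsum0 with h | h
          · exact h
          · exact absurd h hs
        have hker0 : L.mulVec (⇑(b k)) = 0 := by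
          rw [heig k, hμ0, zero_smul]
        have hconst : ∀ i j : Fin N, (b k : EuclideanSpace ℝ (Fin N)) i
            = (b k : EuclideanSpace ℝ (Fin N)) j := hker _ hker0
        have hc0 : b.repr vE k = 0 := by
          rw [b.repr_apply_apply, hinner]
          have i0 : Fin N := ⟨0, hN⟩
          have : ∀ i, (b k : EuclideanSpace ℝ (Fin N)) i * vE i
              = (b k : EuclideanSpace ℝ (Fin N)) i0 * vE i := fun i => by
            rw [hconst i i0]
          rw [Finset.sum_congr rfl fun i _ => this i, ← Finset.mul_sum]
          have : (∑ i, vE i) = 0 := hvs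
          rw [this, mul_zero]
        rw [hc0]
        simp
    -- norms
    have hsum1 : (∑ i, (v i)^2) = ∑ k, (b.repr vE k)^2 := by
      have h1 : (inner ℝ vE vE : ℝ) = ∑ i, v i * v i := hinner vE vE
      have h2 : (inner ℝ (b.repr vE) (b.repr vE) : ℝ) = ∑ k, b.repr vE k * b.repr vE k :=
        hinner _ _
      have h3 := b.repr.inner_map_map vE vE
      simp only [h1, h2] at h3
      calc (∑ i, (v i)^2) = ∑ i, v i * v i := by
            exact Finset.sum_congr rfl fun i _ => sq (v i) ▸ by ring
        _ = ∑ k, b.repr vE k * b.repr vE k := h3.symm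
        _ = ∑ k, (b.repr vE k)^2 := Finset.sum_congr rfl fun k _ => by ring
    -- quadratic form in eigenbasis
    have hsum2 : (∑ i, v i * L.mulVec v i) = ∑ k, μ k * (b.repr vE k)^2 := by
      set LvE : EuclideanSpace ℝ (Fin N) := WithLp.toLp 2 (L.mulVec v) with hLvE
      have hreprL : ∀ k, b.repr LvE k = μ k * b.repr vE k := by
        intro k
        rw [b.repr_apply_apply, b.repr_apply_apply, hinner, hinner]
        calc (∑ i, (b k : EuclideanSpace ℝ (Fin N)) i * LvE i)
            = ∑ i, ∑ j, (b k : EuclideanSpace ℝ (Fin N)) i * (L i j * v j) := by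
              refine Finset.sum_congr rfl fun i _ => ?_
              have : LvE i = ∑ j, L i j * v j := by
                simp [hLvE, Matrix.mulVec, dotProduct]
              rw [this, Finset.mul_sum]
          _ = ∑ j, (∑ i, L j i * (b k : EuclideanSpace ℝ (Fin N)) i) * v j := by
              rw [Finset.sum_comm]
              refine Finset.sum_congr rfl fun j _ => ?_
              rw [Finset.sum_mul]
              exact Finset.sum_congr rfl fun i _ => by rw [hLsym j i]; ring
          _ = ∑ j, (μ k * (b k : EuclideanSpace ℝ (Fin N)) j) * v j := by
              refine Finset.sum_congr rfl fun j _ => ?_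
              have : (∑ i, L j i * (b k : EuclideanSpace ℝ (Fin N)) i)
                  = L.mulVec (⇑(b k)) j := by
                simp [Matrix.mulVec, dotProduct]
              rw [this, heig k]
              simp [Pi.smul_apply, smul_eq_mul]
          _ = μ k * ∑ j, (b k : EuclideanSpace ℝ (Fin N)) j * v j := by
              rw [Finset.mul_sum]
              exact Finset.sum_congr rfl fun j _ => by ring
      have h3 := b.repr.inner_map_map vE LvE
      have h1 : (inner ℝ vE LvE : ℝ) = ∑ i, v i * L.mulVec v i := hinner vE LvE
      have h2 : (inner ℝ (b.repr vE) (b.repr LvE) : ℝ) = ∑ k, b.repr vE k * b.repr LvE k :=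
        hinner _ _
      simp only [h1, h2] at h3
      rw [← h3]
      exact Finset.sum_congr rfl fun k _ => by rw [hreprL k]; ring
    rw [hsum1, hsum2, Finset.mul_sum]
    exact Finset.sum_le_sum fun k _ => hkey k
  -- variance formula in terms of power sums
  have hpair : ∀ x : Fin N → ℝ, (∑ i, ∑ j, (x i - x j)^2)
      = 2*(N:ℝ)*(∑ i, (x i)^2) - 2*(∑ i, x i)^2 := by
    intro x
    have h : ∀ i j : Fin N, (x i - x j)^2 = (x i)^2 + (x j)^2 - 2*(x i * x j) := fun i j => by ring
    simp_rw [h, Finset.sum_sub_distrib, Finset.sum_add_distrib, Finset.sum_const,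
      Finset.card_univ, Fintype.card_fin, nsmul_eq_mul, ← Finset.mul_sum, ← Finset.sum_mul,
      Finset.sum_mul_sum]
    ring_nf
    rw [← Finset.sum_mul_sum]
    ring
  have hVform : ∀ x : Fin N → ℝ, V x
      = ((N:ℝ)*(∑ i, (x i)^2) - (∑ i, x i)^2) / (N:ℝ)^2 := by
    intro x
    rw [hV]
    simp only []
    rw [hpair x]
    field_simp
  -- sums over updates
  have hupd_sum : ∀ (S : Fin N → ℝ) (i : Fin N) (y : ℝ),
      (∑ k, Function.update S i y k) = (∑ k, S k) - S i + y := by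
    intro S i y
    rw [Finset.sum_update_of_mem (Finset.mem_univ i), Finset.sum_sdiff_eq_sub (by simp),
      Finset.sum_singleton]
    ring
  have hupd_sumsq : ∀ (S : Fin N → ℝ) (i : Fin N) (y : ℝ),
      (∑ k, (Function.update S i y k)^2) = (∑ k, (S k)^2) - (S i)^2 + y^2 := by
    intro S i y
    have h1 : ∀ k, (Function.update S i y k)^2
        = Function.update (fun k => (S k)^2) i (y^2) k := by
      intro k
      exact (Function.apply_update (fun _ z => z^2) S i y k)
    rw [Finset.sum_congr rfl fun k _ => h1 k]
    rw [Finset.sum_update_of_mem (Finset.mem_univ i), Finset.sum_sdiff_eq_sub (by simp),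
      Finset.sum_singleton]
    ring
  have hupdV : ∀ (S : Fin N → ℝ) (i j : Fin N),
      V (Function.update S i (S j)) - V S
      = ((N:ℝ)*((S j)^2 - (S i)^2) - 2*(∑ k, S k)*(S j - S i) - (S j - S i)^2) / (N:ℝ)^2 := by
    intro S i j
    rw [hVform, hVform, hupd_sum, hupd_sumsq]
    field_simp
    ring
  -- pointwise generator bound
  have hpoint : ∀ S : Fin N → ℝ,
      (∑ i, ∑ j, a i j * (V (Function.update S i (S j)) - V S)) ≤ -(lam2/N) * V S := by
    intro S
    have hG : (∑ i, ∑ j, a i j * (V (Function.update S i (S j)) - V S))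
        = -((∑ i, ∑ j, a i j * (S i - S j)^2) / (N:ℝ)^2) := by
      have hterm : ∀ i j : Fin N, a i j * (V (Function.update S i (S j)) - V S)
          = ((N:ℝ) * (a i j * ((fun k => (S k)^2) j - (fun k => (S k)^2) i))
            - (2*(∑ k, S k)) * (a i j * (S j - S i))
            - a i j * (S i - S j)^2) / (N:ℝ)^2 := by
        intro i j
        rw [hupdV S i j]
        field_simp
        ring
      rw [Finset.sum_congr rfl fun i _ => Finset.sum_congr rfl fun j _ => hterm i j]
      have hsplit : ∀ i : Fin N, (∑ j, (((N:ℝ) * (a i j * ((fun k => (S k)^2) j - (fun k => (S k)^2) i))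
            - (2*(∑ k, S k)) * (a i j * (S j - S i))
            - a i j * (S i - S j)^2) / (N:ℝ)^2))
          = ((N:ℝ) * (∑ j, a i j * ((fun k => (S k)^2) j - (fun k => (S k)^2) i))
            - (2*(∑ k, S k)) * (∑ j, a i j * (S j - S i))
            - (∑ j, a i j * (S i - S j)^2)) / (N:ℝ)^2 := by
        intro i
        rw [← Finset.sum_div]
        congr 1
        rw [Finset.sum_sub_distrib, Finset.sum_sub_distrib, ← Finset.mul_sum, ← Finset.mul_sum]
      rw [Finset.sum_congr rfl fun i _ => hsplit i, ← Finset.sum_div]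
      rw [Finset.sum_sub_distrib, Finset.sum_sub_distrib, ← Finset.mul_sum, ← Finset.mul_sum]
      rw [hanti (fun k => (S k)^2), hanti S]
      ring
    rw [hG]
    -- centered vector
    set T := ∑ k, S k with hT
    set w : Fin N → ℝ := fun i => S i - T/(N:ℝ) with hw
    have hwsum : (∑ i, w i) = 0 := by
      rw [hw]
      simp only []
      rw [Finset.sum_sub_distrib, Finset.sum_const, Finset.card_univ, Fintype.card_fin,
        nsmul_eq_mul]
      field_simp
      rw [hT, sub_self]
    have hQw : (∑ i, ∑ j, a i j * (S i - S j)^2) = ∑ i, ∑ j, a i j * (w i - w j)^2 :=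
      Finset.sum_congr rfl fun i _ => Finset.sum_congr rfl fun j _ => by
        rw [hw]; ring_nf
    have hray := hrayleigh w hwsum
    have hq := hquad w
    have hVw : V S = (∑ i, (w i)^2) / (N:ℝ) := by
      rw [hVform]
      have h1 : (∑ i, (w i)^2) = (∑ i, (S i)^2) - 2*(T/(N:ℝ))*T + (N:ℝ)*(T/(N:ℝ))^2 := by
        have h2 : ∀ i, (w i)^2 = (S i)^2 - (2*(T/(N:ℝ)))*(S i) + (T/(N:ℝ))^2 := by
          intro i; rw [hw]; ring
        rw [Finset.sum_congr rfl fun i _ => h2 i, Finset.sum_add_distrib,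
          Finset.sum_sub_distrib, ← Finset.mul_sum, Finset.sum_const, Finset.card_univ,
          Fintype.card_fin, nsmul_eq_mul, ← hT]
      rw [h1]
      field_simp
      ring
    rw [hVw]
    have hWnn : (0:ℝ) ≤ ∑ i, (w i)^2 := Finset.sum_nonneg fun i _ => sq_nonneg _
    have hkey : lam2 * (∑ i, (w i)^2) ≤ ∑ i, ∑ j, a i j * (S i - S j)^2 := by
      rw [hQw]
      nlinarith
    have h9 : -(lam2/(N:ℝ)) * ((∑ i, (w i)^2) / (N:ℝ))
        = -((lam2 * ∑ i, (w i)^2)/(N:ℝ)^2) := by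
      field_simp
    rw [h9]
    exact neg_le_neg ((div_le_div_iff_of_pos_right (by positivity)).mpr hkey)
  -- the expectation semigroup part
  have hVnonneg : ∀ S, 0 ≤ V S := by
    intro S
    rw [hV]
    have : (0:ℝ) ≤ ∑ i, ∑ j, (S i - S j)^2 :=
      Finset.sum_nonneg fun i _ => Finset.sum_nonneg fun j _ => sq_nonneg _
    positivity
  set c : ℝ := lam2 / N with hc
  set f : ℝ → ℝ := fun t => E t V with hf
  have hD : ∀ t, (∑ i, ∑ j ∈ Finset.univ.erase i,
      a i j * E t fun S => V (Function.update S i (S j)) - V S) ≤ -c * f t := by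
    intro t
    have hEℓ : ∀ φ, E t φ = (IsLinearMap.mk' (E t) (hlin t)) φ := fun φ => rfl
    set ℓ := IsLinearMap.mk' (E t) (hlin t) with hℓ
    have hdiag : ∀ i, (E t fun S => V (Function.update S i (S i)) - V S) = 0 := by
      intro i
      have h0 : (fun S : Fin N → ℝ => V (Function.update S i (S i)) - V S)
          = (0 : (Fin N → ℝ) → ℝ) := by
        funext S
        simp [Function.update_eq_self]
      rw [h0, hEℓ]
      exact map_zero ℓ
    have hfull : (∑ i, ∑ j ∈ Finset.univ.erase i,
        a i j * E t fun S => V (Function.update S i (S j)) - V S)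
        = ∑ i, ∑ j, a i j * E t fun S => V (Function.update S i (S j)) - V S := by
      refine Finset.sum_congr rfl fun i _ => ?_
      exact Finset.sum_erase _ (by rw [hdiag i]; ring)
    set G : (Fin N → ℝ) → ℝ :=
      fun S => ∑ i, ∑ j, a i j * (V (Function.update S i (S j)) - V S) with hGdef
    have hEG : (∑ i, ∑ j, a i j * E t fun S => V (Function.update S i (S j)) - V S)
        = E t G := by
      rw [hEℓ G]
      have hGs : G = ∑ i, ∑ j : Fin N,
          (a i j • fun S => V (Function.update S i (S j)) - V S) := by
        funext S
        rw [hGdef]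
        simp [Finset.sum_apply, Pi.smul_apply, smul_eq_mul]
      rw [hGs, map_sum]
      refine Finset.sum_congr rfl fun i _ => ?_
      rw [map_sum]
      refine Finset.sum_congr rfl fun j _ => ?_
      rw [_root_.map_smul, smul_eq_mul, hEℓ]
    have hineq : E t G ≤ E t ((-c) • V) := by
      have h0 := hpos t (((-c) • V) - G) (fun S => by
        have h1 := hpoint S
        simp only [Pi.sub_apply, Pi.smul_apply, smul_eq_mul]
        rw [hGdef]
        simp only []
        rw [hc]
        linarith)
      have hsub : E t (((-c) • V) - G) = E t ((-c) • V) - E t G := by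
        rw [hEℓ, hEℓ, hEℓ]
        exact map_sub ℓ _ _
      linarith
    have hEc : E t ((-c) • V) = -c * E t V := by
      rw [hEℓ, _root_.map_smul, smul_eq_mul, hEℓ]
    rw [hfull, hEG]
    rw [hEc] at hineq
    exact hineq
  have hFderiv : ∀ t, HasDerivAt (fun u => Real.exp (c*u) * f u)
      (Real.exp (c*t) * c * f t + Real.exp (c*t) * (∑ i, ∑ j ∈ Finset.univ.erase i,
        a i j * E t fun S => V (Function.update S i (S j)) - V S)) t := by
    intro t
    have h := (((hasDerivAt_id t).const_mul c).exp).mul (hgen V t)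
    simp only [id_eq, mul_one] at h
    exact h
  have hmono : Antitone (fun u => Real.exp (c*u) * f u) := by
    apply antitone_of_deriv_nonpos
    · intro t
      exact (hFderiv t).differentiableAt
    · intro t
      rw [(hFderiv t).deriv]
      have h1 := hD t
      have h2 : (0:ℝ) < Real.exp (c*t) := Real.exp_pos _
      nlinarith [mul_le_mul_of_nonneg_left h1 h2.le]
  intro t ht
  have h1 : Real.exp (c*t) * f t ≤ Real.exp (c*0) * f 0 := hmono ht
  have h2 : Real.exp (c*0) * f 0 = f 0 := by simp
  have h3 : f t = Real.exp (-(c*t)) * (Real.exp (c*t) * f t) := by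
    rw [← mul_assoc, ← Real.exp_add]
    simp
  have h4 : E t V = f t := rfl
  rw [h4, h3]
  have h5 : Real.exp (-(c*t)) * (Real.exp (c*t) * f t) ≤ Real.exp (-(c*t)) * f 0 := by
    apply mul_le_mul_of_nonneg_left _ (Real.exp_pos _).le
    rw [← h2]
    exact h1
  have h6 : Real.exp (-(c*t)) * f 0 = Real.exp (-(lam2*t)/N) * E 0 V := by
    have : -(c*t) = -(lam2*t)/N := by
      rw [hc]
      ring
    rw [this]
  rw [← h6]
  exact h5
end

section
/- If the directed graph is balanced (Σ_{j≠i} a_{ij} = Σ_{j≠i} a_{ji} for all i) and strongly connected, then with probability 1 the stochastic consensus model converges to a consensus S*·1 in finite time, and the consensus value satisfies E[S*] = (1/N) Σ_{i=1}^N S_i(0); in particular, the empirical mean S̄(t) = (1/N)Σ_i S_i(t) is a martingale. -/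
open Matrix Finset Filter

namespace SC

variable {N : ℕ} (a : Fin N → Fin N → ℝ)

/-- Total jump rate. -/
noncomputable def sig : ℝ := ∑ p, ∑ q ∈ Finset.univ.erase p, a p q

lemma markovStep_eq (f : (Fin N → ℝ) → ℝ) (S : Fin N → ℝ) : markovStep a f S =
    ∑ i, ∑ j ∈ Finset.univ.erase i, (a i j / sig a) * f (Function.update S i (S j)) := rfl

lemma sum_probs (hσ : 0 < sig a) :
    ∑ i, ∑ j ∈ Finset.univ.erase i, a i j / sig a = 1 := by
  simp only [← Finset.sum_div]
  exact div_self hσ.ne'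

/-- One step of the chain acts affinely. -/
lemma step_comb (hσ : 0 < sig a) (c d e : ℝ) (f g : (Fin N → ℝ) → ℝ) (S : Fin N → ℝ) :
    markovStep a (fun x => c + d * f x + e * g x) S
      = c + d * markovStep a f S + e * markovStep a g S := by
  simp only [markovStep_eq]
  have h : ∀ i j, (a i j / sig a) * (c + d * f (Function.update S i (S j))
        + e * g (Function.update S i (S j)))
      = c * (a i j / sig a) + d * ((a i j / sig a) * f (Function.update S i (S j)))
        + e * ((a i j / sig a) * g (Function.update S i (S j))) := by intro i j; ring
  simp only [h, Finset.sum_add_distrib, ← Finset.mul_sum]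
  rw [sum_probs a hσ, mul_one]

lemma iter_comb (hσ : 0 < sig a) (n : ℕ) :
    ∀ (f g : (Fin N → ℝ) → ℝ) (c d e : ℝ) (S : Fin N → ℝ),
    (markovStep a)^[n] (fun x => c + d * f x + e * g x) S
      = c + d * (markovStep a)^[n] f S + e * (markovStep a)^[n] g S := by
  induction n with
  | zero => intro f g c d e S; simp
  | succ n ih =>
    intro f g c d e S
    rw [Function.iterate_succ_apply, Function.iterate_succ_apply,
      Function.iterate_succ_apply]
    have : markovStep a (fun x => c + d * f x + e * g x)
        = fun x => c + d * markovStep a f x + e * markovStep a g x :=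
      funext (step_comb a hσ c d e f g)
    rw [this]
    exact ih (markovStep a f) (markovStep a g) c d e S

lemma iter_const (hσ : 0 < sig a) (n : ℕ) (c : ℝ) (S : Fin N → ℝ) :
    (markovStep a)^[n] (fun _ => c) S = c := by
  have h1 : (fun _ : Fin N → ℝ => c)
      = fun x => c + 0 * (fun _ : Fin N → ℝ => (0:ℝ)) x
          + 0 * (fun _ : Fin N → ℝ => (0:ℝ)) x := by funext x; ring
  rw [h1, iter_comb a hσ n _ _ c 0 0 S]
  ring

/-- Iterates of the chain are monotone, relative to any set of states closed
under one-step transitions. -/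
lemma iter_mono_on (ha : ∀ i j, 0 ≤ a i j) (hσ : 0 < sig a)
    {P : (Fin N → ℝ) → Prop}
    (hP : ∀ S, P S → ∀ i j, P (Function.update S i (S j))) :
    ∀ (n : ℕ) (f g : (Fin N → ℝ) → ℝ), (∀ S, P S → f S ≤ g S) →
      ∀ S, P S → (markovStep a)^[n] f S ≤ (markovStep a)^[n] g S := by
  intro n
  induction n with
  | zero => intro f g hfg S hS; exact hfg S hS
  | succ n ih =>
    intro f g hfg S hS
    rw [Function.iterate_succ_apply, Function.iterate_succ_apply]
    refine ih (markovStep a f) (markovStep a g) ?_ S hS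
    intro x hx
    simp only [markovStep_eq]
    refine Finset.sum_le_sum fun i _ => Finset.sum_le_sum fun j _ => ?_
    exact mul_le_mul_of_nonneg_left (hfg _ (hP x hx i j))
      (div_nonneg (ha i j) hσ.le)

lemma swap_sum (F : Fin N → Fin N → ℝ) :
    ∑ i, ∑ j ∈ Finset.univ.erase i, F i j = ∑ j, ∑ i ∈ Finset.univ.erase j, F i j := by
  refine Finset.sum_comm' ?_
  intro x y
  simp [Finset.mem_erase, and_comm, ne_comm, eq_comm]

lemma step_mean_key (hbal : ∀ i, ∑ j ∈ Finset.univ.erase i, a i j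
      = ∑ j ∈ Finset.univ.erase i, a j i) (S : Fin N → ℝ) :
    ∑ i, ∑ j ∈ Finset.univ.erase i, a i j * ((∑ k, S k) - S i + S j)
      = (∑ k, S k) * sig a := by
  have expand : ∀ i j, a i j * ((∑ k, S k) - S i + S j)
      = a i j * (∑ k, S k) - a i j * S i + a i j * S j := by intro i j; ring
  have h1 : ∑ i, ∑ j ∈ Finset.univ.erase i, a i j * S j
      = ∑ j, (∑ i ∈ Finset.univ.erase j, a i j) * S j := by
    rw [swap_sum]; simp only [← Finset.sum_mul]
  have h2 : ∑ i, ∑ j ∈ Finset.univ.erase i, a i j * S i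
      = ∑ i, (∑ j ∈ Finset.univ.erase i, a j i) * S i := by
    simp only [← Finset.sum_mul]
    exact Finset.sum_congr rfl fun i _ => by rw [hbal i]
  simp only [expand, Finset.sum_add_distrib, Finset.sum_sub_distrib]
  rw [h1, h2]
  simp only [← Finset.sum_mul, sig]
  ring

/-- The empirical mean is harmonic for the chain: the martingale property. -/
lemma step_mean (hσ : 0 < sig a)
    (hbal : ∀ i, ∑ j ∈ Finset.univ.erase i, a i j
      = ∑ j ∈ Finset.univ.erase i, a j i) (S : Fin N → ℝ) :
    markovStep a (fun x => (∑ i, x i) / (N:ℝ)) S = (∑ i, S i) / N := by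
  have hupd : ∀ (i j : Fin N), (∑ k, Function.update S i (S j) k)
      = S j + ((∑ k, S k) - S i) := by
    intro i j
    rw [Finset.sum_update_of_mem (Finset.mem_univ i)]
    congr 1
    rw [Finset.sum_sdiff_eq_sub (Finset.singleton_subset_iff.2 (Finset.mem_univ i))]
    simp
  rw [markovStep_eq]
  simp only [hupd]
  have hterm : ∀ i j, (a i j / sig a) * ((S j + ((∑ k, S k) - S i)) / (N:ℝ))
      = (a i j * ((∑ k, S k) - S i + S j)) / (sig a * N) := by intro i j; ring
  simp only [hterm, ← Finset.sum_div]
  rw [step_mean_key a hbal S, mul_comm (∑ k, S k) (sig a),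
    mul_div_mul_left _ _ hσ.ne']

/-- The set of consensus states. -/
def C : Set (Fin N → ℝ) := {S | ∀ i j, S i = S j}

/-- Indicator of the consensus states. -/
noncomputable def ind : (Fin N → ℝ) → ℝ := Set.indicator (C (N := N)) fun _ => 1

lemma ind_nonneg (S : Fin N → ℝ) : 0 ≤ ind S :=
  Set.indicator_nonneg (fun _ _ => zero_le_one) S

lemma ind_le_one (S : Fin N → ℝ) : ind S ≤ 1 :=
  Set.indicator_le' (fun _ _ => le_rfl) (fun _ _ => zero_le_one) S

lemma ind_of_mem {S : Fin N → ℝ} (h : S ∈ C) : ind S = 1 := Set.indicator_of_mem h _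
lemma ind_of_not_mem {S : Fin N → ℝ} (h : S ∉ C) : ind S = 0 :=
  Set.indicator_of_notMem h _

lemma step_nonneg (ha : ∀ i j, 0 ≤ a i j) (hσ : 0 < sig a)
    (f : (Fin N → ℝ) → ℝ) (hf : ∀ S, 0 ≤ f S) (S : Fin N → ℝ) :
    0 ≤ markovStep a f S := by
  rw [markovStep_eq]
  exact Finset.sum_nonneg fun i _ => Finset.sum_nonneg fun j _ =>
    mul_nonneg (div_nonneg (ha i j) hσ.le) (hf _)

/-- Consensus states are absorbing. -/
lemma ind_le_step (ha : ∀ i j, 0 ≤ a i j) (hσ : 0 < sig a) (S : Fin N → ℝ) :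
    ind S ≤ markovStep a ind S := by
  by_cases hS : S ∈ C (N := N)
  · rw [ind_of_mem hS, markovStep_eq]
    have hupd : ∀ (i j : Fin N), Function.update S i (S j) = S := by
      intro i j; rw [hS j i]; exact Function.update_eq_self i S
    have : ∀ i, ∀ j ∈ Finset.univ.erase i,
        (a i j / sig a) * ind (Function.update S i (S j)) = a i j / sig a := by
      intro i j _; rw [hupd i j, ind_of_mem hS, mul_one]
    rw [Finset.sum_congr rfl fun i _ => Finset.sum_congr rfl (this i)]
    rw [sum_probs a hσ]
  · rw [ind_of_not_mem hS]
    exact step_nonneg a ha hσ _ (ind_nonneg) S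

lemma iter_ind_nonneg (ha : ∀ i j, 0 ≤ a i j) (hσ : 0 < sig a) :
    ∀ (n : ℕ) (S : Fin N → ℝ), 0 ≤ (markovStep a)^[n] ind S := by
  intro n
  induction n with
  | zero => exact fun S => ind_nonneg S
  | succ n ih =>
    intro S
    rw [Function.iterate_succ_apply']
    exact step_nonneg a ha hσ _ ih S

lemma ind_le_iter (ha : ∀ i j, 0 ≤ a i j) (hσ : 0 < sig a)
    (n : ℕ) (S : Fin N → ℝ) : ind S ≤ (markovStep a)^[n] ind S := by
  induction n with
  | zero => simp
  | succ n ih =>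
    refine le_trans ih ?_
    rw [Function.iterate_succ_apply]
    exact iter_mono_on a ha hσ (P := fun _ => True) (fun _ _ _ _ => trivial) n
      ind (markovStep a ind) (fun x _ => ind_le_step a ha hσ x) S trivial

lemma iter_ind_succ (ha : ∀ i j, 0 ≤ a i j) (hσ : 0 < sig a)
    (n : ℕ) (S : Fin N → ℝ) :
    (markovStep a)^[n] ind S ≤ (markovStep a)^[n + 1] ind S := by
  rw [Function.iterate_succ_apply]
  exact iter_mono_on a ha hσ (P := fun _ => True) (fun _ _ _ _ => trivial) n
    ind (markovStep a ind) (fun x _ => ind_le_step a ha hσ x) S trivial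

lemma iter_ind_le_one (ha : ∀ i j, 0 ≤ a i j) (hσ : 0 < sig a)
    (n : ℕ) (S : Fin N → ℝ) : (markovStep a)^[n] ind S ≤ 1 := by
  have h := iter_mono_on a ha hσ (P := fun _ => True) (fun _ _ _ _ => trivial) n
    ind (fun _ => (1:ℝ)) (fun x _ => ind_le_one x) S trivial
  rwa [iter_const a hσ n 1 S] at h

lemma exists_crossing {r : Fin N → Fin N → Prop} {S : Fin N → ℝ} {i i0 : Fin N}
    (h : Relation.ReflTransGen r i i0) (hi : S i ≠ S i0) :
    ∃ p q, S p ≠ S i0 ∧ S q = S i0 ∧ r p q := by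
  revert hi
  induction h using Relation.ReflTransGen.head_induction_on with
  | refl => intro hi; exact absurd rfl hi
  | @head x y hxy hyi0 ih =>
    intro hx
    by_cases hy : S y = S i0
    · exact ⟨x, y, hx, hy, hxy⟩
    · exact ih hy

/-- From any state whose disagreement set has at most `n` elements, the chain reaches
consensus within `n` steps with positive probability. -/
lemma pos_aux (ha : ∀ i j, 0 ≤ a i j) (hσ : 0 < sig a)
    (hconn : ∀ i j : Fin N, Relation.ReflTransGen (fun p q => 0 < a p q) i j)
    (i0 : Fin N) :
    ∀ (n : ℕ) (S : Fin N → ℝ),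
      (Finset.univ.filter fun i => S i ≠ S i0).card ≤ n →
      0 < (markovStep a)^[n] ind S := by
  intro n
  induction n with
  | zero =>
    intro S hS
    have h0 : ∀ k, S k = S i0 := by
      intro k
      by_contra hk
      have hmem : k ∈ Finset.univ.filter fun i => S i ≠ S i0 := by simp [hk]
      have := Finset.card_pos.2 ⟨k, hmem⟩
      omega
    have hC : S ∈ C (N := N) := fun i j => by rw [h0 i, h0 j]
    simp [ind_of_mem hC]
  | succ n ih =>
    intro S hS
    by_cases hC : S ∈ C (N := N)
    · calc (0:ℝ) < 1 := one_pos
        _ = ind S := (ind_of_mem hC).symm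
        _ ≤ _ := ind_le_iter a ha hσ (n+1) S
    · have hex : ∃ i, S i ≠ S i0 := by
        by_contra h
        push_neg at h
        exact hC fun i j => by rw [h i, h j]
      obtain ⟨i, hi⟩ := hex
      obtain ⟨p, q, hp, hq, hpq⟩ := exists_crossing (hconn i i0) hi
      set S' := Function.update S p (S q) with hS'def
      have hqp : q ≠ p := fun h => hp (h ▸ hq)
      have hi0p : i0 ≠ p := fun h => hp (by rw [← h])
      have hS'i0 : S' i0 = S i0 := Function.update_of_ne hi0p _ _
      have hS'p : S' p = S i0 := by rw [hS'def, Function.update_self, hq]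
      have hsub : (Finset.univ.filter fun k => S' k ≠ S' i0)
          ⊆ (Finset.univ.filter fun k => S k ≠ S i0).erase p := by
        intro k hk
        simp only [Finset.mem_filter, Finset.mem_univ, true_and] at hk
        rw [hS'i0] at hk
        have hkp : k ≠ p := by
          intro h
          rw [h, hS'p] at hk
          exact hk rfl
        rw [Finset.mem_erase]
        refine ⟨hkp, ?_⟩
        simp only [Finset.mem_filter, Finset.mem_univ, true_and]
        rw [show S' k = S k from Function.update_of_ne hkp _ _] at hk
        exact hk
      have hpmem : p ∈ Finset.univ.filter fun k => S k ≠ S i0 := by simp [hp]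
      have hcard : (Finset.univ.filter fun k => S' k ≠ S' i0).card ≤ n := by
        have h1 := Finset.card_le_card hsub
        rw [Finset.card_erase_of_mem hpmem] at h1
        omega
      have hIH := ih S' hcard
      rw [Function.iterate_succ_apply', markovStep_eq]
      have hterm : (0:ℝ) < (a p q / sig a) * (markovStep a)^[n] ind S' :=
        mul_pos (div_pos hpq hσ) hIH
      refine lt_of_lt_of_le hterm ?_
      have h1 : (a p q / sig a) * (markovStep a)^[n] ind S'
          ≤ ∑ j ∈ Finset.univ.erase p,
            (a p j / sig a) * (markovStep a)^[n] ind (Function.update S p (S j)) :=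
        Finset.single_le_sum
          (f := fun j => (a p j / sig a)
            * (markovStep a)^[n] ind (Function.update S p (S j)))
          (fun j _ => mul_nonneg (div_nonneg (ha p j) hσ.le) (iter_ind_nonneg a ha hσ n _))
          (Finset.mem_erase.2 ⟨hqp, Finset.mem_univ q⟩)
      refine le_trans h1 ?_
      exact Finset.single_le_sum
        (f := fun i => ∑ j ∈ Finset.univ.erase i,
          (a i j / sig a) * (markovStep a)^[n] ind (Function.update S i (S j)))
        (fun i _ => Finset.sum_nonneg fun j _ =>
          mul_nonneg (div_nonneg (ha i j) hσ.le) (iter_ind_nonneg a ha hσ n _))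
        (Finset.mem_univ p)

end SC

/-- On a balanced, strongly connected graph the stochastic consensus model reaches a
consensus almost surely (the probability of being at a consensus state after `n` steps
tends to `1`), the empirical mean is a martingale, and the expected consensus value equals
the initial average. -/
theorem stochastic_consensus_balanced
    (N : ℕ) (hN : 0 < N) (a : Fin N → Fin N → ℝ) (ha : ∀ i j, 0 ≤ a i j)
    (hσ : 0 < ∑ p, ∑ q ∈ Finset.univ.erase p, a p q)
    (hbal : ∀ i, ∑ j ∈ Finset.univ.erase i, a i j = ∑ j ∈ Finset.univ.erase i, a j i)
    (hconn : ∀ i j : Fin N, Relation.ReflTransGen (fun p q => 0 < a p q) i j)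
    (S0 : Fin N → ℝ) :
    Tendsto
        (fun n => (markovStep a)^[n]
          (Set.indicator {S : Fin N → ℝ | ∀ i j, S i = S j} fun _ => (1 : ℝ)) S0)
        atTop (nhds 1) ∧
      (∀ n : ℕ, (markovStep a)^[n] (fun S => (∑ i, S i) / N) S0 = (∑ i, S0 i) / N) ∧
      Tendsto
        (fun n => (markovStep a)^[n]
          (Set.indicator {S : Fin N → ℝ | ∀ i j, S i = S j} fun S => (∑ i, S i) / N) S0)
        atTop (nhds ((∑ i, S0 i) / N)) := by
  classical
  have hσ' : 0 < SC.sig a := hσ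
  set T := markovStep a with hT
  set mean : (Fin N → ℝ) → ℝ := fun S => (∑ i, S i) / N with hmean
  -- Part 2 : the martingale property
  have part2 : ∀ n : ℕ, T^[n] mean S0 = mean S0 := by
    intro n
    have hfix : T mean = mean := funext (SC.step_mean a hσ' hbal)
    rw [Function.iterate_fixed hfix n]
  -- the finite set of reachable states
  set DF : Finset (Fin N → ℝ) :=
    Fintype.piFinset (fun _ : Fin N => Finset.univ.image S0) with hDF
  have hS0DF : S0 ∈ DF := by
    rw [hDF, Fintype.mem_piFinset]
    exact fun i => Finset.mem_image_of_mem S0 (Finset.mem_univ i)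
  have hclosed : ∀ S, S ∈ DF → ∀ i j, Function.update S i (S j) ∈ DF := by
    intro S hS i j
    rw [hDF, Fintype.mem_piFinset]
    intro k
    by_cases hk : k = i
    · rw [hk, Function.update_self]
      exact (Fintype.mem_piFinset.1 hS) j
    · rw [Function.update_of_ne hk]
      exact (Fintype.mem_piFinset.1 hS) k
  -- the uniform positive probability of absorption within N steps
  set i0 : Fin N := ⟨0, hN⟩ with hi0
  have hposall : ∀ S : Fin N → ℝ, 0 < T^[N] SC.ind S := by
    intro S
    refine SC.pos_aux a ha hσ' hconn i0 N S ?_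
    calc (Finset.univ.filter fun i => S i ≠ S i0).card
        ≤ Finset.univ.card := Finset.card_filter_le _ _
      _ = N := by simp
  obtain ⟨S₁, hS₁, hmin⟩ := DF.exists_min_image (fun S => T^[N] SC.ind S) ⟨S0, hS0DF⟩
  set ε : ℝ := T^[N] SC.ind S₁ with hε
  have hεpos : 0 < ε := hposall S₁
  have hεle : ∀ S ∈ DF, ε ≤ T^[N] SC.ind S := hmin
  have hε1 : ε ≤ 1 := (hεle S0 hS0DF).trans (SC.iter_ind_le_one a ha hσ' N S0)
  -- geometric absorption estimate
  have geo : ∀ (k : ℕ) (S : Fin N → ℝ), S ∈ DF →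
      1 - (1 - ε)^k ≤ T^[k * N] SC.ind S := by
    intro k
    induction k with
    | zero => intro S _; simpa using SC.ind_nonneg S
    | succ k ih =>
      intro S hS
      have hkN : (k + 1) * N = N + k * N := by ring
      rw [hkN, Function.iterate_add_apply]
      have hd : (0:ℝ) ≤ (1 - ε)^k := pow_nonneg (by linarith) k
      have hcomp : ∀ x, x ∈ DF →
          (fun y => (1 - (1 - ε)^k) + (1 - ε)^k * SC.ind y + 0 * SC.ind y) x
            ≤ T^[k * N] SC.ind x := by
        intro x hx
        simp only [zero_mul, add_zero]
        by_cases hxC : x ∈ SC.C (N := N)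
        · have h1 := SC.ind_le_iter a ha hσ' (k * N) x
          rw [SC.ind_of_mem hxC] at h1 ⊢
          linarith
        · rw [SC.ind_of_not_mem hxC]
          have := ih x hx
          linarith
      have hmono := SC.iter_mono_on a ha hσ' (P := fun S => S ∈ DF) hclosed N
        _ _ hcomp S hS
      rw [SC.iter_comb a hσ' N SC.ind SC.ind (1 - (1 - ε)^k) ((1 - ε)^k) 0 S] at hmono
      have hεS : ε ≤ T^[N] SC.ind S := hεle S hS
      have hdu : (1 - ε)^k * ε ≤ (1 - ε)^k * T^[N] SC.ind S :=
        mul_le_mul_of_nonneg_left hεS hd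
      have hp : (1 - ε)^(k + 1) = (1 - ε)^k * (1 - ε) := pow_succ _ _
      have hexp : (1 - ε)^k * (1 - ε) = (1 - ε)^k - (1 - ε)^k * ε := by ring
      linarith
  -- Part 1
  have humono : Monotone (fun n => T^[n] SC.ind S0) :=
    monotone_nat_of_le_succ (fun n => SC.iter_ind_succ a ha hσ' n S0)
  have hlow : ∀ n : ℕ, 1 - (1 - ε)^(n / N) ≤ T^[n] SC.ind S0 := by
    intro n
    exact le_trans (geo (n / N) S0 hS0DF) (humono (Nat.div_mul_le_self n N))
  have hdiv : Tendsto (fun n : ℕ => n / N) atTop atTop := by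
    refine tendsto_atTop_atTop.2 fun b => ⟨b * N, fun x hx => ?_⟩
    calc b = b * N / N := (Nat.mul_div_cancel b hN).symm
      _ ≤ x / N := Nat.div_le_div_right hx
  have hpow : Tendsto (fun k : ℕ => (1 - ε)^k) atTop (nhds 0) :=
    tendsto_pow_atTop_nhds_zero_of_lt_one (by linarith) (by linarith)
  have hltend : Tendsto (fun n : ℕ => 1 - (1 - ε)^(n / N)) atTop (nhds 1) := by
    have h := (tendsto_const_nhds (x := (1:ℝ)) (f := atTop)).sub (hpow.comp hdiv)
    simpa using h
  have part1 : Tendsto (fun n => T^[n] SC.ind S0) atTop (nhds 1) :=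
    tendsto_of_tendsto_of_tendsto_of_le_of_le hltend tendsto_const_nhds
      hlow (fun n => SC.iter_ind_le_one a ha hσ' n S0)
  -- Part 3
  have hune : (Finset.univ : Finset (Fin N)).Nonempty := ⟨i0, Finset.mem_univ i0⟩
  obtain ⟨b, hb0, hball⟩ : ∃ b : ℝ, 0 ≤ b ∧ ∀ k, |S0 k| ≤ b := by
    refine ⟨Finset.univ.sup' hune (fun k => |S0 k|), ?_, ?_⟩
    · exact le_trans (abs_nonneg (S0 i0))
        (Finset.le_sup' (fun k => |S0 k|) (Finset.mem_univ i0))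
    · exact fun k => Finset.le_sup' (fun k => |S0 k|) (Finset.mem_univ k)
  have hbd : ∀ S ∈ DF, |mean S| ≤ b := by
    intro S hS
    have h1 : ∀ i, |S i| ≤ b := by
      intro i
      obtain ⟨k, -, hk⟩ := Finset.mem_image.1 ((Fintype.mem_piFinset.1 hS) i)
      rw [← hk]
      exact hball k
    have h2 : |∑ i, S i| ≤ ∑ i, |S i| := Finset.abs_sum_le_sum_abs _ _
    have h3 : (∑ i, |S i|) ≤ (N : ℝ) * b := by
      calc (∑ i, |S i|) ≤ ∑ _i : Fin N, b := Finset.sum_le_sum fun i _ => h1 i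
        _ = (N : ℝ) * b := by simp [mul_comm]
    have hNpos : (0:ℝ) < N := Nat.cast_pos.2 hN
    rw [hmean]
    rw [abs_div, Nat.abs_cast, div_le_iff₀ hNpos]
    calc |∑ i, S i| ≤ (N:ℝ) * b := h2.trans h3
      _ = b * N := by ring
  set g : (Fin N → ℝ) → ℝ := Set.indicator (SC.C (N := N)) mean with hg
  have hlowg : ∀ x, x ∈ DF →
      (fun y => -b + 1 * mean y + b * SC.ind y) x ≤ g x := by
    intro x hx
    by_cases hxC : x ∈ SC.C (N := N)
    · rw [hg]
      simp only [Set.indicator_of_mem hxC, SC.ind_of_mem hxC]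
      ring_nf
      exact le_rfl
    · rw [hg]
      simp only [Set.indicator_of_notMem hxC, SC.ind_of_not_mem hxC]
      have := (abs_le.1 (hbd x hx)).2
      linarith
  have hupg : ∀ x, x ∈ DF →
      g x ≤ (fun y => b + 1 * mean y + (-b) * SC.ind y) x := by
    intro x hx
    by_cases hxC : x ∈ SC.C (N := N)
    · rw [hg]
      simp only [Set.indicator_of_mem hxC, SC.ind_of_mem hxC]
      ring_nf
      exact le_rfl
    · rw [hg]
      simp only [Set.indicator_of_notMem hxC, SC.ind_of_not_mem hxC]
      have := (abs_le.1 (hbd x hx)).1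
      linarith
  have hslow : ∀ n : ℕ, -b + mean S0 + b * T^[n] SC.ind S0 ≤ T^[n] g S0 := by
    intro n
    have h := SC.iter_mono_on a ha hσ' (P := fun S => S ∈ DF) hclosed n
      _ _ hlowg S0 hS0DF
    rw [SC.iter_comb a hσ' n mean SC.ind (-b) 1 b S0, part2 n] at h
    linarith
  have hsup : ∀ n : ℕ, T^[n] g S0 ≤ b + mean S0 + (-b) * T^[n] SC.ind S0 := by
    intro n
    have h := SC.iter_mono_on a ha hσ' (P := fun S => S ∈ DF) hclosed n
      _ _ hupg S0 hS0DF
    rw [SC.iter_comb a hσ' n mean SC.ind b 1 (-b) S0, part2 n] at h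
    linarith
  have hlt : Tendsto (fun n : ℕ => -b + mean S0 + b * T^[n] SC.ind S0)
      atTop (nhds (mean S0)) := by
    have h := (tendsto_const_nhds (x := -b + mean S0) (f := atTop)).add
      (part1.const_mul b)
    have heq : -b + mean S0 + b * 1 = mean S0 := by ring
    rw [heq] at h
    exact h
  have hut : Tendsto (fun n : ℕ => b + mean S0 + (-b) * T^[n] SC.ind S0)
      atTop (nhds (mean S0)) := by
    have h := (tendsto_const_nhds (x := b + mean S0) (f := atTop)).add
      (part1.const_mul (-b))
    have heq : b + mean S0 + (-b) * 1 = mean S0 := by ring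
    rw [heq] at h
    exact h
  have part3 : Tendsto (fun n => T^[n] g S0) atTop (nhds (mean S0)) :=
    tendsto_of_tendsto_of_tendsto_of_le_of_le hlt hut hslow hsup
  exact ⟨part1, part2, part3⟩
end
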